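/- arXiv:math/0407186 — 8 statements merged into one kernel-verified Lean document; each statement's English description precedes it below -/
import Mathlib

section
/- Let X be a rational Urysohn space. Then there exists a family (g_c), indexed by c ∈ (ℕ → Bool) (an index set of cardinality continuum), of isometric bijections of X such that: each g_c permutes the points of X in a single cycle (for all x, y ∈ X there exists n ∈ ℤ with g_cⁿ(x) = y), and for c ≠ c′ the isometries g_c and g_{c′} are not conjugate in the isometry group of X, i.e. there is no isometric bijection k of X with k⁻¹ ∘ g_c ∘ k = g_{c′}. -/
def IsRationalUrysohn (X : Type*) [MetricSpace X] : Prop :=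
  Nonempty X ∧ Countable X ∧
    (∀ x y : X, ∃ q : ℚ, dist x y = (q : ℝ)) ∧
    (∀ (A : Finset X) (g : X → ℚ),
      (∀ a ∈ A, 0 ≤ g a) →
      (∀ a ∈ A, ∀ b ∈ A,
        |(g a : ℝ) - (g b : ℝ)| ≤ dist a b ∧ dist a b ≤ (g a : ℝ) + (g b : ℝ)) →
      ∃ z : X, ∀ a ∈ A, dist z a = (g a : ℝ))

namespace Stmt11
structure ValidOn (f : ℕ → ℚ) (M : ℕ) : Prop where
  zero : f 0 = 0
  pos : ∀ n, 1 ≤ n → n ≤ M → 0 < f n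
  tri1 : ∀ a b, a + b ≤ M → f (a + b) ≤ f a + f b
  tri2 : ∀ a b, a + b ≤ M → f a ≤ f (a + b) + f b
theorem ValidOn.nonneg {f : ℕ → ℚ} {M : ℕ} (hf : ValidOn f M) {n : ℕ} (hn : n ≤ M) :
    0 ≤ f n := by
  rcases Nat.eq_zero_or_pos n with h | h
  · simp [h, hf.zero]
  · exact (hf.pos n h hn).le
noncomputable def Fext (f : ℕ → ℚ) (M : ℕ) : ℕ → ℚ
  | n =>
    if h : 1 ≤ M ∧ M < n then
      (Finset.Icc 1 M).attach.inf'
        (Finset.attach_nonempty_iff.mpr (Finset.nonempty_Icc.mpr h.1))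
        (fun p => Fext f M (n - p.1) + f p.1)
    else f n
  termination_by n => n
  decreasing_by
    · have hp := p.2
      simp only [Finset.mem_Icc] at hp
      omega
theorem Fext_of_le {f : ℕ → ℚ} {M n : ℕ} (hn : n ≤ M) : Fext f M n = f n := by
  rw [Fext, dif_neg]; omega
theorem Fext_le_step {f : ℕ → ℚ} {M n p : ℕ} (hn : M < n) (hp1 : 1 ≤ p) (hpM : p ≤ M) :
    Fext f M n ≤ Fext f M (n - p) + f p := by
  rw [Fext, dif_pos ⟨hp1.trans hpM, hn⟩]
  exact Finset.inf'_le _ (Finset.mem_attach _ ⟨p, Finset.mem_Icc.mpr ⟨hp1, hpM⟩⟩)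
theorem Fext_exists_step {f : ℕ → ℚ} {M n : ℕ} (hM : 1 ≤ M) (hn : M < n) :
    ∃ p, 1 ≤ p ∧ p ≤ M ∧ Fext f M n = Fext f M (n - p) + f p := by
  rw [Fext, dif_pos ⟨hM, hn⟩]
  obtain ⟨p, -, hp⟩ := Finset.exists_mem_eq_inf'
    (Finset.attach_nonempty_iff.mpr (Finset.nonempty_Icc.mpr hM))
    (fun p : {x // x ∈ Finset.Icc 1 M} => Fext f M (n - p.1) + f p.1)
  have hpm := p.2
  simp only [Finset.mem_Icc] at hpm
  exact ⟨p.1, hpm.1, hpm.2, hp⟩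

section FextLemmas
variable {f : ℕ → ℚ} {M : ℕ} (hf : ValidOn f M) (hM : 1 ≤ M)
include hf hM

theorem Fext_pos : ∀ n, 1 ≤ n → 0 < Fext f M n := by
  intro n
  induction n using Nat.strong_induction_on with
  | _ n ih =>
    intro hn
    rcases le_or_gt n M with h | h
    · rw [Fext_of_le h]; exact hf.pos n hn h
    · obtain ⟨p, hp1, hpM, heq⟩ := Fext_exists_step hM h
      rw [heq]
      have h2 : 0 ≤ Fext f M (n - p) := by
        rcases Nat.eq_zero_or_pos (n - p) with h0 | h0
        · rw [h0, Fext_of_le (Nat.zero_le M), hf.zero]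
        · exact (ih (n - p) (by omega) h0).le
      have := hf.pos p hp1 hpM
      linarith

theorem Fext_nonneg : ∀ n, 0 ≤ Fext f M n := by
  intro n
  rcases Nat.eq_zero_or_pos n with h0 | h0
  · rw [h0, Fext_of_le (Nat.zero_le M), hf.zero]
  · exact (Fext_pos hf hM n h0).le

theorem Fext_zero : Fext f M 0 = 0 := by
  rw [Fext_of_le (Nat.zero_le M), hf.zero]

/-- Subadditivity of the free extension. -/
theorem Fext_add_le : ∀ a b : ℕ, Fext f M (a + b) ≤ Fext f M a + Fext f M b := by
  suffices H : ∀ n a b : ℕ, a + b ≤ n → Fext f M (a + b) ≤ Fext f M a + Fext f M b by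
    intro a b; exact H (a + b) a b le_rfl
  intro n
  induction n with
  | zero =>
    intro a b hab
    have ha : a = 0 := by omega
    have hb : b = 0 := by omega
    subst ha; subst hb
    simp [Fext_zero hf hM]
  | succ n ih =>
    intro a b hab
    rcases le_or_gt (a + b) n with h | h
    · exact ih a b h
    rcases le_or_gt (a + b) M with hle | hgt
    · rw [Fext_of_le hle, Fext_of_le (le_trans (Nat.le_add_right a b) hle),
        Fext_of_le (le_trans (Nat.le_add_left b a) hle)]
      exact hf.tri1 a b hle
    rcases Nat.eq_zero_or_pos b with hb0 | hb1
    · subst hb0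
      simp [Fext_zero hf hM]
    rcases le_or_gt b M with hbM | hbM
    · have := Fext_le_step (f := f) hgt hb1 hbM
      rw [Nat.add_sub_cancel] at this
      rw [Fext_of_le hbM]
      exact this
    · obtain ⟨p, hp1, hpM, heq⟩ := Fext_exists_step hM hbM
      have h1 : Fext f M (a + b) ≤ Fext f M (a + b - p) + f p :=
        Fext_le_step hgt hp1 (by omega)
      have h2 : a + b - p = a + (b - p) := by omega
      have h3 : Fext f M (a + (b - p)) ≤ Fext f M a + Fext f M (b - p) :=
        ih a (b - p) (by omega)
      rw [h2] at h1
      rw [heq]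
      linarith

/-- Reverse triangle for the free extension, small second argument. -/
theorem Fext_le_add_small :
    ∀ n a b : ℕ, a + b ≤ n → b ≤ M → Fext f M a ≤ Fext f M (a + b) + f b := by
  intro n
  induction n with
  | zero =>
    intro a b hab hbM
    have ha : a = 0 := by omega
    have hb : b = 0 := by omega
    subst ha; subst hb
    simp [Fext_zero hf hM, hf.zero]
  | succ n ih =>
    intro a b hab hbM
    rcases le_or_gt (a + b) n with h | h
    · exact ih a b h hbM
    rcases le_or_gt (a + b) M with hle | hgt
    · rw [Fext_of_le hle, Fext_of_le (le_trans (Nat.le_add_right a b) hle)]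
      exact hf.tri2 a b hle
    rcases Nat.eq_zero_or_pos b with hb0 | hb1
    · subst hb0
      simp [hf.zero]
    obtain ⟨p, hp1, hpM, heq⟩ := Fext_exists_step hM hgt
    rcases le_or_gt p b with hpb | hpb
    · have h3 : Fext f M a ≤ Fext f M (a + (b - p)) + f (b - p) :=
        ih a (b - p) (by omega) (by omega)
      have h4 : f (b - p) ≤ f b + f p := by
        have := hf.tri2 (b - p) p (by omega)
        rw [Nat.sub_add_cancel hpb] at this
        exact this
      have h5 : a + (b - p) = a + b - p := by omega
      rw [h5] at h3
      rw [heq]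
      linarith
    · -- p > b : a = (a+b-p) + (p-b)
      have h3 : Fext f M a ≤ Fext f M (a + b - p) + Fext f M (p - b) := by
        have := Fext_add_le hf hM (a + b - p) (p - b)
        have h5 : a + b - p + (p - b) = a := by omega
        rw [h5] at this
        exact this
      have h6 : Fext f M (p - b) = f (p - b) := Fext_of_le (by omega)
      have h4 : f (p - b) ≤ f p + f b := by
        have := hf.tri2 (p - b) b (by omega)
        rw [Nat.sub_add_cancel hpb.le] at this
        exact this
      rw [heq]
      rw [h6] at h3
      linarith

/-- Reverse triangle for the free extension. -/
theorem Fext_le_add : ∀ a b : ℕ, Fext f M a ≤ Fext f M (a + b) + Fext f M b := by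
  suffices H : ∀ n a b : ℕ, b ≤ n → Fext f M a ≤ Fext f M (a + b) + Fext f M b by
    intro a b; exact H b a b le_rfl
  intro n
  induction n with
  | zero =>
    intro a b hb
    have hb0 : b = 0 := by omega
    subst hb0
    simp [Fext_zero hf hM]
  | succ n ih =>
    intro a b hb
    rcases le_or_gt b n with h | h
    · exact ih a b h
    rcases le_or_gt b M with hbM | hbM
    · rw [Fext_of_le hbM]
      exact Fext_le_add_small hf hM (a + b) a b le_rfl hbM
    obtain ⟨p, hp1, hpM, heq⟩ := Fext_exists_step hM hbM
    have h1 : Fext f M a ≤ Fext f M (a + (b - p)) + Fext f M (b - p) :=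
      ih a (b - p) (by omega)
    have h2 : Fext f M (a + (b - p)) ≤ Fext f M (a + (b - p) + p) + f p :=
      Fext_le_add_small hf hM (a + (b - p) + p) (a + (b - p)) p le_rfl hpM
    have h3 : a + (b - p) + p = a + b := by omega
    rw [h3] at h2
    rw [heq]
    linarith

end FextLemmas

/-- minimal slope of `f` on `[1,M]` -/
noncomputable def rho (f : ℕ → ℚ) (M : ℕ) : ℚ :=
  if h : 1 ≤ M then (Finset.Icc 1 M).inf' (Finset.nonempty_Icc.mpr h) (fun p => f p / p)
  else 1

/-- max of `f` on `[0,M]` -/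
noncomputable def Cb0 (f : ℕ → ℚ) (M : ℕ) : ℚ :=
  (Finset.Icc 0 M).sup' ⟨0, by simp⟩ f

theorem le_Cb0 {f : ℕ → ℚ} {M n : ℕ} (hn : n ≤ M) : f n ≤ Cb0 f M :=
  Finset.le_sup' _ (Finset.mem_Icc.mpr ⟨Nat.zero_le n, hn⟩)

theorem Cb0_nonneg {f : ℕ → ℚ} {M : ℕ} (hf : ValidOn f M) : 0 ≤ Cb0 f M := by
  have := le_Cb0 (f := f) (Nat.zero_le M)
  rw [hf.zero] at this
  exact this

section RhoLemmas
variable {f : ℕ → ℚ} {M : ℕ} (hf : ValidOn f M) (hM : 1 ≤ M)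
include hf hM

theorem rho_pos : 0 < rho f M := by
  rw [rho, dif_pos hM]
  rw [Finset.lt_inf'_iff]
  intro p hp
  rw [Finset.mem_Icc] at hp
  exact div_pos (hf.pos p hp.1 hp.2) (by exact_mod_cast hp.1)

theorem rho_mul_le {p : ℕ} (hp1 : 1 ≤ p) (hpM : p ≤ M) : rho f M * p ≤ f p := by
  have h1 : rho f M ≤ f p / p := by
    rw [rho, dif_pos hM]
    exact Finset.inf'_le _ (Finset.mem_Icc.mpr ⟨hp1, hpM⟩)
  have hp0 : (0:ℚ) < p := by exact_mod_cast hp1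
  calc rho f M * p ≤ f p / p * p := by
        exact mul_le_mul_of_nonneg_right h1 hp0.le
    _ = f p := div_mul_cancel₀ _ hp0.ne'

theorem rho_le_Cb0 : rho f M ≤ Cb0 f M := by
  have h1 := rho_mul_le hf hM hM le_rfl
  have h2 := le_Cb0 (f := f) (le_refl M)
  have h3 : (1:ℚ) ≤ (M:ℚ) := by exact_mod_cast hM
  have h4 := (rho_pos hf hM).le
  nlinarith

theorem Fext_lower : ∀ n : ℕ, rho f M * n ≤ Fext f M n := by
  intro n
  induction n using Nat.strong_induction_on with
  | _ n ih =>
    rcases Nat.eq_zero_or_pos n with h0 | h0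
    · simp [h0, Fext_zero hf hM]
    rcases le_or_gt n M with h | h
    · rw [Fext_of_le h]; exact rho_mul_le hf hM h0 h
    · obtain ⟨p, hp1, hpM, heq⟩ := Fext_exists_step hM h
      rw [heq]
      have h1 := ih (n - p) (by omega)
      have h2 := rho_mul_le hf hM hp1 hpM
      have h3 : ((n - p : ℕ) : ℚ) = (n:ℚ) - p := by
        have : p ≤ n := by omega
        push_cast [this]; ring
      rw [h3] at h1
      linarith

theorem Fext_upper : ∀ n : ℕ, Fext f M n ≤ rho f M * n + Cb0 f M := by
  intro n
  induction n using Nat.strong_induction_on with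
  | _ n ih =>
    rcases le_or_gt n M with h | h
    · rw [Fext_of_le h]
      have h1 := le_Cb0 (f := f) h
      have h2 : (0:ℚ) ≤ rho f M * n :=
        mul_nonneg (rho_pos hf hM).le (by positivity)
      linarith
    · -- use optimal slope step p*
      obtain ⟨p, hpm, hp⟩ := Finset.exists_mem_eq_inf' (Finset.nonempty_Icc.mpr hM)
        (fun p => f p / (p:ℚ))
      rw [Finset.mem_Icc] at hpm
      have hrho : rho f M = f p / p := by rw [rho, dif_pos hM]; exact hp
      have hp0 : (0:ℚ) < p := by exact_mod_cast hpm.1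
      have hfp : f p = rho f M * p := by
        rw [hrho]; field_simp
      have h1 := Fext_le_step (f := f) h hpm.1 hpm.2
      have h2 := ih (n - p) (by omega)
      have h3 : ((n - p : ℕ) : ℚ) = (n:ℚ) - p := by
        have : p ≤ n := by omega
        push_cast [this]; ring
      rw [h3] at h2
      calc Fext f M n ≤ Fext f M (n - p) + f p := h1
        _ ≤ rho f M * ((n:ℚ) - p) + Cb0 f M + rho f M * p := by rw [hfp] at h1 ⊢; linarith
        _ = rho f M * n + Cb0 f M := by ring

end RhoLemmas

/-- `Fext` as a function on `ℤ` via absolute value. -/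
noncomputable def Fz (f : ℕ → ℚ) (M : ℕ) (z : ℤ) : ℚ := Fext f M z.natAbs

section FzLemmas
variable {f : ℕ → ℚ} {M : ℕ} (hf : ValidOn f M) (hM : 1 ≤ M)

theorem Fz_natCast (n : ℕ) : Fz f M (n : ℤ) = Fext f M n := by
  simp [Fz]

theorem Fz_neg (z : ℤ) : Fz f M (-z) = Fz f M z := by
  simp [Fz]

include hf hM

theorem Fz_nonneg (z : ℤ) : 0 ≤ Fz f M z := Fext_nonneg hf hM _

theorem Fz_triangle (a b : ℤ) : Fz f M (a + b) ≤ Fz f M a + Fz f M b := by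
  set α := a.natAbs
  set β := b.natAbs
  have htri : (a+b).natAbs = α + β ∨ (β ≤ α ∧ (a+b).natAbs = α - β)
      ∨ (α ≤ β ∧ (a+b).natAbs = β - α) := by omega
  unfold Fz
  rcases htri with h | ⟨hle, h⟩ | ⟨hle, h⟩
  · rw [h]; exact Fext_add_le hf hM α β
  · rw [h]
    have := Fext_le_add hf hM (α - β) β
    rw [Nat.sub_add_cancel hle] at this
    exact this
  · rw [h]
    have := Fext_le_add hf hM (β - α) α
    rw [Nat.sub_add_cancel hle] at this
    rw [add_comm (Fext f M α)]
    exact this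

theorem Fz_lower (z : ℤ) : rho f M * z.natAbs ≤ Fz f M z := Fext_lower hf hM _

theorem Fz_upper (z : ℤ) : Fz f M z ≤ rho f M * z.natAbs + Cb0 f M := Fext_upper hf hM _

theorem Fz_cast_le (z : ℤ) : rho f M * (z : ℚ) ≤ Fz f M z := by
  have h1 := Fz_lower hf hM z
  have h2 : (z:ℚ) ≤ (z.natAbs : ℚ) := by
    have h := le_abs_self (z:ℚ)
    rwa [← Int.cast_abs, Int.abs_eq_natAbs, Int.cast_natCast] at h
  nlinarith [(rho_pos hf hM).le]

end FzLemmas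

/-! ### Amalgamation: absorbing a Katětov function into the invariant metric -/

/-- Position at which a new point with distance profile `h` is inserted. -/
noncomputable def amalN (f : ℕ → ℚ) (M : ℕ) (Cb : ℚ) : ℕ :=
  2 * M + 1 + ⌈(10 * (Cb + 1)) / rho f M⌉₊

/-- The amalgamated extension of `f` (defined on `[0,M]`) realizing the profile `h`
at position `N = amalN f M Cb`. -/
noncomputable def Amal (f : ℕ → ℚ) (M : ℕ) (h : ℕ → ℚ) (N : ℕ) (n : ℕ) : ℚ :=
  min (Fext f M n)
    ((Finset.Icc 0 M).inf' ⟨0, by simp⟩ (fun i => h i + Fz f M ((N:ℤ) - i - n)))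

section AmalLemmas
variable {f : ℕ → ℚ} {M : ℕ} {h : ℕ → ℚ} {Cb : ℚ} {N : ℕ}
variable (hf : ValidOn f M) (hM : 1 ≤ M)
variable (hh1 : ∀ i, i ≤ M → 0 < h i)
variable (hh2 : ∀ i j, j ≤ i → i ≤ M → |h i - h j| ≤ f (i - j) ∧ f (i - j) ≤ h i + h j)
variable (hCf : ∀ n, n ≤ M → f n ≤ Cb)
variable (hCh : ∀ i, i ≤ M → h i ≤ Cb)
variable (hN1 : 2 * M < N)
variable (hN2 : 10 * (Cb + 1) ≤ rho f M * ((N:ℚ) - 2 * M))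

theorem amalN_spec1 : 2 * M < amalN f M Cb := by
  unfold amalN; omega

theorem amalN_spec2 (hf : ValidOn f M) (hM : 1 ≤ M) :
    10 * (Cb + 1) ≤ rho f M * ((amalN f M Cb : ℚ) - 2 * M) := by
  have hρ := rho_pos hf hM
  have h1 : ((amalN f M Cb : ℕ) : ℚ) - 2 * M = 1 + (⌈(10 * (Cb + 1)) / rho f M⌉₊ : ℚ) := by
    unfold amalN; push_cast; ring
  rw [h1]
  have h2 : (10 * (Cb + 1)) / rho f M ≤ (⌈(10 * (Cb + 1)) / rho f M⌉₊ : ℚ) := Nat.le_ceil _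
  have h3 : 10 * (Cb + 1) ≤ rho f M * (⌈(10 * (Cb + 1)) / rho f M⌉₊ : ℚ) := by
    calc 10 * (Cb + 1) = rho f M * ((10 * (Cb + 1)) / rho f M) := by
          field_simp
      _ ≤ rho f M * (⌈(10 * (Cb + 1)) / rho f M⌉₊ : ℚ) :=
          mul_le_mul_of_nonneg_left h2 hρ.le
  nlinarith

include hf hM

theorem Amal_le_plain (n : ℕ) : Amal f M h N n ≤ Fext f M n := min_le_left _ _

theorem Amal_le_tele {i : ℕ} (hi : i ≤ M) (n : ℕ) :
    Amal f M h N n ≤ h i + Fz f M ((N:ℤ) - i - n) :=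
  le_trans (min_le_right _ _) (Finset.inf'_le _ (Finset.mem_Icc.mpr ⟨Nat.zero_le i, hi⟩))

theorem Amal_cases (n : ℕ) :
    Amal f M h N n = Fext f M n ∨
      ∃ i, i ≤ M ∧ Amal f M h N n = h i + Fz f M ((N:ℤ) - i - n) := by
  rcases min_cases (Fext f M n)
    ((Finset.Icc 0 M).inf' ⟨0, by simp⟩ (fun i => h i + Fz f M ((N:ℤ) - i - n))) with
    ⟨he, -⟩ | ⟨he, -⟩
  · left; exact he
  · right
    obtain ⟨i, hi, hie⟩ := Finset.exists_mem_eq_inf' (⟨0, by simp⟩ :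
      (Finset.Icc 0 M).Nonempty) (fun i => h i + Fz f M ((N:ℤ) - i - n))
    rw [Finset.mem_Icc] at hi
    exact ⟨i, hi.2, by rw [Amal, he, hie]⟩

include hh1 hh2 hCf hCh hN1 hN2 in
/-- `Cb` is nonnegative (indeed positive). -/
theorem Cb_pos : 0 < Cb :=
  lt_of_lt_of_le (hh1 0 (Nat.zero_le M)) (hCh 0 (Nat.zero_le M))

include hh1 hh2 hCf hCh hN1 hN2

/-- Any integer of absolute value `≥ N - 2M` has large `Fz`. -/
theorem Fz_big {z : ℤ} (hz : (N:ℤ) - 2 * M ≤ z.natAbs) :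
    10 * (Cb + 1) ≤ Fz f M z := by
  have h1 := Fz_lower hf hM z
  have hK : N - 2*M ≤ z.natAbs := by omega
  have hMN : 2*M ≤ N := by omega
  have hc : ((N - 2*M : ℕ) : ℚ) = (N:ℚ) - 2*M := by
    rw [Nat.cast_sub hMN]; push_cast; ring
  have h2 : rho f M * ((N:ℚ) - 2 * M) ≤ rho f M * (z.natAbs : ℚ) := by
    apply mul_le_mul_of_nonneg_left _ (rho_pos hf hM).le
    rw [← hc]
    exact_mod_cast hK
  linarith

/-- The amalgam extends `f`. -/
theorem Amal_eq_f {n : ℕ} (hn : n ≤ M) : Amal f M h N n = f n := by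
  rw [Amal, Fext_of_le hn]
  apply min_eq_left
  apply Finset.le_inf'
  intro i hi
  rw [Finset.mem_Icc] at hi
  have h1 : ((N:ℤ) - 2*M : ℤ) ≤ ((N:ℤ) - i - n).natAbs := by omega
  have h2 := Fz_big hf hM hh1 hh2 hCf hCh hN1 hN2 (z := (N:ℤ) - i - n) h1
  have h3 := (hh1 i hi.2).le
  have h4 := hCf n hn
  have h5 := Cb_pos hf hM hh1 hh2 hCf hCh hN1 hN2
  linarith

/-- The amalgam realizes the profile `h` at positions `N - i`. -/
theorem Amal_at {i : ℕ} (hi : i ≤ M) : Amal f M h N (N - i) = h i := by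
  have hiN : i ≤ N := by omega
  apply le_antisymm
  · have h1 := Amal_le_tele hf hM (h := h) (N := N) hi (N - i)
    have h2 : (N:ℤ) - i - (N - i : ℕ) = 0 := by
      push_cast [Nat.cast_sub hiN]; ring
    rw [h2] at h1
    have h3 : Fz f M 0 = 0 := by
      show Fext f M (0:ℤ).natAbs = 0
      simp [Fext_zero hf hM]
    rw [h3] at h1
    linarith
  · rw [Amal]
    apply le_min
    · -- plain term is large
      have h1 : ((N:ℤ) - 2*M : ℤ) ≤ (((N - i : ℕ) : ℤ)).natAbs := by omega
      have h2 := Fz_big hf hM hh1 hh2 hCf hCh hN1 hN2 (z := ((N - i : ℕ) : ℤ)) h1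
      have h3 := hCh i hi
      have h5 := Cb_pos hf hM hh1 hh2 hCf hCh hN1 hN2
      have h6 : Fz f M ((N - i : ℕ) : ℤ) = Fext f M (N - i) := Fz_natCast _
      rw [← h6]
      linarith
    · apply Finset.le_inf'
      intro j hj
      rw [Finset.mem_Icc] at hj
      have h2 : (N:ℤ) - j - ((N - i:ℕ):ℤ) = (i:ℤ) - j := by
        push_cast [Nat.cast_sub hiN]; ring
      rw [h2]
      have h3 : Fz f M ((i:ℤ) - j) = f (((i:ℤ) - j).natAbs) := by
        show Fext f M _ = _
        apply Fext_of_le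
        omega
      rw [h3]
      rcases le_total j i with hji | hij
      · have h4 := (hh2 i j hji hi).1
        have h5 : ((i:ℤ) - j).natAbs = i - j := by omega
        rw [h5]
        have := abs_le.mp h4
        linarith [this.1]
      · have h4 := (hh2 j i hij hj.2).1
        have h5 : ((i:ℤ) - j).natAbs = j - i := by omega
        rw [h5]
        have := abs_le.mp h4
        linarith [this.2]

/-- Subadditivity (triangle) for the amalgam. -/
theorem Amal_tri1 {a b : ℕ} (hab : a + b ≤ N) :
    Amal f M h N (a + b) ≤ Amal f M h N a + Amal f M h N b := by
  have hCb0 : Cb0 f M ≤ Cb := Finset.sup'_le _ _ (fun n hn => hCf n (Finset.mem_Icc.mp hn).2)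
  rcases Amal_cases hf hM (h := h) (N := N) a with hA | ⟨i, hi, hA⟩ <;>
    rcases Amal_cases hf hM (h := h) (N := N) b with hB | ⟨j, hj, hB⟩
  · rw [hA, hB]
    calc Amal f M h N (a+b) ≤ Fext f M (a+b) := Amal_le_plain hf hM _
      _ ≤ _ := Fext_add_le hf hM a b
  · -- a plain, b teleport
    rw [hA, hB]
    have e : (N:ℤ) - j - (a+b) = ((N:ℤ) - j - b) + (-(a:ℤ)) := by push_cast; ring
    calc Amal f M h N (a+b) ≤ h j + Fz f M ((N:ℤ) - j - (a+b)) :=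
          Amal_le_tele hf hM hj _
      _ ≤ h j + (Fz f M ((N:ℤ) - j - b) + Fz f M (-(a:ℤ))) := by
          rw [e]; exact add_le_add le_rfl (Fz_triangle hf hM _ _)
      _ = Fext f M a + (h j + Fz f M ((N:ℤ) - j - b)) := by
          rw [Fz_neg, Fz_natCast]; ring
  · -- a teleport, b plain
    rw [hA, hB]
    have e : (N:ℤ) - i - (a+b) = ((N:ℤ) - i - a) + (-(b:ℤ)) := by push_cast; ring
    calc Amal f M h N (a+b) ≤ h i + Fz f M ((N:ℤ) - i - (a+b)) :=
          Amal_le_tele hf hM hi _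
      _ ≤ h i + (Fz f M ((N:ℤ) - i - a) + Fz f M (-(b:ℤ))) := by
          rw [e]; exact add_le_add le_rfl (Fz_triangle hf hM _ _)
      _ = h i + Fz f M ((N:ℤ) - i - a) + Fext f M b := by
          rw [Fz_neg, Fz_natCast]; ring
  · -- both teleport
    rw [hA, hB]
    set u : ℤ := (N:ℤ) - i - a with hu
    set v : ℤ := (N:ℤ) - j - b with hv
    set m : ℕ := N - (a + b) with hm
    set k : ℕ := min m M with hk
    have hkM : k ≤ M := by omega
    have hρ := (rho_pos hf hM).le
    have hCbpos := Cb_pos hf hM hh1 hh2 hCf hCh hN1 hN2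
    -- LHS bound
    have l1 : Amal f M h N (a+b) ≤ h k + Fz f M ((N:ℤ) - k - (a+b)) :=
      Amal_le_tele hf hM hkM _
    have l2 : (N:ℤ) - k - (a+b) = ((m - k : ℕ) : ℤ) := by push_cast; omega
    have l3 : Fz f M (((m - k : ℕ) : ℤ)) = Fext f M (m - k) := Fz_natCast _
    have l4 : Fext f M (m - k) ≤ rho f M * ((m - k : ℕ):ℚ) + Cb0 f M := Fext_upper hf hM _
    have l5 : rho f M * ((m - k : ℕ):ℚ) ≤ rho f M * (m:ℚ) := by
      apply mul_le_mul_of_nonneg_left _ hρ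
      exact_mod_cast Nat.sub_le m k
    have l6 : h k ≤ Cb := hCh k hkM
    -- RHS bound
    have r1 : rho f M * (u:ℚ) ≤ Fz f M u := Fz_cast_le hf hM u
    have r2 : rho f M * (v:ℚ) ≤ Fz f M v := Fz_cast_le hf hM v
    have hmc : (m:ℚ) = (N:ℚ) - a - b := by
      rw [hm, Nat.cast_sub hab]; push_cast; ring
    have huv : (u:ℚ) + (v:ℚ) = ((N:ℚ) - i - j) + (m:ℚ) := by
      rw [hu, hv, hmc]; push_cast; ring
    have r3 : rho f M * ((u:ℚ) + (v:ℚ)) = rho f M * ((N:ℚ) - i - j) + rho f M * (m:ℚ) := by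
      rw [huv]; ring
    have r4 : rho f M * ((N:ℚ) - 2*M) ≤ rho f M * ((N:ℚ) - i - j) := by
      apply mul_le_mul_of_nonneg_left _ hρ
      have hi' : (i:ℚ) ≤ (M:ℚ) := by exact_mod_cast hi
      have hj' : (j:ℚ) ≤ (M:ℚ) := by exact_mod_cast hj
      linarith
    have r5 := hN2
    have hhi := (hh1 i hi).le
    have hhj := (hh1 j hj).le
    have := l1
    rw [l2, l3] at this
    have final : h k + Fext f M (m - k) ≤
        h i + Fz f M u + (h j + Fz f M v) := by
      have rr : rho f M * (u:ℚ) + rho f M * (v:ℚ) = rho f M * ((u:ℚ) + (v:ℚ)) := by ring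
      linarith
    linarith

/-- Reverse triangle for the amalgam. -/
theorem Amal_tri2 {a b : ℕ} (hab : a + b ≤ N) :
    Amal f M h N a ≤ Amal f M h N (a + b) + Amal f M h N b := by
  have hCb0 : Cb0 f M ≤ Cb := Finset.sup'_le _ _ (fun n hn => hCf n (Finset.mem_Icc.mp hn).2)
  have hρ := (rho_pos hf hM).le
  have hCbpos := Cb_pos hf hM hh1 hh2 hCf hCh hN1 hN2
  rcases Amal_cases hf hM (h := h) (N := N) (a + b) with hS | ⟨i, hi, hS⟩ <;>
    rcases Amal_cases hf hM (h := h) (N := N) b with hB | ⟨j, hj, hB⟩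
  · rw [hS, hB]
    calc Amal f M h N a ≤ Fext f M a := Amal_le_plain hf hM _
      _ ≤ _ := Fext_le_add hf hM a b
  · -- sum plain, b teleport
    rw [hS, hB]
    set t : ℤ := (N:ℤ) - j - b with ht
    have ha : (a:ℚ) = ((a+b : ℕ):ℚ) + (t:ℚ) + j - N := by
      rw [ht]; push_cast; ring
    have k1 : Amal f M h N a ≤ Fext f M a := Amal_le_plain hf hM _
    have k2 : Fext f M a ≤ rho f M * (a:ℚ) + Cb0 f M := Fext_upper hf hM _
    have k3 : rho f M * (a:ℚ) = rho f M * ((a+b:ℕ):ℚ) + rho f M * (t:ℚ)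
        + rho f M * (j:ℚ) - rho f M * (N:ℚ) := by rw [ha]; ring
    have k4 : rho f M * ((a+b:ℕ):ℚ) ≤ Fext f M (a+b) := Fext_lower hf hM _
    have k5 : rho f M * (t:ℚ) ≤ Fz f M t := Fz_cast_le hf hM t
    have k6 : rho f M * (j:ℚ) ≤ rho f M * (M:ℚ) := by
      apply mul_le_mul_of_nonneg_left _ hρ
      exact_mod_cast hj
    have k7 : rho f M * ((N:ℚ) - 2*M) ≤ rho f M * ((N:ℚ) - M) := by
      apply mul_le_mul_of_nonneg_left _ hρ
      have : (0:ℚ) ≤ (M:ℚ) := by positivity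
      linarith
    have k8 : rho f M * ((N:ℚ) - M) = rho f M * (N:ℚ) - rho f M * (M:ℚ) := by ring
    have hhj := (hh1 j hj).le
    linarith [hN2]
  · -- sum teleport, b plain
    rw [hS, hB]
    have e : (N:ℤ) - i - a = ((N:ℤ) - i - (a+b)) + (b:ℤ) := by push_cast; ring
    calc Amal f M h N a ≤ h i + Fz f M ((N:ℤ) - i - a) := Amal_le_tele hf hM hi _
      _ ≤ h i + (Fz f M ((N:ℤ) - i - (a+b)) + Fz f M ((b:ℕ):ℤ)) := by
          rw [e]; exact add_le_add le_rfl (Fz_triangle hf hM _ _)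
      _ = h i + Fz f M ((N:ℤ) - i - (a+b)) + Fext f M b := by
          rw [Fz_natCast]; ring
  · -- both teleport
    rw [hS, hB]
    set u : ℤ := (N:ℤ) - i - ((a+b:ℕ):ℤ) with hu
    set v : ℤ := (N:ℤ) - j - b with hv
    have ha : (a:ℤ) = v + (-u) + ((j:ℤ) - i) := by rw [hu, hv]; push_cast; ring
    have k1 : Amal f M h N a ≤ Fext f M a := Amal_le_plain hf hM _
    have k2 : Fext f M a = Fz f M ((a:ℕ):ℤ) := (Fz_natCast _).symm
    have k3 : Fz f M ((a:ℕ):ℤ) ≤ Fz f M (v + (-u)) + Fz f M ((j:ℤ) - i) := by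
      rw [ha]; exact Fz_triangle hf hM _ _
    have k4 : Fz f M (v + (-u)) ≤ Fz f M v + Fz f M u := by
      calc Fz f M (v + (-u)) ≤ Fz f M v + Fz f M (-u) := Fz_triangle hf hM _ _
        _ = Fz f M v + Fz f M u := by rw [Fz_neg]
    have k5 : Fz f M ((j:ℤ) - i) = f (((j:ℤ) - i).natAbs) := by
      show Fext f M _ = _
      apply Fext_of_le; omega
    have k6 : f (((j:ℤ) - i).natAbs) ≤ h i + h j := by
      rcases le_total i j with hij | hji
      · have h4 := (hh2 j i hij hj).2
        have h5 : ((j:ℤ) - i).natAbs = j - i := by omega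
        rw [h5]; linarith
      · have h4 := (hh2 i j hji hi).2
        have h5 : ((j:ℤ) - i).natAbs = i - j := by omega
        rw [h5]; linarith
    linarith

/-- The amalgam is a valid invariant partial metric on `[0,N]`. -/
theorem Amal_valid : ValidOn (Amal f M h N) N where
  zero := by
    rw [Amal, Fext_zero hf hM]
    apply min_eq_left
    apply Finset.le_inf'
    intro i hi
    rw [Finset.mem_Icc] at hi
    have := (hh1 i hi.2).le
    have := Fz_nonneg hf hM ((N:ℤ) - i - ((0:ℕ):ℤ))
    linarith
  pos := by
    intro n h1 h2
    rw [Amal]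
    apply lt_min
    · exact Fext_pos hf hM n h1
    · refine (Finset.lt_inf'_iff (H := _)).mpr ?_
      intro i hi
      rw [Finset.mem_Icc] at hi
      have := hh1 i hi.2
      have := Fz_nonneg hf hM ((N:ℤ) - i - n)
      linarith
  tri1 := fun a b hab => Amal_tri1 hf hM hh1 hh2 hCf hCh hN1 hN2 hab
  tri2 := fun a b hab => Amal_tri2 hf hM hh1 hh2 hCf hCh hN1 hN2 hab

end AmalLemmas

/-! ### Realizing distance profiles in a rational Urysohn space -/

theorem pair_real {A B C : ℚ} (h1 : C ≤ A + B) (h2 : A ≤ C + B) (h3 : B ≤ C + A) {r : ℝ}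
    (hr : r = (C : ℚ)) : |(A:ℝ) - (B:ℝ)| ≤ r ∧ r ≤ (A:ℝ) + (B:ℝ) := by
  subst hr
  constructor
  · rw [abs_sub_le_iff]
    constructor
    · have : A - B ≤ C := by linarith
      exact_mod_cast this
    · have : B - A ≤ C := by linarith
      exact_mod_cast this
  · exact_mod_cast h1

theorem ValidOn.pair {f' : ℕ → ℚ} {N b c : ℕ} (hval : ValidOn f' N) (h : b + c ≤ N) :
    f' (b + c) ≤ f' b + f' c ∧ f' b ≤ f' (b + c) + f' c ∧ f' c ≤ f' (b + c) + f' b :=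
  ⟨hval.tri1 b c h, hval.tri2 b c h, by
    have := hval.tri2 c b (by omega)
    rwa [add_comm c b] at this⟩

section Space
variable {X : Type*} [MetricSpace X]

theorem realize (hX : IsRationalUrysohn X) {n : ℕ} (pts : Fin n → X) (vals : Fin n → ℚ)
    (h0 : ∀ i, 0 ≤ vals i)
    (h1 : ∀ i j, |(vals i : ℝ) - (vals j : ℝ)| ≤ dist (pts i) (pts j) ∧
      dist (pts i) (pts j) ≤ (vals i : ℝ) + (vals j : ℝ)) :
    ∃ z : X, ∀ i, dist z (pts i) = (vals i : ℝ) := by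
  classical
  have hfib : ∀ i j, pts i = pts j → vals i = vals j := by
    intro i j hij
    have h := (h1 i j).1
    rw [hij, dist_self] at h
    have h2 : (vals i : ℝ) = vals j := by
      have h3 := abs_nonpos_iff.mp h
      linarith [sub_eq_zero.mp h3]
    exact_mod_cast h2
  set g : X → ℚ := fun a => if hh : ∃ i, pts i = a then vals hh.choose else 0 with hgdef
  have hgp : ∀ i, g (pts i) = vals i := by
    intro i
    have hh : ∃ k, pts k = pts i := ⟨i, rfl⟩
    simp only [hgdef, dif_pos hh]
    exact hfib _ _ hh.choose_spec
  obtain ⟨z, hz⟩ := hX.2.2.2 (Finset.image pts Finset.univ) g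
    (by
      intro a ha
      rw [Finset.mem_image] at ha
      obtain ⟨i, -, rfl⟩ := ha
      rw [hgp]
      exact h0 i)
    (by
      intro a ha b hb
      rw [Finset.mem_image] at ha hb
      obtain ⟨i, -, rfl⟩ := ha
      obtain ⟨j, -, rfl⟩ := hb
      rw [hgp, hgp]
      exact h1 i j)
  refine ⟨z, fun i => ?_⟩
  have := hz (pts i) (Finset.mem_image.mpr ⟨i, Finset.mem_univ i, rfl⟩)
  rwa [hgp] at this

/-- Extend a chain realizing `f` on positions `[L,R]` to one realizing `f'` on `[L, L+N]`,
with the point `y` (which has the correct distance profile) placed at position `L + N`. -/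
theorem extend_chain (hX : IsRationalUrysohn X) {x : ℤ → X} {L R : ℤ} {f f' : ℕ → ℚ} {N : ℕ}
    (hLR : L ≤ R)
    (hch : ∀ p q : ℤ, L ≤ q → q ≤ p → p ≤ R → dist (x p) (x q) = (f ((p - q).natAbs) : ℝ))
    (hval : ValidOn f' N)
    (hext : ∀ n : ℕ, (n:ℤ) ≤ R - L → f' n = f n)
    (hN : R - L < (N:ℤ)) {y : X}
    (hy : ∀ i : ℕ, (i:ℤ) ≤ R - L → dist y (x (L + i)) = (f' (N - i) : ℝ)) :
    ∃ x' : ℤ → X, (∀ p, L ≤ p → p ≤ R → x' p = x p) ∧ x' (L + N) = y ∧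
      ∀ p q : ℤ, L ≤ q → q ≤ p → p ≤ L + N →
        dist (x' p) (x' q) = (f' ((p - q).natAbs) : ℝ) := by
  classical
  set M₀ : ℕ := (R - L).toNat with hM₀def
  have hM₀ : (M₀ : ℤ) = R - L := Int.toNat_of_nonneg (by omega)
  have key : ∀ d : ℕ, M₀ + d < N →
      ∃ x' : ℤ → X, (∀ p, L ≤ p → p ≤ R → x' p = x p) ∧
        (∀ p q : ℤ, L ≤ q → q ≤ p → p ≤ L + (M₀ + d : ℕ) →
          dist (x' p) (x' q) = (f' ((p - q).natAbs) : ℝ)) ∧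
        (∀ i : ℕ, i ≤ M₀ + d → dist y (x' (L + i)) = (f' (N - i) : ℝ)) := by
    intro d
    induction d with
    | zero =>
      intro hd
      refine ⟨x, fun p _ _ => rfl, ?_, ?_⟩
      · intro p q hq hqp hp
        rw [hext ((p - q).natAbs) (by omega)]
        exact hch p q hq hqp (by omega)
      · intro i hi
        exact hy i (by omega)
    | succ d ih =>
      intro hd
      obtain ⟨x', hold, hchain, hyprof⟩ := ih (by omega)
      obtain ⟨m, hmdef⟩ : ∃ m : ℕ, m = M₀ + d := ⟨_, rfl⟩
      rw [← hmdef] at hchain hyprof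
      -- realize the next point at position L + (m+1)
      set pts : Fin (m + 2) → X := fun i => if (i:ℕ) ≤ m then x' (L + ((i:ℕ):ℤ)) else y
        with hpts
      set vals : Fin (m + 2) → ℚ := fun i =>
        if (i:ℕ) ≤ m then f' (m + 1 - (i:ℕ)) else f' (N - (m+1)) with hvals
      have hreal : ∃ z : X, ∀ i, dist z (pts i) = (vals i : ℝ) := by
        apply realize hX pts vals
        · intro i
          simp only [hvals]
          split
          · exact hval.nonneg (by omega)
          · exact hval.nonneg (by omega)
        · intro i j
          simp only [hvals, hpts]
          by_cases hi : (i:ℕ) ≤ m <;> by_cases hj : (j:ℕ) ≤ m <;>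
            simp only [hi, hj, if_true, if_false, ite_true, ite_false]
          · -- both in chain
            rcases le_total (i:ℕ) (j:ℕ) with hij | hij
            · have hdist : dist (x' (L + ((i:ℕ):ℤ))) (x' (L + ((j:ℕ):ℤ)))
                  = (f' (((j:ℕ) - (i:ℕ) : ℕ)) : ℝ) := by
                rw [dist_comm]
                have := hchain (L + ((j:ℕ):ℤ)) (L + ((i:ℕ):ℤ)) (by omega) (by omega) (by omega)
                have he : ((L + ((j:ℕ):ℤ)) - (L + ((i:ℕ):ℤ))).natAbs = (j:ℕ) - (i:ℕ) := by
                  omega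
                rwa [he] at this
              rw [hdist]
              have hp := hval.pair (b := m + 1 - (j:ℕ)) (c := (j:ℕ) - (i:ℕ)) (by omega)
              have he1 : m + 1 - (j:ℕ) + ((j:ℕ) - (i:ℕ)) = m + 1 - (i:ℕ) := by omega
              rw [he1] at hp
              exact pair_real (by linarith [hp.2.2]) (by linarith [hp.1]) (by linarith [hp.2.1]) rfl
            · have hdist : dist (x' (L + ((i:ℕ):ℤ))) (x' (L + ((j:ℕ):ℤ)))
                  = (f' (((i:ℕ) - (j:ℕ) : ℕ)) : ℝ) := by
                have := hchain (L + ((i:ℕ):ℤ)) (L + ((j:ℕ):ℤ)) (by omega) (by omega) (by omega)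
                have he : ((L + ((i:ℕ):ℤ)) - (L + ((j:ℕ):ℤ))).natAbs = (i:ℕ) - (j:ℕ) := by
                  omega
                rwa [he] at this
              rw [hdist]
              have hp := hval.pair (b := m + 1 - (i:ℕ)) (c := (i:ℕ) - (j:ℕ)) (by omega)
              have he1 : m + 1 - (i:ℕ) + ((i:ℕ) - (j:ℕ)) = m + 1 - (j:ℕ) := by omega
              rw [he1] at hp
              exact pair_real (by linarith [hp.2.2]) (by linarith [hp.2.1]) (by linarith [hp.1]) rfl
          · -- i in chain, j = last
            have hdist : dist (x' (L + ((i:ℕ):ℤ))) y = (f' (N - (i:ℕ)) : ℝ) := by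
              rw [dist_comm]
              exact hyprof (i:ℕ) (by omega)
            rw [hdist]
            have hp := hval.pair (b := m + 1 - (i:ℕ)) (c := N - (m+1)) (by omega)
            have he1 : m + 1 - (i:ℕ) + (N - (m+1)) = N - (i:ℕ) := by omega
            rw [he1] at hp
            exact pair_real (by linarith [hp.1]) (by linarith [hp.2.1]) (by linarith [hp.2.2]) rfl
          · -- i = last, j in chain
            have hdist : dist y (x' (L + ((j:ℕ):ℤ))) = (f' (N - (j:ℕ)) : ℝ) :=
              hyprof (j:ℕ) (by omega)
            rw [hdist]
            have hp := hval.pair (b := m + 1 - (j:ℕ)) (c := N - (m+1)) (by omega)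
            have he1 : m + 1 - (j:ℕ) + (N - (m+1)) = N - (j:ℕ) := by omega
            rw [he1] at hp
            exact pair_real (by linarith [hp.1]) (by linarith [hp.2.2]) (by linarith [hp.2.1]) rfl
          · -- both last
            rw [dist_self]
            refine ⟨by simp, ?_⟩
            have := hval.nonneg (n := N - (m+1)) (by omega)
            have : (0:ℝ) ≤ (f' (N - (m+1)) : ℝ) := by exact_mod_cast this
            linarith
      obtain ⟨z, hz⟩ := hreal
      -- distance from z to chain points, in convenient form
      have hz1 : ∀ i : ℕ, i ≤ m → dist z (x' (L + (i:ℤ))) = (f' (m + 1 - i) : ℝ) := by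
        intro i him
        set idx : Fin (m+2) := ⟨i, by omega⟩ with hidx
        have hcond : (idx : ℕ) ≤ m := him
        have := hz idx
        simp only [hpts, hvals] at this
        rw [if_pos hcond, if_pos hcond] at this
        exact this
      have hz2 : dist z y = (f' (N - (m+1)) : ℝ) := by
        set idx : Fin (m+2) := ⟨m+1, by omega⟩ with hidx
        have hcond : ¬((idx : ℕ) ≤ m) := (by omega : ¬(m+1 ≤ m))
        have := hz idx
        simp only [hpts, hvals] at this
        rw [if_neg hcond, if_neg hcond] at this
        exact this
      refine ⟨fun p => if p = L + ((m+1 : ℕ):ℤ) then z else x' p, ?_, ?_, ?_⟩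
      · intro p hp1 hp2
        beta_reduce
        rw [if_neg (by omega), hold p hp1 hp2]
      · intro p q hq hqp hp
        beta_reduce
        by_cases hpnew : p = L + ((m+1:ℕ):ℤ)
        · by_cases hqnew : q = L + ((m+1:ℕ):ℤ)
          · rw [if_pos hpnew, if_pos hqnew, hpnew, hqnew]
            rw [dist_self, sub_self]
            simp [hval.zero]
          · rw [if_pos hpnew, if_neg hqnew]
            set i : ℕ := (q - L).toNat with hidef
            have hqi : q = L + (i:ℤ) := by omega
            have him : i ≤ m := by omega
            rw [hqi]
            have hnat : (p - (L + (i:ℤ))).natAbs = m + 1 - i := by omega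
            rw [hnat]
            exact hz1 i him
        · have hqnew : q ≠ L + ((m+1:ℕ):ℤ) := by omega
          rw [if_neg hpnew, if_neg hqnew]
          exact hchain p q hq hqp (by omega)
      · intro i hi
        beta_reduce
        by_cases him : i ≤ m
        · rw [if_neg (by omega)]
          exact hyprof i him
        · have hieq : i = m + 1 := by omega
          subst hieq
          rw [if_pos rfl, dist_comm]
          exact hz2
  -- final step: place y at position L + N
  obtain ⟨x', hold, hchain, hyprof⟩ := key (N - 1 - M₀) (by omega)
  have hmN : M₀ + (N - 1 - M₀) = N - 1 := by omega
  rw [hmN] at hchain hyprof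
  have hN1' : 1 ≤ N := by omega
  refine ⟨fun p => if p = L + (N:ℤ) then y else x' p, ?_, ?_, ?_⟩
  · intro p hp1 hp2
    beta_reduce
    rw [if_neg (by omega), hold p hp1 hp2]
  · beta_reduce
    rw [if_pos rfl]
  · intro p q hq hqp hp
    beta_reduce
    by_cases hpnew : p = L + (N:ℤ)
    · by_cases hqnew : q = L + (N:ℤ)
      · rw [if_pos hpnew, if_pos hqnew, hpnew, hqnew]
        rw [dist_self, sub_self]
        simp [hval.zero]
      · rw [if_pos hpnew, if_neg hqnew]
        set i : ℕ := (q - L).toNat with hidef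
        have hqi : q = L + (i:ℤ) := by omega
        have him : i ≤ N - 1 := by omega
        rw [hqi]
        have hnat : (p - (L + (i:ℤ))).natAbs = N - i := by omega
        rw [hnat]
        exact hyprof i him
    · have hqnew : q ≠ L + (N:ℤ) := by omega
      rw [if_neg hpnew, if_neg hqnew]
      exact hchain p q hq hqp (by omega)

end Space

/-! ### The state machine building the chain -/

section Machine
variable {X : Type*} [MetricSpace X]

structure StX (X : Type*) where
  L : ℤ
  R : ℤ
  x : ℤ → X
  f : ℕ → ℚ

variable {s s' s'' : StX X}

def span (s : StX X) : ℕ := (s.R - s.L).toNat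

def Inv (s : StX X) : Prop :=
  s.L ≤ 0 ∧ 1 ≤ s.R ∧ ValidOn s.f (span s) ∧
    ∀ p q : ℤ, s.L ≤ q → q ≤ p → p ≤ s.R → dist (s.x p) (s.x q) = (s.f ((p - q).natAbs) : ℝ)

theorem Inv.span_pos (hs : Inv s) : 1 ≤ span s := by
  have h1 := hs.1; have h2 := hs.2.1; unfold span; omega

theorem Inv.span_cast (hs : Inv s) : (span s : ℤ) = s.R - s.L := by
  have h1 := hs.1; have h2 := hs.2.1; unfold span; omega

def extendsSt (s s' : StX X) : Prop :=
  s'.L ≤ s.L ∧ s.R ≤ s'.R ∧ (∀ p, s.L ≤ p → p ≤ s.R → s'.x p = s.x p) ∧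
    ∀ n, n ≤ span s → s'.f n = s.f n

theorem extendsSt_refl (s : StX X) : extendsSt s s :=
  ⟨le_rfl, le_rfl, fun _ _ _ => rfl, fun _ _ => rfl⟩

theorem extendsSt_span (h : extendsSt s s') : span s ≤ span s' := by
  have h1 := h.1; have h2 := h.2.1; unfold span; omega

theorem extendsSt_trans (h : extendsSt s s') (h' : extendsSt s' s'') : extendsSt s s'' := by
  refine ⟨h'.1.trans h.1, h.2.1.trans h'.2.1, ?_, ?_⟩
  · intro p hp1 hp2
    rw [h'.2.2.1 p (h.1.trans hp1) (hp2.trans h.2.1), h.2.2.1 p hp1 hp2]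
  · intro n hn
    rw [h'.2.2.2 n (hn.trans (extendsSt_span h)), h.2.2.2 n hn]

/-- rational value of the distance -/
noncomputable def dq (hX : IsRationalUrysohn X) (a b : X) : ℚ := (hX.2.2.1 a b).choose

theorem dq_spec (hX : IsRationalUrysohn X) (a b : X) : ((dq hX a b : ℚ) : ℝ) = dist a b :=
  (hX.2.2.1 a b).choose_spec.symm

/-- Absorption of a point `y` not on the chain. -/
theorem absorb_ex (hX : IsRationalUrysohn X) (s : StX X) (hs : Inv s) (y : X) (Cb : ℚ)
    (hCf : ∀ n, n ≤ span s → s.f n ≤ Cb)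
    (hCh : ∀ i : ℕ, i ≤ span s → dq hX y (s.x (s.L + i)) ≤ Cb)
    (hy0 : ∀ p, s.L ≤ p → p ≤ s.R → y ≠ s.x p) :
    ∃ s' : StX X, Inv s' ∧ extendsSt s s' ∧ s'.L = s.L ∧
      span s' = amalN s.f (span s) Cb ∧
      s'.x (s.L + (span s' : ℤ)) = y ∧
      ∀ i : ℕ, i ≤ span s → s'.f (span s' - i) = dq hX y (s.x (s.L + i)) := by
  classical
  set M : ℕ := span s with hMdef
  have hM : 1 ≤ M := hs.span_pos
  have hMc : (M : ℤ) = s.R - s.L := hs.span_cast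
  set h : ℕ → ℚ := fun i => dq hX y (s.x (s.L + i)) with hhdef
  obtain ⟨N, hNdef⟩ : ∃ N : ℕ, N = amalN s.f M Cb := ⟨_, rfl⟩
  have hf : ValidOn s.f M := hs.2.2.1
  -- the profile is a Katětov function
  have hh1 : ∀ i, i ≤ M → 0 < h i := by
    intro i hi
    have hyd : (0:ℝ) < dist y (s.x (s.L + i)) := by
      rw [dist_pos]
      exact hy0 _ (by omega) (by omega)
    rw [← dq_spec hX] at hyd
    exact_mod_cast hyd
  have hh2 : ∀ i j, j ≤ i → i ≤ M → |h i - h j| ≤ s.f (i - j) ∧ s.f (i - j) ≤ h i + h j := by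
    intro i j hji hi
    have hd : dist (s.x (s.L + i)) (s.x (s.L + j)) = (s.f (i - j) : ℝ) := by
      have := hs.2.2.2 (s.L + i) (s.L + j) (by omega) (by omega) (by omega)
      have he : ((s.L + i) - (s.L + j)).natAbs = i - j := by omega
      rwa [he] at this
    constructor
    · have habs := abs_dist_sub_le (s.x (s.L + i)) (s.x (s.L + j)) y
      rw [dist_comm (s.x (s.L + i)) y, dist_comm (s.x (s.L + j)) y] at habs
      rw [hd, ← dq_spec hX, ← dq_spec hX] at habs
      have : |((h i : ℚ) : ℝ) - ((h j : ℚ) : ℝ)| ≤ ((s.f (i-j) : ℚ) : ℝ) := habs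
      exact_mod_cast this
    · have htri : dist (s.x (s.L + i)) (s.x (s.L + j))
          ≤ dist (s.x (s.L + i)) y + dist y (s.x (s.L + j)) := dist_triangle _ _ _
      rw [hd, dist_comm (s.x (s.L + i)) y, ← dq_spec hX, ← dq_spec hX] at htri
      exact_mod_cast htri
  have hN1 : 2 * M < N := by rw [hNdef]; exact amalN_spec1
  have hN2 : 10 * (Cb + 1) ≤ rho s.f M * ((N:ℚ) - 2 * M) := by
    rw [hNdef]; exact amalN_spec2 hf hM
  set f' : ℕ → ℚ := Amal s.f M h N with hf'def
  have hval : ValidOn f' N := Amal_valid hf hM hh1 hh2 hCf hCh hN1 hN2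
  have hexteq : ∀ n : ℕ, n ≤ M → f' n = s.f n := fun n hn =>
    Amal_eq_f hf hM hh1 hh2 hCf hCh hN1 hN2 hn
  have hat : ∀ i : ℕ, i ≤ M → f' (N - i) = h i := fun i hi =>
    Amal_at hf hM hh1 hh2 hCf hCh hN1 hN2 hi
  obtain ⟨x', hold, hxy, hchain⟩ := extend_chain hX (x := s.x) (L := s.L) (R := s.R)
    (f := s.f) (f' := f') (N := N) (by omega) (hs.2.2.2) hval
    (fun n hn => hexteq n (by omega)) (by omega)
    (y := y)
    (by
      intro i hi
      have hiM : i ≤ M := by omega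
      rw [hat i hiM]
      exact (dq_spec hX y (s.x (s.L + i))).symm)
  have hL0 := hs.1
  have hR1 := hs.2.1
  refine ⟨⟨s.L, s.L + N, x', f'⟩, ?_, ?_, rfl, ?_, ?_, ?_⟩
  · refine ⟨hs.1, by simp; omega, ?_, ?_⟩
    · have hspan : span ⟨s.L, s.L + N, x', f'⟩ = N := by
        unfold span; simp
      rw [hspan]
      exact hval
    · intro p q hq hqp hp
      exact hchain p q hq hqp (by simpa using hp)
  · exact ⟨le_rfl, by simp; omega, hold, fun n hn => hexteq n hn⟩
  · have hspan : span ⟨s.L, s.L + N, x', f'⟩ = N := by unfold span; simp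
    rw [hspan, hNdef]
  · have hspan : span ⟨s.L, s.L + N, x', f'⟩ = N := by unfold span; simp
    rw [hspan]
    exact hxy
  · intro i hi
    have hspan : span ⟨s.L, s.L + N, x', f'⟩ = N := by unfold span; simp
    rw [hspan]
    exact hat i hi

theorem Fext_valid {f : ℕ → ℚ} {M : ℕ} (hf : ValidOn f M) (hM : 1 ≤ M) (K : ℕ) :
    ValidOn (Fext f M) K :=
  ⟨Fext_zero hf hM, fun n h1 _ => Fext_pos hf hM n h1,
   fun a b _ => Fext_add_le hf hM a b, fun a b _ => Fext_le_add hf hM a b⟩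

/-- the bit-encoding distance values -/
noncomputable def encB (s : StX X) (bit : Bool) : ℚ :=
  if bit then Cb0 s.f (span s) + 1 else 2 * Cb0 s.f (span s) + 2

noncomputable def encCb (s : StX X) : ℚ := 2 * Cb0 s.f (span s) + 2

/-- position at which the encoding value is written -/
noncomputable def encN (s : StX X) : ℕ := amalN s.f (span s) (encCb s)

theorem enc_ex (hX : IsRationalUrysohn X) (s : StX X) (hs : Inv s) (bit : Bool) :
    ∃ s' : StX X, Inv s' ∧ extendsSt s s' ∧ s'.L = s.L ∧ span s' = encN s ∧
      s'.f (encN s) = encB s bit := by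
  classical
  have hM := hs.span_pos
  have hMc := hs.span_cast
  have hf := hs.2.2.1
  have hC0 : 0 ≤ Cb0 s.f (span s) := Cb0_nonneg hf
  set B : ℚ := encB s bit with hBdef
  have hB0 : 0 < B := by
    rw [hBdef]; unfold encB; split <;> linarith
  have hB1 : Cb0 s.f (span s) ≤ 2 * B := by
    rw [hBdef]; unfold encB; split <;> linarith
  have hB2 : B ≤ encCb s := by
    rw [hBdef]; unfold encB encCb; split <;> linarith
  -- realize a point at constant distance B from the chain
  obtain ⟨y, hy⟩ := realize hX (n := span s + 1)
    (fun i => s.x (s.L + ((i : ℕ) : ℤ))) (fun _ => B)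
    (fun _ => hB0.le)
    (by
      intro i j
      constructor
      · simp only [sub_self, abs_zero]
        exact dist_nonneg
      · have hij : dist (s.x (s.L + ((i:ℕ):ℤ))) (s.x (s.L + ((j:ℕ):ℤ)))
            = (s.f ((((i:ℕ):ℤ)) - ((j:ℕ):ℤ)).natAbs : ℝ) := by
          rcases le_total (j:ℕ) (i:ℕ) with hji | hij
          · have := hs.2.2.2 (s.L + ((i:ℕ):ℤ)) (s.L + ((j:ℕ):ℤ))
              (by omega) (by omega) (by omega)
            have he : ((s.L + ((i:ℕ):ℤ)) - (s.L + ((j:ℕ):ℤ))).natAbs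
                = (((i:ℕ):ℤ) - ((j:ℕ):ℤ)).natAbs := by omega
            rwa [he] at this
          · have := hs.2.2.2 (s.L + ((j:ℕ):ℤ)) (s.L + ((i:ℕ):ℤ))
              (by omega) (by omega) (by omega)
            rw [dist_comm] at this
            have he : ((s.L + ((j:ℕ):ℤ)) - (s.L + ((i:ℕ):ℤ))).natAbs
                = (((i:ℕ):ℤ) - ((j:ℕ):ℤ)).natAbs := by omega
            rwa [he] at this
        rw [hij]
        have harg : ((((i:ℕ):ℤ)) - ((j:ℕ):ℤ)).natAbs ≤ span s := by omega
        have h2 : s.f ((((i:ℕ):ℤ)) - ((j:ℕ):ℤ)).natAbs ≤ B + B := by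
          have := le_Cb0 (f := s.f) harg
          linarith
        exact_mod_cast h2)
  have hyd : ∀ i : ℕ, i ≤ span s → dist y (s.x (s.L + (i:ℤ))) = ((B:ℚ):ℝ) := by
    intro i hi
    exact hy ⟨i, by omega⟩
  have hy0 : ∀ p, s.L ≤ p → p ≤ s.R → y ≠ s.x p := by
    intro p hp1 hp2 hcon
    have hi : p = s.L + (((p - s.L).toNat : ℕ) : ℤ) := by omega
    have := hyd (p - s.L).toNat (by omega)
    rw [← hi, ← hcon, dist_self] at this
    have : (B:ℝ) = 0 := this.symm
    have : B = 0 := by exact_mod_cast this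
    linarith
  have hdq : ∀ i : ℕ, i ≤ span s → dq hX y (s.x (s.L + (i:ℤ))) = B := by
    intro i hi
    have h1 := dq_spec hX y (s.x (s.L + (i:ℤ)))
    rw [hyd i hi] at h1
    exact_mod_cast h1
  obtain ⟨s', h1, h2, h3, h4, h5, h6⟩ := absorb_ex hX s hs y (encCb s)
    (fun n hn => by
      have := le_Cb0 (f := s.f) hn
      unfold encCb
      linarith)
    (fun i hi => by rw [hdq i hi]; exact hB2)
    hy0
  refine ⟨s', h1, h2, h3, by rw [h4]; rfl, ?_⟩
  have h7 := h6 0 (by omega)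
  rw [Nat.sub_zero] at h7
  have h8 := hdq 0 (by omega)
  show s'.f (amalN s.f (span s) (encCb s)) = encB s bit
  rw [← h4, h7, h8]

theorem left_ex (hX : IsRationalUrysohn X) (s : StX X) (hs : Inv s) :
    ∃ s' : StX X, Inv s' ∧ extendsSt s s' ∧ s'.L = s.L - 1 ∧ s'.R = s.R := by
  classical
  have hM := hs.span_pos
  have hMc := hs.span_cast
  have hf := hs.2.2.1
  set M : ℕ := span s with hMdef
  set f₂ : ℕ → ℚ := Fext s.f M with hf2def
  have hval2 : ∀ K, ValidOn f₂ K := Fext_valid hf hM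
  have hext2 : ∀ n, n ≤ M → f₂ n = s.f n := fun n hn => Fext_of_le hn
  -- chain distances in f₂ form
  have hch2 : ∀ p q : ℤ, s.L ≤ q → q ≤ p → p ≤ s.R →
      dist (s.x p) (s.x q) = (f₂ ((p - q).natAbs) : ℝ) := by
    intro p q hq hqp hp
    rw [hext2 _ (by omega)]
    exact hs.2.2.2 p q hq hqp hp
  obtain ⟨z, hz⟩ := realize hX (n := M + 1)
    (fun i => s.x (s.L + ((i : ℕ) : ℤ))) (fun i => f₂ ((i:ℕ) + 1))
    (fun i => Fext_nonneg hf hM _)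
    (by
      intro i j
      rcases le_total (j:ℕ) (i:ℕ) with hji | hij
      · have hd : dist (s.x (s.L + ((i:ℕ):ℤ))) (s.x (s.L + ((j:ℕ):ℤ)))
            = (f₂ ((i:ℕ) - (j:ℕ)) : ℝ) := by
          have := hch2 (s.L + ((i:ℕ):ℤ)) (s.L + ((j:ℕ):ℤ)) (by omega) (by omega) (by omega)
          have he : ((s.L + ((i:ℕ):ℤ)) - (s.L + ((j:ℕ):ℤ))).natAbs = (i:ℕ) - (j:ℕ) := by
            omega
          rwa [he] at this
        rw [hd]
        have e1 : (j:ℕ) + 1 + ((i:ℕ) - (j:ℕ)) = (i:ℕ) + 1 := by omega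
        have t1 : f₂ ((i:ℕ) + 1) ≤ f₂ ((j:ℕ) + 1) + f₂ ((i:ℕ) - (j:ℕ)) := by
          have := Fext_add_le hf hM ((j:ℕ) + 1) ((i:ℕ) - (j:ℕ))
          rwa [e1] at this
        have t2 : f₂ ((j:ℕ) + 1) ≤ f₂ ((i:ℕ) + 1) + f₂ ((i:ℕ) - (j:ℕ)) := by
          have := Fext_le_add hf hM ((j:ℕ) + 1) ((i:ℕ) - (j:ℕ))
          rwa [e1] at this
        have t3 : f₂ ((i:ℕ) - (j:ℕ)) ≤ f₂ ((i:ℕ) + 1) + f₂ ((j:ℕ) + 1) := by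
          have := Fext_le_add hf hM ((i:ℕ) - (j:ℕ)) ((j:ℕ) + 1)
          have e2 : (i:ℕ) - (j:ℕ) + ((j:ℕ) + 1) = (i:ℕ) + 1 := by omega
          rwa [e2] at this
        exact pair_real (by linarith) (by linarith) (by linarith) rfl
      · have hd : dist (s.x (s.L + ((i:ℕ):ℤ))) (s.x (s.L + ((j:ℕ):ℤ)))
            = (f₂ ((j:ℕ) - (i:ℕ)) : ℝ) := by
          have := hch2 (s.L + ((j:ℕ):ℤ)) (s.L + ((i:ℕ):ℤ)) (by omega) (by omega) (by omega)
          rw [dist_comm] at this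
          have he : ((s.L + ((j:ℕ):ℤ)) - (s.L + ((i:ℕ):ℤ))).natAbs = (j:ℕ) - (i:ℕ) := by
            omega
          rwa [he] at this
        rw [hd]
        have e1 : (i:ℕ) + 1 + ((j:ℕ) - (i:ℕ)) = (j:ℕ) + 1 := by omega
        have t1 : f₂ ((j:ℕ) + 1) ≤ f₂ ((i:ℕ) + 1) + f₂ ((j:ℕ) - (i:ℕ)) := by
          have := Fext_add_le hf hM ((i:ℕ) + 1) ((j:ℕ) - (i:ℕ))
          rwa [e1] at this
        have t2 : f₂ ((i:ℕ) + 1) ≤ f₂ ((j:ℕ) + 1) + f₂ ((j:ℕ) - (i:ℕ)) := by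
          have := Fext_le_add hf hM ((i:ℕ) + 1) ((j:ℕ) - (i:ℕ))
          rwa [e1] at this
        have t3 : f₂ ((j:ℕ) - (i:ℕ)) ≤ f₂ ((i:ℕ) + 1) + f₂ ((j:ℕ) + 1) := by
          have h := Fext_le_add hf hM ((j:ℕ) - (i:ℕ)) ((i:ℕ) + 1)
          have e2 : (j:ℕ) - (i:ℕ) + ((i:ℕ) + 1) = (j:ℕ) + 1 := by omega
          rw [e2] at h
          rw [hf2def]
          linarith
        exact pair_real (by linarith) (by linarith) (by linarith) rfl)
  have hz' : ∀ i : ℕ, i ≤ M → dist z (s.x (s.L + (i:ℤ))) = ((f₂ (i + 1) : ℚ) : ℝ) := by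
    intro i hi
    exact hz ⟨i, by omega⟩
  refine ⟨⟨s.L - 1, s.R, fun p => if p = s.L - 1 then z else s.x p, f₂⟩, ?_, ?_, rfl, rfl⟩
  · have hspan : span ⟨s.L - 1, s.R, fun p => if p = s.L - 1 then z else s.x p, f₂⟩
        = M + 1 := by
      show (s.R - (s.L - 1)).toNat = M + 1
      omega
    refine ⟨by show s.L - 1 ≤ 0; have := hs.1; omega, hs.2.1,
      by rw [hspan]; exact hval2 (M+1), ?_⟩
    intro p q hq hqp hp
    replace hq : s.L - 1 ≤ q := hq
    replace hp : p ≤ s.R := hp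
    show dist (if p = s.L - 1 then z else s.x p) (if q = s.L - 1 then z else s.x q)
      = (f₂ ((p - q).natAbs) : ℝ)
    by_cases hq1 : q = s.L - 1
    · by_cases hp1 : p = s.L - 1
      · rw [if_pos hq1, if_pos hp1, dist_self, hp1, hq1, sub_self]
        simp [(hval2 1).zero]
      · rw [if_pos hq1, if_neg hp1]
        set i : ℕ := (p - s.L).toNat with hidef
        have hpi : p = s.L + (i:ℤ) := by omega
        have hiM : i ≤ M := by omega
        rw [hpi, dist_comm]
        have hnat : ((s.L + (i:ℤ)) - q).natAbs = i + 1 := by omega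
        rw [hnat]
        exact hz' i hiM
    · have hp1 : p ≠ s.L - 1 := by omega
      rw [if_neg hp1, if_neg hq1]
      exact hch2 p q (by omega) hqp hp
  · exact ⟨by show s.L - 1 ≤ s.L; omega, le_rfl, fun p hp1 hp2 => by
      show (if p = s.L - 1 then z else s.x p) = s.x p
      rw [if_neg (by omega)], fun n hn => hext2 n hn⟩

/-- bound used for absorption -/
noncomputable def absCb (hX : IsRationalUrysohn X) (s : StX X) (y : X) : ℚ :=
  max (Cb0 s.f (span s))
    ((Finset.Icc 0 (span s)).sup' ⟨0, by simp⟩ (fun i => dq hX y (s.x (s.L + i))))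

theorem absCb_f (hX : IsRationalUrysohn X) (s : StX X) (y : X) :
    ∀ n, n ≤ span s → s.f n ≤ absCb hX s y := fun n hn =>
  le_trans (le_Cb0 hn) (le_max_left _ _)

theorem absCb_h (hX : IsRationalUrysohn X) (s : StX X) (y : X) :
    ∀ i : ℕ, i ≤ span s → dq hX y (s.x (s.L + i)) ≤ absCb hX s y := fun i hi =>
  le_trans (Finset.le_sup' (fun i : ℕ => dq hX y (s.x (s.L + (i:ℤ))))
    (Finset.mem_Icc.mpr ⟨Nat.zero_le i, hi⟩)) (le_max_right _ _)

open Classical in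
noncomputable def stepEnc (hX : IsRationalUrysohn X) (bit : Bool) (s : StX X) : StX X :=
  if hs : Inv s then (enc_ex hX s hs bit).choose else s

open Classical in
noncomputable def stepAbs (hX : IsRationalUrysohn X) (y : X) (s : StX X) : StX X :=
  if hs : Inv s then
    if hy : ∀ p, s.L ≤ p → p ≤ s.R → y ≠ s.x p then
      (absorb_ex hX s hs y (absCb hX s y) (absCb_f hX s y) (absCb_h hX s y) hy).choose
    else s
  else s

open Classical in
noncomputable def stepL (hX : IsRationalUrysohn X) (s : StX X) : StX X :=
  if hs : Inv s then (left_ex hX s hs).choose else s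

noncomputable def stepFn (hX : IsRationalUrysohn X) (y : X) (bit : Bool) (s : StX X) :
    StX X :=
  stepL hX (stepAbs hX y (stepEnc hX bit s))

theorem stepEnc_spec (hX : IsRationalUrysohn X) (bit : Bool) (hs : Inv s) :
    Inv (stepEnc hX bit s) ∧ extendsSt s (stepEnc hX bit s) ∧
      (stepEnc hX bit s).L = s.L ∧ span (stepEnc hX bit s) = encN s ∧
      (stepEnc hX bit s).f (encN s) = encB s bit := by
  unfold stepEnc
  rw [dif_pos hs]
  exact (enc_ex hX s hs bit).choose_spec

theorem stepAbs_spec (hX : IsRationalUrysohn X) (y : X) (hs : Inv s) :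
    Inv (stepAbs hX y s) ∧ extendsSt s (stepAbs hX y s) ∧ (stepAbs hX y s).L = s.L ∧
      ∃ p, (stepAbs hX y s).L ≤ p ∧ p ≤ (stepAbs hX y s).R ∧ (stepAbs hX y s).x p = y := by
  unfold stepAbs
  rw [dif_pos hs]
  split_ifs with hy
  · obtain ⟨h1, h2, h3, h4, h5, h6⟩ :=
      (absorb_ex hX s hs y (absCb hX s y) (absCb_f hX s y) (absCb_h hX s y) hy).choose_spec
    refine ⟨h1, h2, h3, _, ?_, ?_, h5⟩
    · have hpos := h1.span_pos
      omega
    · have hpos := h1.span_pos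
      have hcast := h1.span_cast
      omega
  · push_neg at hy
    obtain ⟨p, hp1, hp2, hpy⟩ := hy
    exact ⟨hs, extendsSt_refl s, rfl, p, hp1, hp2, hpy.symm⟩

theorem stepL_spec (hX : IsRationalUrysohn X) (hs : Inv s) :
    Inv (stepL hX s) ∧ extendsSt s (stepL hX s) ∧ (stepL hX s).L = s.L - 1 ∧
      (stepL hX s).R = s.R := by
  unfold stepL
  rw [dif_pos hs]
  exact (left_ex hX s hs).choose_spec

theorem stepFn_spec (hX : IsRationalUrysohn X) (y : X) (bit : Bool) (hs : Inv s) :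
    Inv (stepFn hX y bit s) ∧ extendsSt s (stepFn hX y bit s) ∧
      (stepFn hX y bit s).L = s.L - 1 ∧ s.R + 1 ≤ (stepFn hX y bit s).R ∧
      (∃ p, (stepFn hX y bit s).L ≤ p ∧ p ≤ (stepFn hX y bit s).R ∧
        (stepFn hX y bit s).x p = y) ∧
      encN s ≤ span (stepFn hX y bit s) ∧
      (stepFn hX y bit s).f (encN s) = encB s bit := by
  obtain ⟨e1, e2, e3, e4, e5⟩ := stepEnc_spec hX bit hs
  set s1 := stepEnc hX bit s with hs1
  obtain ⟨a1, a2, a3, p, hp1, hp2, hp3⟩ := stepAbs_spec hX y e1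
  set s2 := stepAbs hX y s1 with hs2
  obtain ⟨l1, l2, l3, l4⟩ := stepL_spec hX a1
  set s3 := stepL hX s2 with hs3
  have hstep : stepFn hX y bit s = s3 := rfl
  have hext13 : extendsSt s1 s3 := extendsSt_trans a2 l2
  have hext : extendsSt s s3 := extendsSt_trans e2 hext13
  rw [hstep]
  refine ⟨l1, hext, by omega, ?_, ?_, ?_, ?_⟩
  · -- R grows
    have hc1 := e1.span_cast
    have hc := hs.span_cast
    have hsp := hs.span_pos
    have hN1 : 2 * span s < encN s := amalN_spec1
    have hR2 := a2.2.1
    omega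
  · exact ⟨p, by omega, by omega, by rw [l2.2.2.1 p hp1 hp2, hp3]⟩
  · have := extendsSt_span hext13
    omega
  · have h1 : s3.f (encN s) = s1.f (encN s) := by
      apply hext13.2.2.2
      omega
    rw [h1, e5]

/-- the initial two-point chain -/
theorem init_ex (hX : IsRationalUrysohn X) : ∃ s : StX X, Inv s ∧ s.L = 0 ∧ s.R = 1 := by
  classical
  obtain ⟨x₀⟩ := hX.1
  obtain ⟨z, hz⟩ := realize hX (n := 1) (fun _ => x₀) (fun _ => 1)
    (fun _ => by norm_num)
    (by
      intro i j
      constructor <;> norm_num [dist_self])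
  have hz0 : dist z x₀ = (1:ℝ) := by
    have := hz 0
    simpa using this
  refine ⟨⟨0, 1, fun p => if p ≤ 0 then x₀ else z, fun n => if n = 0 then 0 else 1⟩,
    ⟨le_rfl, le_rfl, ?_, ?_⟩, rfl, rfl⟩
  · have hspan : span ⟨0, 1, fun p => if p ≤ 0 then x₀ else z,
        fun n => if n = 0 then 0 else 1⟩ = 1 := by
      show ((1:ℤ) - 0).toNat = 1
      omega
    rw [hspan]
    refine ⟨by norm_num, ?_, ?_, ?_⟩
    · intro n h1 h2
      have : n = 1 := by omega
      subst this
      norm_num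
    · intro a b hab
      have ha : a ≤ 1 := by omega
      have hb : b ≤ 1 := by omega
      interval_cases a <;> interval_cases b <;> first | (exfalso; omega) | norm_num
    · intro a b hab
      have ha : a ≤ 1 := by omega
      have hb : b ≤ 1 := by omega
      interval_cases a <;> interval_cases b <;> first | (exfalso; omega) | norm_num
  · intro p q hq hqp hp
    replace hq : (0:ℤ) ≤ q := hq
    replace hp : p ≤ 1 := hp
    show dist (if p ≤ 0 then x₀ else z) (if q ≤ 0 then x₀ else z)
      = ((if (p - q).natAbs = 0 then 0 else 1 : ℚ) : ℝ)
    rcases (by omega : p = 0 ∧ q = 0 ∨ p = 1 ∧ q = 0 ∨ p = 1 ∧ q = 1) with ⟨h1, h2⟩ | ⟨h1, h2⟩ | ⟨h1, h2⟩ <;>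
      subst h1 <;> subst h2 <;> norm_num
    exact hz0

noncomputable def init (hX : IsRationalUrysohn X) : StX X := (init_ex hX).choose

theorem init_spec (hX : IsRationalUrysohn X) :
    Inv (init hX) ∧ (init hX).L = 0 ∧ (init hX).R = 1 := (init_ex hX).choose_spec

/-- the whole recursive construction -/
noncomputable def state (hX : IsRationalUrysohn X) (e : ℕ → X) (c : ℕ → Bool) : ℕ → StX X
  | 0 => init hX
  | k + 1 => stepFn hX (e k) (c k) (state hX e c k)


/-! ### The limit objects -/

theorem state_inv (hX : IsRationalUrysohn X) (e : ℕ → X) (c : ℕ → Bool) :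
    ∀ k, Inv (state hX e c k)
  | 0 => (init_spec hX).1
  | k + 1 => (stepFn_spec hX (e k) (c k) (state_inv hX e c k)).1

theorem state_extends_succ (hX : IsRationalUrysohn X) (e : ℕ → X) (c : ℕ → Bool) (k : ℕ) :
    extendsSt (state hX e c k) (state hX e c (k+1)) :=
  (stepFn_spec hX (e k) (c k) (state_inv hX e c k)).2.1

theorem state_extends (hX : IsRationalUrysohn X) (e : ℕ → X) (c : ℕ → Bool) {k k' : ℕ}
    (h : k ≤ k') : extendsSt (state hX e c k) (state hX e c k') := by
  induction k' with
  | zero =>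
    have : k = 0 := by omega
    subst this
    exact extendsSt_refl _
  | succ k' ih =>
    rcases Nat.lt_or_ge k (k' + 1) with h' | h'
    · exact extendsSt_trans (ih (by omega)) (state_extends_succ hX e c k')
    · have : k = k' + 1 := by omega
      subst this
      exact extendsSt_refl _

theorem state_L (hX : IsRationalUrysohn X) (e : ℕ → X) (c : ℕ → Bool) (k : ℕ) :
    (state hX e c k).L = -(k : ℤ) := by
  induction k with
  | zero => show (init hX).L = _; simpa using (init_spec hX).2.1
  | succ k ih =>
    have := (stepFn_spec hX (e k) (c k) (state_inv hX e c k)).2.2.1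
    show (stepFn hX (e k) (c k) (state hX e c k)).L = _
    omega

theorem state_R (hX : IsRationalUrysohn X) (e : ℕ → X) (c : ℕ → Bool) (k : ℕ) :
    (k : ℤ) + 1 ≤ (state hX e c k).R := by
  induction k with
  | zero =>
    have h := (init_spec hX).2.2
    show (0:ℤ) + 1 ≤ (init hX).R
    omega
  | succ k ih =>
    have := (stepFn_spec hX (e k) (c k) (state_inv hX e c k)).2.2.2.1
    show _ ≤ (stepFn hX (e k) (c k) (state hX e c k)).R
    push_cast
    omega

theorem state_span (hX : IsRationalUrysohn X) (e : ℕ → X) (c : ℕ → Bool) (k : ℕ) :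
    2 * k + 1 ≤ span (state hX e c k) := by
  have h1 := state_L hX e c k
  have h2 := state_R hX e c k
  have h3 := (state_inv hX e c k).span_cast
  omega

/-- The limiting distance function. -/
noncomputable def ff (hX : IsRationalUrysohn X) (e : ℕ → X) (c : ℕ → Bool) (n : ℕ) : ℚ :=
  (state hX e c n).f n

/-- The limiting chain. -/
noncomputable def xx (hX : IsRationalUrysohn X) (e : ℕ → X) (c : ℕ → Bool) (p : ℤ) : X :=
  (state hX e c p.natAbs).x p

theorem ff_eq (hX : IsRationalUrysohn X) (e : ℕ → X) (c : ℕ → Bool) {k n : ℕ}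
    (hn : n ≤ span (state hX e c k)) : ff hX e c n = (state hX e c k).f n := by
  set m := max k n with hm
  have h1 : (state hX e c m).f n = (state hX e c k).f n :=
    (state_extends hX e c (le_max_left k n)).2.2.2 n hn
  have h2 : (state hX e c m).f n = (state hX e c n).f n :=
    (state_extends hX e c (le_max_right k n)).2.2.2 n
      (by have := state_span hX e c n; omega)
  unfold ff
  rw [← h2, h1]

theorem xx_eq (hX : IsRationalUrysohn X) (e : ℕ → X) (c : ℕ → Bool) {k : ℕ} {p : ℤ}
    (hp1 : (state hX e c k).L ≤ p) (hp2 : p ≤ (state hX e c k).R) :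
    xx hX e c p = (state hX e c k).x p := by
  set m := max k p.natAbs with hm
  have hL : (state hX e c p.natAbs).L ≤ p := by
    rw [state_L]; omega
  have hR : p ≤ (state hX e c p.natAbs).R := by
    have := state_R hX e c p.natAbs; omega
  have h1 : (state hX e c m).x p = (state hX e c k).x p :=
    (state_extends hX e c (le_max_left k p.natAbs)).2.2.1 p hp1 hp2
  have h2 : (state hX e c m).x p = (state hX e c p.natAbs).x p :=
    (state_extends hX e c (le_max_right k p.natAbs)).2.2.1 p hL hR
  unfold xx
  rw [← h2, h1]

theorem dist_xx (hX : IsRationalUrysohn X) (e : ℕ → X) (c : ℕ → Bool) (p q : ℤ) :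
    dist (xx hX e c p) (xx hX e c q) = (ff hX e c ((p - q).natAbs) : ℝ) := by
  set k := p.natAbs + q.natAbs with hk
  have hL := state_L hX e c k
  have hR := state_R hX e c k
  have hspan := state_span hX e c k
  have hxp : xx hX e c p = (state hX e c k).x p := xx_eq hX e c (by omega) (by omega)
  have hxq : xx hX e c q = (state hX e c k).x q := xx_eq hX e c (by omega) (by omega)
  have hffn : ff hX e c ((p - q).natAbs) = (state hX e c k).f ((p - q).natAbs) :=
    ff_eq hX e c (by omega)
  rw [hxp, hxq, hffn]
  rcases le_total q p with h | h
  · exact (state_inv hX e c k).2.2.2 p q (by omega) h (by omega)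
  · have := (state_inv hX e c k).2.2.2 q p (by omega) h (by omega)
    rw [dist_comm] at this
    have he : ((q : ℤ) - p).natAbs = (p - q).natAbs := by omega
    rwa [he] at this

theorem ff_pos (hX : IsRationalUrysohn X) (e : ℕ → X) (c : ℕ → Bool) {n : ℕ} (hn : 1 ≤ n) :
    0 < ff hX e c n :=
  ((state_inv hX e c n).2.2.1).pos n hn (by have := state_span hX e c n; omega)

theorem xx_injective (hX : IsRationalUrysohn X) (e : ℕ → X) (c : ℕ → Bool) :
    Function.Injective (xx hX e c) := by
  intro p q hpq
  by_contra hne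
  have h1 := dist_xx hX e c p q
  rw [hpq, dist_self] at h1
  have h2 : 0 < ff hX e c ((p - q).natAbs) := ff_pos hX e c (by omega)
  have : (0:ℝ) < (ff hX e c ((p - q).natAbs) : ℝ) := by exact_mod_cast h2
  linarith [this.trans_eq h1.symm]

theorem xx_surjective (hX : IsRationalUrysohn X) (e : ℕ → X) (c : ℕ → Bool)
    (he : Function.Surjective e) : Function.Surjective (xx hX e c) := by
  intro z
  obtain ⟨k, rfl⟩ := he z
  obtain ⟨p, hp1, hp2, hp3⟩ := (stepFn_spec hX (e k) (c k) (state_inv hX e c k)).2.2.2.2.1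
  refine ⟨p, ?_⟩
  have : xx hX e c p = (state hX e c (k+1)).x p := xx_eq hX e c hp1 hp2
  rw [this]
  exact hp3

end Machine

/-! ### The isometry and the final assembly -/

section Final
variable {X : Type*} [MetricSpace X]

noncomputable def xxE (hX : IsRationalUrysohn X) (e : ℕ → X) (he : Function.Surjective e)
    (c : ℕ → Bool) : ℤ ≃ X :=
  Equiv.ofBijective (xx hX e c) ⟨xx_injective hX e c, xx_surjective hX e c he⟩

theorem xxE_apply (hX : IsRationalUrysohn X) (e : ℕ → X) (he : Function.Surjective e)
    (c : ℕ → Bool) (p : ℤ) : xxE hX e he c p = xx hX e c p := rfl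

noncomputable def gc (hX : IsRationalUrysohn X) (e : ℕ → X) (he : Function.Surjective e)
    (c : ℕ → Bool) : X ≃ᵢ X :=
  { toEquiv := ((xxE hX e he c).symm.trans (Equiv.addRight (1:ℤ))).trans (xxE hX e he c)
    isometry_toFun := Isometry.of_dist_eq (by
      intro a b
      show dist (xxE hX e he c ((xxE hX e he c).symm a + 1))
        (xxE hX e he c ((xxE hX e he c).symm b + 1)) = dist a b
      rw [xxE_apply, xxE_apply, dist_xx]
      have h1 : a = xxE hX e he c ((xxE hX e he c).symm a) := (Equiv.apply_symm_apply _ _).symm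
      have h2 : b = xxE hX e he c ((xxE hX e he c).symm b) := (Equiv.apply_symm_apply _ _).symm
      conv_rhs => rw [h1, h2]
      rw [xxE_apply, xxE_apply, dist_xx]
      congr 2
      omega) }

theorem gc_apply (hX : IsRationalUrysohn X) (e : ℕ → X) (he : Function.Surjective e)
    (c : ℕ → Bool) (p : ℤ) : gc hX e he c (xx hX e c p) = xx hX e c (p + 1) := by
  show xxE hX e he c ((xxE hX e he c).symm (xx hX e c p) + 1) = xx hX e c (p + 1)
  have h1 : (xxE hX e he c).symm (xx hX e c p) = p := Equiv.symm_apply_apply _ _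
  rw [h1]
  rfl

theorem gc_inv_apply (hX : IsRationalUrysohn X) (e : ℕ → X) (he : Function.Surjective e)
    (c : ℕ → Bool) (p : ℤ) : (gc hX e he c)⁻¹ (xx hX e c p) = xx hX e c (p - 1) := by
  have h := gc_apply hX e he c (p - 1)
  rw [sub_add_cancel] at h
  rw [← h]
  simp

theorem gc_zpow (hX : IsRationalUrysohn X) (e : ℕ → X) (he : Function.Surjective e)
    (c : ℕ → Bool) : ∀ (n p : ℤ),
    ((gc hX e he c) ^ n) (xx hX e c p) = xx hX e c (p + n) := by
  intro n
  induction n using Int.induction_on with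
  | zero =>
    intro p
    rw [zpow_zero]
    simp
  | succ n ih =>
    intro p
    rw [show ((n:ℤ) + 1) = 1 + (n:ℤ) by ring, zpow_add, zpow_one]
    have : ((gc hX e he c) ^ (1 + (n:ℤ)))
        = (gc hX e he c) * ((gc hX e he c) ^ (n:ℤ)) := by
      rw [zpow_add, zpow_one]
    show ((gc hX e he c) * ((gc hX e he c) ^ (n:ℤ))) (xx hX e c p) = _
    have happ : ((gc hX e he c) * ((gc hX e he c) ^ (n:ℤ))) (xx hX e c p)
        = (gc hX e he c) (((gc hX e he c) ^ (n:ℤ)) (xx hX e c p)) := rfl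
    rw [happ, ih p, gc_apply]
    congr 1
    ring
  | pred n ih =>
    intro p
    rw [show (-(n:ℤ) - 1) = (-(n:ℤ)) + (-1) by ring, zpow_add, zpow_neg_one]
    have happ : (((gc hX e he c) ^ (-(n:ℤ))) * (gc hX e he c)⁻¹) (xx hX e c p)
        = ((gc hX e he c) ^ (-(n:ℤ))) ((gc hX e he c)⁻¹ (xx hX e c p)) := rfl
    rw [happ, gc_inv_apply, ih (p - 1)]
    congr 1
    ring

theorem gc_cyclic (hX : IsRationalUrysohn X) (e : ℕ → X) (he : Function.Surjective e)
    (c : ℕ → Bool) (u v : X) : ∃ n : ℤ, ((gc hX e he c) ^ n) u = v := by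
  obtain ⟨p, rfl⟩ := xx_surjective hX e c he u
  obtain ⟨q, rfl⟩ := xx_surjective hX e c he v
  refine ⟨q - p, ?_⟩
  rw [gc_zpow]
  congr 1
  ring

theorem dist_gc (hX : IsRationalUrysohn X) (e : ℕ → X) (he : Function.Surjective e)
    (c : ℕ → Bool) (z : X) (n : ℤ) :
    dist z (((gc hX e he c) ^ n) z) = (ff hX e c n.natAbs : ℝ) := by
  obtain ⟨p, rfl⟩ := xx_surjective hX e c he z
  rw [gc_zpow, dist_xx]
  congr 2
  omega

/-- determinism of the construction -/
theorem state_congr (hX : IsRationalUrysohn X) (e : ℕ → X) {c c' : ℕ → Bool} {k : ℕ}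
    (h : ∀ i, i < k → c i = c' i) : state hX e c k = state hX e c' k := by
  induction k with
  | zero => rfl
  | succ k ih =>
    show stepFn hX (e k) (c k) (state hX e c k) = stepFn hX (e k) (c' k) (state hX e c' k)
    rw [ih (fun i hi => h i (by omega)), h k (by omega)]

theorem ff_ne (hX : IsRationalUrysohn X) (e : ℕ → X) {c c' : ℕ → Bool} (hne : c ≠ c') :
    ∃ n : ℕ, ff hX e c n ≠ ff hX e c' n := by
  have hex : ∃ j, c j ≠ c' j := by
    by_contra h
    push_neg at h
    exact hne (funext h)
  set j := Nat.find hex with hj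
  have hjs : c j ≠ c' j := Nat.find_spec hex
  have hmin : ∀ i, i < j → c i = c' i := fun i hi => not_not.mp (Nat.find_min hex hi)
  have hst : state hX e c j = state hX e c' j := state_congr hX e hmin
  have h1 := stepFn_spec hX (e j) (c j) (state_inv hX e c j)
  have h2 := stepFn_spec hX (e j) (c' j) (state_inv hX e c' j)
  refine ⟨encN (state hX e c j), ?_⟩
  have e1 : ff hX e c (encN (state hX e c j)) = encB (state hX e c j) (c j) := by
    have hsp := h1.2.2.2.2.2.1
    have := ff_eq hX e c (k := j+1) (n := encN (state hX e c j)) hsp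
    rw [this]
    exact h1.2.2.2.2.2.2
  have e2 : ff hX e c' (encN (state hX e c j)) = encB (state hX e c j) (c' j) := by
    rw [hst]
    have hsp := h2.2.2.2.2.2.1
    have := ff_eq hX e c' (k := j+1) (n := encN (state hX e c' j)) hsp
    rw [this]
    exact h2.2.2.2.2.2.2
  rw [e1, e2]
  have hC0 : 0 ≤ Cb0 (state hX e c j).f (span (state hX e c j)) :=
    Cb0_nonneg (state_inv hX e c j).2.2.1
  unfold encB
  rcases Bool.eq_false_or_eq_true (c j) with hb | hb <;>
    rcases Bool.eq_false_or_eq_true (c' j) with hb' | hb' <;>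
      rw [hb, hb'] at hjs ⊢ <;> simp at hjs ⊢ <;> linarith

theorem ff_conj (hX : IsRationalUrysohn X) (e : ℕ → X) (he : Function.Surjective e)
    {c c' : ℕ → Bool} (k : X ≃ᵢ X) (hk : k⁻¹ * gc hX e he c * k = gc hX e he c') :
    ∀ m : ℕ, ff hX e c m = ff hX e c' m := by
  intro m
  have hpow : (gc hX e he c') ^ (m:ℤ) = k⁻¹ * (gc hX e he c) ^ (m:ℤ) * k := by
    rw [← hk]
    have := conj_zpow (i := (m:ℤ)) (a := k⁻¹) (b := gc hX e he c)
    rwa [inv_inv] at this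
  set z : X := xx hX e c' 0 with hz
  have hd1 : dist z (((gc hX e he c') ^ (m:ℤ)) z) = (ff hX e c' m : ℝ) := by
    have := dist_gc hX e he c' z (m:ℤ)
    rwa [Int.natAbs_natCast] at this
  have happ : ((k⁻¹ * (gc hX e he c) ^ (m:ℤ) * k)) z
      = k⁻¹ (((gc hX e he c) ^ (m:ℤ)) (k z)) := rfl
  have hd2 : dist z (k⁻¹ (((gc hX e he c) ^ (m:ℤ)) (k z))) = (ff hX e c m : ℝ) := by
    have hiso : dist z (k⁻¹ (((gc hX e he c) ^ (m:ℤ)) (k z)))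
        = dist (k z) (k (k⁻¹ (((gc hX e he c) ^ (m:ℤ)) (k z)))) :=
      (k.isometry.dist_eq _ _).symm
    rw [hiso]
    have hkk : k (k⁻¹ (((gc hX e he c) ^ (m:ℤ)) (k z)))
        = ((gc hX e he c) ^ (m:ℤ)) (k z) := by simp
    rw [hkk]
    have := dist_gc hX e he c (k z) (m:ℤ)
    rwa [Int.natAbs_natCast] at this
  rw [hpow, happ, hd2] at hd1
  exact_mod_cast hd1

end Final
end Stmt11

theorem stmt_11 (X : Type*) [MetricSpace X] (hX : IsRationalUrysohn X) :
    ∃ g : (ℕ → Bool) → (X ≃ᵢ X),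
      (∀ c : ℕ → Bool, ∀ x y : X, ∃ n : ℤ, ((g c) ^ n) x = y) ∧
      (∀ c c' : ℕ → Bool, c ≠ c' → ¬ ∃ k : X ≃ᵢ X, k⁻¹ * g c * k = g c') := by
  classical
  haveI : Nonempty X := hX.1
  haveI : Countable X := hX.2.1
  obtain ⟨e, he⟩ := exists_surjective_nat X
  refine ⟨fun c => Stmt11.gc hX e he c, ?_, ?_⟩
  · intro c u v
    exact Stmt11.gc_cyclic hX e he c u v
  · rintro c c' hne ⟨k, hk⟩
    obtain ⟨n, hn⟩ := Stmt11.ff_ne hX e hne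
    exact hn (Stmt11.ff_conj hX e he k hk n)
end

section
/- Let G be the countable abelian group of exponent 2 (the direct sum of countably many copies of ℤ/2ℤ, e.g. ℕ →₀ ZMod 2). Then there exists a function d : G → G → ℝ such that: d is a metric on G (d(x,y) = 0 iff x = y, d(x,y) = d(y,x), and d(x,z) ≤ d(x,y) + d(y,z)); d is translation-invariant, i.e. d(a + x, a + y) = d(x, y) for all a, x, y ∈ G; every value d(x,y) is a rational number; and (G, d) satisfies the rational extension property: for every finite subset A ⊆ G and every function g : A → ℚ with g(a) ≥ 0 for all a ∈ A and |g(a) − g(b)| ≤ d(a,b) ≤ g(a) + g(b) for all a, b ∈ A, there exists z ∈ G with d(z,a) = g(a) for all a ∈ A. (Thus G acts regularly by translations as a group of isometries of a rational Urysohn space.) -/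
noncomputable section StmtTwelve

open Classical

local notation "V" => (ℕ →₀ ZMod 2)

private lemma V_add_self (x : V) : x + x = 0 := by
  ext k
  have h : ∀ a : ZMod 2, a + a = 0 := by decide
  simp only [Finsupp.add_apply, Finsupp.coe_zero, Pi.zero_apply]
  exact h _

/-- cancel duplicates tactic helper -/
private lemma V_cancel {a b : V} (h : a + a = 0) : True := trivial

private def tfun : ℕ → List (V × ℚ) :=
  Classical.choose (exists_surjective_nat (List (V × ℚ)))

private lemma tfun_surj : Function.Surjective tfun :=
  Classical.choose_spec (exists_surjective_nat (List (V × ℚ)))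

private def tlist (n : ℕ) : List (V × ℚ) := tfun (Nat.unpair n).1

private lemma tlist_pair (m k : ℕ) : tlist (Nat.pair m k) = tfun m := by
  simp [tlist]

/-- membership in the n-th stage subgroup -/
private def InG (n : ℕ) (x : V) : Prop := ∀ k, n ≤ k → x k = 0

private lemma InG_mono {n m : ℕ} (h : n ≤ m) {x : V} (hx : InG n x) : InG m x :=
  fun k hk => hx k (h.trans hk)

private lemma InG_zero (n : ℕ) : InG n (0 : V) := fun k _ => rfl

private lemma InG_add {n : ℕ} {x y : V} (hx : InG n x) (hy : InG n y) : InG n (x + y) := by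
  intro k hk
  simp [Finsupp.add_apply, hx k hk, hy k hk]

private lemma InG_single (n : ℕ) : InG (n + 1) (Finsupp.single n 1 : V) := by
  intro k hk
  rw [Finsupp.single_apply]
  rw [if_neg (by omega)]

private def Cond (n : ℕ) (N : V → ℚ) : Prop :=
  tlist n ≠ [] ∧ (∀ p ∈ tlist n, InG n p.1 ∧ 0 < p.2) ∧
  ∀ p ∈ tlist n, ∀ q ∈ tlist n, |p.2 - q.2| ≤ N (p.1 + q.1) ∧ N (p.1 + q.1) ≤ p.2 + q.2

private lemma tl_nonempty {n : ℕ} (h : tlist n ≠ []) : (tlist n).toFinset.Nonempty := by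
  simpa using h

private def step (n : ℕ) (N : V → ℚ) (y : V) : ℚ :=
  if h : Cond n N then
    (tlist n).toFinset.inf' (tl_nonempty h.1) (fun p => p.2 + N (y + p.1))
  else N y + 1

private def F : ℕ → V → ℚ
  | 0, _ => 0
  | n+1, x => if x n = 0 then F n x else step n (F n) (x + Finsupp.single n 1)

private lemma F_coh {n m : ℕ} (h : n ≤ m) {x : V} (hx : InG n x) : F m x = F n x := by
  obtain ⟨k, rfl⟩ := Nat.exists_eq_add_of_le h
  clear h
  induction k with
  | zero => rfl
  | succ k ih =>
    show (if x (n+k) = 0 then F (n+k) x else _) = F n x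
    rw [if_pos (hx _ (Nat.le_add_right n k)), ih]

/-- the stage invariant -/
private def P (n : ℕ) : Prop :=
  (∀ x, InG n x → (F n x = 0 ↔ x = 0)) ∧
  (∀ x y, InG n x → InG n y → F n (x + y) ≤ F n x + F n y)

private lemma P_nonneg {n : ℕ} (hP : P n) {x : V} (hx : InG n x) : 0 ≤ F n x := by
  have h0 : F n (0 : V) = 0 := (hP.1 0 (InG_zero n)).mpr rfl
  have := hP.2 x x hx hx
  rw [V_add_self, h0] at this
  linarith

private lemma P_zero : P 0 := by
  constructor
  · intro x hx
    have : x = 0 := by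
      ext k; exact hx k (Nat.zero_le k)
    simp [this, F]
  · intro x y _ _
    show (0:ℚ) ≤ 0 + 0
    norm_num

private lemma step_pos {n : ℕ} (hP : P n) {y : V} (hy : InG n y) : 0 < step n (F n) y := by
  unfold step
  split_ifs with h
  · rw [Finset.lt_inf'_iff]
    intro p hp
    have hp' : p ∈ tlist n := List.mem_toFinset.mp hp
    have h1 := (h.2.1 p hp').2
    have h2 : 0 ≤ F n (y + p.1) := P_nonneg hP (InG_add hy (h.2.1 p hp').1)
    linarith
  · have := P_nonneg hP hy
    linarith

private lemma step_lip {n : ℕ} (hP : P n) {y z : V} (hy : InG n y) (hz : InG n z) :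
    step n (F n) y ≤ step n (F n) z + F n (y + z) := by
  unfold step
  split_ifs with h
  · obtain ⟨p, hp, hpe⟩ := Finset.exists_mem_eq_inf' (tl_nonempty h.1) (fun p => p.2 + F n (z + p.1))
    rw [hpe]
    have hp' : p ∈ tlist n := List.mem_toFinset.mp hp
    have hple : (tlist n).toFinset.inf' (tl_nonempty h.1) (fun p => p.2 + F n (y + p.1))
        ≤ p.2 + F n (y + p.1) := Finset.inf'_le _ hp
    have htri : F n (y + p.1) ≤ F n (z + p.1) + F n (y + z) := by
      have heq : y + p.1 = (z + p.1) + (y + z) := by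
        ext k; simp only [Finsupp.add_apply]
        exact (by decide : ∀ a b c : ZMod 2, a + b = (c + b) + (a + c)) _ _ _
      rw [heq]
      exact hP.2 _ _ (InG_add hz (h.2.1 p hp').1) (InG_add hy hz)
    linarith
  · have h1 : F n y ≤ F n z + F n (z + y) := by
      have heq : y = z + (z + y) := by
        ext k; simp only [Finsupp.add_apply]
        exact (by decide : ∀ a b : ZMod 2, a = b + (b + a)) _ _
      nth_rewrite 1 [heq]
      exact hP.2 z (z + y) hz (InG_add hz hy)
    have h2 : F n (z + y) = F n (y + z) := by rw [add_comm]
    linarith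

private lemma step_kat {n : ℕ} (hP : P n) {y z : V} (hy : InG n y) (hz : InG n z) :
    F n (y + z) ≤ step n (F n) y + step n (F n) z := by
  unfold step
  split_ifs with h
  · obtain ⟨p, hp, hpe⟩ := Finset.exists_mem_eq_inf' (tl_nonempty h.1) (fun p => p.2 + F n (y + p.1))
    obtain ⟨q, hq, hqe⟩ := Finset.exists_mem_eq_inf' (tl_nonempty h.1) (fun p => p.2 + F n (z + p.1))
    rw [hpe, hqe]
    have hp' : p ∈ tlist n := List.mem_toFinset.mp hp
    have hq' : q ∈ tlist n := List.mem_toFinset.mp hq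
    have hpq := (h.2.2 p hp' q hq').2
    have hgp := (h.2.1 p hp').1
    have hgq := (h.2.1 q hq').1
    have heq : y + z = (y + p.1) + (p.1 + q.1) + (q.1 + z) := by
      ext k; simp only [Finsupp.add_apply]
      exact (by decide : ∀ a b c d : ZMod 2, a + b = (a + c) + (c + d) + (d + b)) _ _ _ _
    have t1 : F n (y + z) ≤ F n ((y + p.1) + (p.1 + q.1)) + F n (q.1 + z) := by
      rw [heq]
      exact hP.2 _ _ (InG_add (InG_add hy hgp) (InG_add hgp hgq)) (InG_add hgq hz)
    have t2 : F n ((y + p.1) + (p.1 + q.1)) ≤ F n (y + p.1) + F n (p.1 + q.1) :=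
      hP.2 _ _ (InG_add hy hgp) (InG_add hgp hgq)
    have hqz : F n (q.1 + z) = F n (z + q.1) := by rw [add_comm]
    linarith
  · have := hP.2 y z hy hz
    linarith


private lemma zmod2_cases (a : ZMod 2) : a = 0 ∨ a = 1 := by revert a; decide

private lemma InG_shift {n : ℕ} {x : V} (hx : InG (n+1) x) (h1 : x n = 1) :
    InG n (x + Finsupp.single n 1) := by
  intro k hk
  rcases Nat.eq_or_lt_of_le hk with rfl | hlt
  · simp [Finsupp.add_apply, h1]
    decide
  · have := hx k hlt
    simp [Finsupp.add_apply, this, Finsupp.single_apply, Nat.ne_of_lt hlt]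

private lemma P_succ {n : ℕ} (hP : P n) : P (n + 1) := by
  have hIG : ∀ x : V, InG (n+1) x → x n = 0 → InG n x := by
    intro x hx h0 k hk
    rcases Nat.eq_or_lt_of_le hk with rfl | hlt
    · exact h0
    · exact hx k hlt
  constructor
  · intro x hx
    rcases zmod2_cases (x n) with h0 | h1
    · show (if x n = 0 then F n x else _) = 0 ↔ x = 0
      rw [if_pos h0]
      exact hP.1 x (hIG x hx h0)
    · have hne : x ≠ 0 := by
        intro hc; rw [hc] at h1; simp at h1
      show (if x n = 0 then F n x else _) = 0 ↔ x = 0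
      rw [if_neg (by rw [h1]; decide)]
      have := step_pos hP (InG_shift hx h1)
      constructor
      · intro hc; exact absurd hc (by linarith)
      · intro hc; exact absurd hc hne
  · intro x y hx hy
    have e := Finsupp.single n (1 : ZMod 2)
    rcases zmod2_cases (x n) with hx0 | hx1 <;> rcases zmod2_cases (y n) with hy0 | hy1
    · -- 0, 0
      have hxy : (x + y) n = 0 := by simp [Finsupp.add_apply, hx0, hy0]
      show (if (x+y) n = 0 then F n (x+y) else _) ≤
        (if x n = 0 then F n x else _) + (if y n = 0 then F n y else _)
      rw [if_pos hxy, if_pos hx0, if_pos hy0]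
      exact hP.2 x y (hIG x hx hx0) (hIG y hy hy0)
    · -- 0, 1
      have hxy : (x + y) n = 1 := by simp [Finsupp.add_apply, hx0, hy1]
      show (if (x+y) n = 0 then F n (x+y) else step n (F n) (x + y + Finsupp.single n 1)) ≤
        (if x n = 0 then F n x else _) +
        (if y n = 0 then F n y else step n (F n) (y + Finsupp.single n 1))
      rw [if_neg (by rw [hxy]; decide), if_pos hx0, if_neg (by rw [hy1]; decide)]
      have hyG : InG n (y + Finsupp.single n 1) := InG_shift hy hy1
      have hxyG : InG n (x + y + Finsupp.single n 1) := by
        have : x + y + Finsupp.single n 1 = x + (y + Finsupp.single n 1) := by abel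
        rw [this]; exact InG_add (hIG x hx hx0) hyG
      have := step_lip hP hxyG hyG
      have heq : x + y + Finsupp.single n 1 + (y + Finsupp.single n 1) = x := by
        ext k; simp only [Finsupp.add_apply]
        exact (by decide : ∀ a b c : ZMod 2, a + b + c + (b + c) = a) _ _ _
      rw [heq] at this
      linarith
    · -- 1, 0
      have hxy : (x + y) n = 1 := by simp [Finsupp.add_apply, hx1, hy0]
      show (if (x+y) n = 0 then F n (x+y) else step n (F n) (x + y + Finsupp.single n 1)) ≤
        (if x n = 0 then F n x else step n (F n) (x + Finsupp.single n 1)) +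
        (if y n = 0 then F n y else _)
      rw [if_neg (by rw [hxy]; decide), if_neg (by rw [hx1]; decide), if_pos hy0]
      have hxG : InG n (x + Finsupp.single n 1) := InG_shift hx hx1
      have hxyG : InG n (x + y + Finsupp.single n 1) := by
        have : x + y + Finsupp.single n 1 = (x + Finsupp.single n 1) + y := by abel
        rw [this]; exact InG_add hxG (hIG y hy hy0)
      have := step_lip hP hxyG hxG
      have heq : x + y + Finsupp.single n 1 + (x + Finsupp.single n 1) = y := by
        ext k; simp only [Finsupp.add_apply]
        exact (by decide : ∀ a b c : ZMod 2, a + b + c + (a + c) = b) _ _ _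
      rw [heq] at this
      linarith
    · -- 1, 1
      have hxy : (x + y) n = 0 := by
        simp [Finsupp.add_apply, hx1, hy1]; decide
      show (if (x+y) n = 0 then F n (x+y) else _) ≤
        (if x n = 0 then F n x else step n (F n) (x + Finsupp.single n 1)) +
        (if y n = 0 then F n y else step n (F n) (y + Finsupp.single n 1))
      rw [if_pos hxy, if_neg (by rw [hx1]; decide), if_neg (by rw [hy1]; decide)]
      have hxG : InG n (x + Finsupp.single n 1) := InG_shift hx hx1
      have hyG : InG n (y + Finsupp.single n 1) := InG_shift hy hy1
      have := step_kat hP hxG hyG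
      have heq : (x + Finsupp.single n 1) + (y + Finsupp.single n 1) = x + y := by
        ext k; simp only [Finsupp.add_apply]
        exact (by decide : ∀ a b c : ZMod 2, (a + c) + (b + c) = a + b) _ _ _
      rw [heq] at this
      exact this

private lemma P_all (n : ℕ) : P n := by
  induction n with
  | zero => exact P_zero
  | succ n ih => exact P_succ ih

private def deg (x : V) : ℕ := x.support.sup id + 1

private lemma InG_deg (x : V) : InG (deg x) x := by
  intro k hk
  by_contra hc
  have : k ∈ x.support := Finsupp.mem_support_iff.mpr hc
  have : k ≤ x.support.sup id := Finset.le_sup (f := id) this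
  unfold deg at hk
  omega

private def NN (x : V) : ℚ := F (deg x) x

private lemma NN_eq {n : ℕ} {x : V} (hx : InG n x) : NN x = F n x := by
  unfold NN
  have h1 : F (max n (deg x)) x = F (deg x) x := F_coh (le_max_right _ _) (InG_deg x)
  have h2 : F (max n (deg x)) x = F n x := F_coh (le_max_left _ _) hx
  rw [← h1, h2]

private lemma NN_zero_iff (x : V) : NN x = 0 ↔ x = 0 :=
  (P_all (deg x)).1 x (InG_deg x)

private lemma NN_subadd (x y : V) : NN (x + y) ≤ NN x + NN y := by
  set n := max (deg x) (deg y) with hn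
  have hx : InG n x := InG_mono (le_max_left _ _) (InG_deg x)
  have hy : InG n y := InG_mono (le_max_right _ _) (InG_deg y)
  rw [NN_eq hx, NN_eq hy, NN_eq (InG_add hx hy)]
  exact (P_all n).2 x y hx hy

private lemma NN_nonneg (x : V) : 0 ≤ NN x :=
  P_nonneg (P_all (deg x)) (InG_deg x)

theorem stmt_12 :
    ∃ d : (ℕ →₀ ZMod 2) → (ℕ →₀ ZMod 2) → ℝ,
      (∀ x y, d x y = 0 ↔ x = y) ∧
      (∀ x y, d x y = d y x) ∧
      (∀ x y z, d x z ≤ d x y + d y z) ∧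
      (∀ a x y, d (a + x) (a + y) = d x y) ∧
      (∀ x y, ∃ q : ℚ, d x y = (q : ℝ)) ∧
      (∀ (A : Finset (ℕ →₀ ZMod 2)) (g : (ℕ →₀ ZMod 2) → ℚ),
        (∀ a ∈ A, 0 ≤ g a) →
        (∀ a ∈ A, ∀ b ∈ A,
          |(g a : ℝ) - (g b : ℝ)| ≤ d a b ∧ d a b ≤ (g a : ℝ) + (g b : ℝ)) →
        ∃ z, ∀ a ∈ A, d z a = (g a : ℝ)) := by
  refine ⟨fun x y => ((NN (x + y) : ℚ) : ℝ), ?_, ?_, ?_, ?_, ?_, ?_⟩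
  · intro x y
    show ((NN (x + y) : ℚ) : ℝ) = 0 ↔ x = y
    rw [Rat.cast_eq_zero, NN_zero_iff]
    constructor
    · intro h
      have := congrArg (· + y) h
      simpa [add_assoc, V_add_self] using this
    · intro h; rw [h, V_add_self]
  · intro x y
    show ((NN (x + y) : ℚ) : ℝ) = ((NN (y + x) : ℚ) : ℝ)
    rw [add_comm x y]
  · intro x y z
    show ((NN (x + z) : ℚ) : ℝ) ≤ ((NN (x + y) : ℚ) : ℝ) + ((NN (y + z) : ℚ) : ℝ)
    rw [← Rat.cast_add, Rat.cast_le]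
    have heq : x + z = (x + y) + (y + z) := by
      ext k; simp only [Finsupp.add_apply]
      exact (by decide : ∀ a b c : ZMod 2, a + c = (a + b) + (b + c)) _ _ _
    rw [heq]
    exact NN_subadd _ _
  · intro a x y
    show ((NN ((a + x) + (a + y)) : ℚ) : ℝ) = ((NN (x + y) : ℚ) : ℝ)
    have heq : (a + x) + (a + y) = x + y := by
      ext k; simp only [Finsupp.add_apply]
      exact (by decide : ∀ a b c : ZMod 2, (c + a) + (c + b) = a + b) _ _ _
    rw [heq]
  · intro x y; exact ⟨_, rfl⟩
  · intro A g hg0 hK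
    by_cases hz : ∃ a ∈ A, g a = 0
    · obtain ⟨a, ha, hga⟩ := hz
      refine ⟨a, fun b hb => ?_⟩
      have h := hK a ha b hb
      simp only at h
      rw [hga] at h
      simp only [Rat.cast_zero, zero_sub, abs_neg, zero_add] at h
      have hb0 : (0:ℝ) ≤ (g b : ℝ) := by exact_mod_cast hg0 b hb
      rw [abs_of_nonneg hb0] at h
      linarith [h.1, h.2]
    · push_neg at hz
      rcases A.eq_empty_or_nonempty with rfl | hA
      · exact ⟨0, fun a ha => absurd ha (by simp)⟩
      -- all g a > 0
      have hgpos : ∀ a ∈ A, 0 < g a := fun a ha => (hg0 a ha).lt_of_ne (fun h => hz a ha h.symm)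
      set L : List (V × ℚ) := A.toList.map (fun a => (a, g a)) with hL
      obtain ⟨m, hm⟩ := tfun_surj L
      set D : ℕ := A.sup deg with hD
      set n : ℕ := Nat.pair m D with hn
      have htl : tlist n = L := by rw [hn, tlist_pair, hm]
      have hDn : D ≤ n := Nat.right_le_pair m D
      have hmemL : ∀ p ∈ L, p.1 ∈ A ∧ p.2 = g p.1 := by
        intro p hp
        rw [hL] at hp
        simp only [List.mem_map] at hp
        obtain ⟨a, ha, rfl⟩ := hp
        exact ⟨(Finset.mem_toList).mp ha, rfl⟩
      have hInA : ∀ a ∈ A, InG n a := by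
        intro a ha
        exact InG_mono (le_trans (Finset.le_sup (f := deg) ha) hDn) (InG_deg a)
      have hcond : Cond n (F n) := by
        refine ⟨?_, ?_, ?_⟩
        · rw [htl, hL]
          simp only [ne_eq, List.map_eq_nil_iff, Finset.toList_eq_nil]
          exact hA.ne_empty
        · rw [htl]
          intro p hp
          obtain ⟨hpA, hpg⟩ := hmemL p hp
          exact ⟨hInA _ hpA, hpg ▸ hgpos _ hpA⟩
        · rw [htl]
          intro p hp q hq
          obtain ⟨hpA, hpg⟩ := hmemL p hp
          obtain ⟨hqA, hqg⟩ := hmemL q hq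
          have h := hK p.1 hpA q.1 hqA
          simp only at h
          have hd : NN (p.1 + q.1) = F n (p.1 + q.1) := NN_eq (InG_add (hInA _ hpA) (hInA _ hqA))
          rw [← hd, hpg, hqg]
          constructor
          · have := h.1
            rw [show |(g p.1 : ℝ) - (g q.1 : ℝ)| = ((|g p.1 - g q.1| : ℚ) : ℝ) by push_cast; ring_nf] at this
            exact_mod_cast this
          · have := h.2
            rw [show ((g p.1 : ℝ)) + (g q.1 : ℝ) = ((g p.1 + g q.1 : ℚ) : ℝ) by push_cast; ring] at this
            exact_mod_cast this
      refine ⟨Finsupp.single n 1, fun a ha => ?_⟩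
      have haG : InG n a := hInA a ha
      have hsa : InG (n+1) (Finsupp.single n 1 + a) :=
        InG_add (InG_single n) (InG_mono (Nat.le_succ n) haG)
      have F0 : F n (0 : V) = 0 := ((P_all n).1 0 (InG_zero n)).mpr rfl
      have key : F (n+1) (Finsupp.single n 1 + a) = g a := by
        have hxn : ((Finsupp.single n 1 + a : V)) n = 1 := by
          have h0 : a n = 0 := haG n (le_refl n)
          simp [Finsupp.add_apply, h0]
        show (if ((Finsupp.single n 1 + a : V)) n = 0 then F n _
          else step n (F n) (Finsupp.single n 1 + a + Finsupp.single n 1)) = g a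
        rw [if_neg (by rw [hxn]; decide)]
        have heq : Finsupp.single n 1 + a + Finsupp.single n 1 = a := by
          ext k; simp only [Finsupp.add_apply]
          exact (by decide : ∀ a b : ZMod 2, a + b + a = b) _ _
        rw [heq]
        unfold step
        rw [dif_pos hcond]
        have hmem : (a, g a) ∈ (tlist n).toFinset := by
          rw [htl, List.mem_toFinset, hL, List.mem_map]
          exact ⟨a, Finset.mem_toList.mpr ha, rfl⟩
        apply le_antisymm
        · have h1 := Finset.inf'_le (fun p => p.2 + F n (a + p.1)) hmem
          simp only [V_add_self, F0, add_zero] at h1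
          exact h1
        · apply Finset.le_inf'
          intro p hp
          have hp' : p ∈ tlist n := List.mem_toFinset.mp hp
          have hKat := (hcond.2.2 (a, g a) (by rw [htl, hL, List.mem_map]; exact ⟨a, Finset.mem_toList.mpr ha, rfl⟩) p hp').1
          simp only at hKat
          have := le_abs_self (g a - p.2)
          linarith
      show ((NN (Finsupp.single n 1 + a) : ℚ) : ℝ) = ((g a : ℚ) : ℝ)
      rw [NN_eq hsa, key]

end StmtTwelve
end

section
/- Let X be a Urysohn space. Then there exists a commutative subgroup G of the group of isometric bijections of X such that g ∘ g = identity for every g ∈ G, and G acts transitively on X (for all x, y ∈ X there is g ∈ G with g(x) = y). -/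
def IsUrysohn (X : Type*) [MetricSpace X] : Prop :=
  Nonempty X ∧ CompleteSpace X ∧ TopologicalSpace.SeparableSpace X ∧
    (∀ (A : Finset X) (g : X → ℝ),
      (∀ a ∈ A, 0 ≤ g a) →
      (∀ a ∈ A, ∀ b ∈ A, |g a - g b| ≤ dist a b ∧ dist a b ≤ g a + g b) →
      ∃ z : X, ∀ a ∈ A, dist z a = g a)


open Finset in
open scoped symmDiff in
private lemma urysohn_step {X : Type*} [MetricSpace X]
    (hext : ∀ (A : Finset X) (g : X → ℝ),
      (∀ a ∈ A, 0 ≤ g a) →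
      (∀ a ∈ A, ∀ b ∈ A, |g a - g b| ≤ dist a b ∧ dist a b ≤ g a + g b) →
      ∃ z : X, ∀ a ∈ A, dist z a = g a)
    (n : ℕ) (xn : X) (f : Finset ℕ → X)
    (hf : ∀ s ⊆ range n, ∀ t ⊆ range n, dist (f s) (f t) = dist (f ∅) (f (s ∆ t))) :
    ∃ f' : Finset ℕ → X,
      (∀ s ⊆ range (n+1), ∀ t ⊆ range (n+1), dist (f' s) (f' t) = dist (f' ∅) (f' (s ∆ t))) ∧
      (∀ s ⊆ range n, f' s = f s) ∧ f' {n} = xn := by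
  classical
  set ρ : Finset ℕ → ℝ := fun w => if n ∈ w then dist xn (f (w.erase n)) else dist (f ∅) (f w)
    with hρ
  have hnot : ∀ s ⊆ range n, n ∉ s := by
    intro s hs h
    have := hs h
    simp [mem_range] at this
  have hr0 : ρ ∅ = 0 := by simp [hρ]
  have hrnn : ∀ w, 0 ≤ ρ w := by
    intro w; simp only [hρ]; split <;> exact dist_nonneg
  have hrold : ∀ s, n ∉ s → ρ s = dist (f ∅) (f s) := fun s hs => if_neg hs
  have hins : ∀ s : Finset ℕ, n ∉ s → ({n} : Finset ℕ) ∆ s = insert n s := by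
    intro s hs
    ext i
    by_cases hi : i = n <;> simp [Finset.mem_symmDiff, hi, hs]
  have hrnew : ∀ s : Finset ℕ, n ∉ s → ρ ({n} ∆ s) = dist xn (f s) := by
    intro s hs
    rw [hins s hs]
    simp [hρ, Finset.erase_insert hs]
  have hsub' : ∀ p : Finset ℕ, p ⊆ range (n+1) → n ∉ p → p ⊆ range n := by
    intro p hp hnp i hi
    have := hp hi
    simp only [mem_range] at this ⊢
    rcases Nat.lt_succ_iff_lt_or_eq.mp this with h | h
    · exact h
    · exact absurd (h ▸ hi) hnp
  have herase : ∀ p : Finset ℕ, p ⊆ range (n+1) → p.erase n ⊆ range n := by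
    intro p hp i hi
    have h1 := Finset.mem_of_mem_erase hi
    have h2 := Finset.ne_of_mem_erase hi
    have := hp h1
    simp only [mem_range] at this ⊢
    omega
  have hdecomp : ∀ p : Finset ℕ, n ∈ p → p = ({n} : Finset ℕ) ∆ (p.erase n) := by
    intro p hnp
    rw [hins _ (Finset.notMem_erase n p), Finset.insert_erase hnp]
  have hsd : ∀ p q : Finset ℕ, p ⊆ range (n+1) → q ⊆ range (n+1) → p ∆ q ⊆ range (n+1) := by
    intro p q hp hq
    exact (symmDiff_le_sup (a := p) (b := q)).trans (Finset.union_subset hp hq)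
  have hsdn : ∀ p q : Finset ℕ, p ⊆ range n → q ⊆ range n → p ∆ q ⊆ range n := by
    intro p q hp hq
    exact (symmDiff_le_sup (a := p) (b := q)).trans (Finset.union_subset hp hq)
  have hT : ∀ p ⊆ range (n+1), ∀ q ⊆ range (n+1), ρ (p ∆ q) ≤ ρ p + ρ q := by
    intro p hp q hq
    by_cases hnp : n ∈ p <;> by_cases hnq : n ∈ q
    · -- both contain n
      have hp' := herase p hp
      have hq' := herase q hq
      have hpq : p ∆ q = (p.erase n) ∆ (q.erase n) := by
        conv_lhs => rw [hdecomp p hnp, hdecomp q hnq]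
        ext i; simp [Finset.mem_symmDiff]; tauto
      rw [hpq, hrold _ (hnot _ (hsdn _ _ hp' hq')), ← hf _ hp' _ hq']
      have h1 : ρ p = dist xn (f (p.erase n)) := by
        rw [hρ]; simp [hnp]
      have h2 : ρ q = dist xn (f (q.erase n)) := by
        rw [hρ]; simp [hnq]
      rw [h1, h2]
      calc dist (f (p.erase n)) (f (q.erase n))
          ≤ dist (f (p.erase n)) xn + dist xn (f (q.erase n)) := dist_triangle _ _ _
        _ = dist xn (f (p.erase n)) + dist xn (f (q.erase n)) := by rw [dist_comm]
    · -- n ∈ p, n ∉ q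
      have hp' := herase p hp
      have hq' := hsub' q hq hnq
      have h2 : p ∆ q = ({n} : Finset ℕ) ∆ ((p.erase n) ∆ q) := by
        conv_lhs => rw [hdecomp p hnp]
        rw [symmDiff_assoc]
      rw [h2, hrnew _ (hnot _ (hsdn _ _ hp' hq'))]
      have h3 : ρ p = dist xn (f (p.erase n)) := by rw [hρ]; simp [hnp]
      have h4 : dist (f (p.erase n)) (f ((p.erase n) ∆ q)) = dist (f ∅) (f q) := by
        rw [hf _ hp' _ (hsdn _ _ hp' hq'), symmDiff_symmDiff_cancel_left]
      rw [h3, hrold _ hnq]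
      calc dist xn (f ((p.erase n) ∆ q))
          ≤ dist xn (f (p.erase n)) + dist (f (p.erase n)) (f ((p.erase n) ∆ q)) :=
            dist_triangle _ _ _
        _ = dist xn (f (p.erase n)) + dist (f ∅) (f q) := by rw [h4]
    · -- n ∉ p, n ∈ q
      have hq' := herase q hq
      have hp' := hsub' p hp hnp
      have h2 : p ∆ q = ({n} : Finset ℕ) ∆ ((q.erase n) ∆ p) := by
        conv_lhs => rw [hdecomp q hnq]
        rw [symmDiff_comm p, symmDiff_assoc]
      rw [h2, hrnew _ (hnot _ (hsdn _ _ hq' hp'))]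
      have h3 : ρ q = dist xn (f (q.erase n)) := by rw [hρ]; simp [hnq]
      have h4 : dist (f (q.erase n)) (f ((q.erase n) ∆ p)) = dist (f ∅) (f p) := by
        rw [hf _ hq' _ (hsdn _ _ hq' hp'), symmDiff_symmDiff_cancel_left]
      rw [h3, hrold _ hnp]
      calc dist xn (f ((q.erase n) ∆ p))
          ≤ dist xn (f (q.erase n)) + dist (f (q.erase n)) (f ((q.erase n) ∆ p)) :=
            dist_triangle _ _ _
        _ = dist xn (f (q.erase n)) + dist (f ∅) (f p) := by rw [h4]
        _ = dist (f ∅) (f p) + dist xn (f (q.erase n)) := by ring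
    · -- neither
      have hp' := hsub' p hp hnp
      have hq' := hsub' q hq hnq
      rw [hrold _ (hnot _ (hsdn _ _ hp' hq')), hrold _ hnp, hrold _ hnq, ← hf _ hp' _ hq']
      calc dist (f p) (f q) ≤ dist (f p) (f ∅) + dist (f ∅) (f q) := dist_triangle _ _ _
        _ = dist (f ∅) (f p) + dist (f ∅) (f q) := by rw [dist_comm (f p)]
  have hcanc : ∀ a b : Finset ℕ, (a ∆ b) ∆ a = b := by
    intro a b; rw [symmDiff_comm a b, symmDiff_symmDiff_cancel_right]
  have habs : ∀ p ⊆ range (n+1), ∀ q ⊆ range (n+1), |ρ p - ρ q| ≤ ρ (p ∆ q) := by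
    intro p hp q hq
    rw [abs_sub_le_iff]
    constructor
    · have h := hT (p ∆ q) (hsd _ _ hp hq) q hq
      rw [symmDiff_symmDiff_cancel_right] at h
      linarith
    · have h := hT (p ∆ q) (hsd _ _ hp hq) p hp
      rw [hcanc] at h
      linarith
  have inner : ∀ L : Finset (Finset ℕ), (∀ v ∈ L, v ⊆ range (n+1)) →
      ∃ h : Finset ℕ → X, (∀ s ⊆ range n, h s = f s) ∧ h {n} = xn ∧
        ∀ v ∈ insert ({n} : Finset ℕ) (L ∪ (range n).powerset),
        ∀ w ∈ insert ({n} : Finset ℕ) (L ∪ (range n).powerset),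
          dist (h v) (h w) = ρ (v ∆ w) := by
    intro L
    induction L using Finset.induction_on with
    | empty =>
      intro _
      refine ⟨Function.update f {n} xn, ?_, Function.update_self _ _ _, ?_⟩
      · intro s hs
        exact Function.update_of_ne (fun e => hnot s hs (by rw [e]; exact Finset.mem_singleton_self n)) _ _
      · intro v hv w hw
        simp only [Finset.empty_union, mem_insert, mem_powerset] at hv hw
        rcases hv with rfl | hv <;> rcases hw with rfl | hw
        · rw [Function.update_self, symmDiff_self]
          simp [dist_self, bot_eq_empty, hr0]
        · rw [Function.update_self,
            Function.update_of_ne (fun e => hnot w hw (by rw [e]; exact Finset.mem_singleton_self n)),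
            hrnew _ (hnot _ hw)]
        · rw [Function.update_self,
            Function.update_of_ne (fun e => hnot v hv (by rw [e]; exact Finset.mem_singleton_self n)),
            symmDiff_comm, hrnew _ (hnot _ hv), dist_comm]
        · rw [Function.update_of_ne (fun e => hnot v hv (by rw [e]; exact Finset.mem_singleton_self n)),
            Function.update_of_ne (fun e => hnot w hw (by rw [e]; exact Finset.mem_singleton_self n)),
            hrold _ (hnot _ (hsdn _ _ hv hw)), hf _ hv _ hw]
    | @insert u L hu ih =>
      intro hL
      obtain ⟨h, hh1, hh2, hh3⟩ := ih (fun v hv => hL v (mem_insert_of_mem hv))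
      by_cases hcase : u = {n} ∨ u ⊆ range n ∨ u ∈ L
      · refine ⟨h, hh1, hh2, ?_⟩
        have key : ∀ y : Finset ℕ,
            y ∈ insert ({n} : Finset ℕ) (insert u L ∪ (range n).powerset) →
            y ∈ insert ({n} : Finset ℕ) (L ∪ (range n).powerset) := by
          intro y hy
          simp only [mem_insert, mem_union, mem_powerset] at hy ⊢
          rcases hy with rfl | (rfl | h1) | h1
          · exact Or.inl rfl
          · tauto
          · tauto
          · tauto
        intro v hv w hw
        exact hh3 v (key v hv) w (key w hw)
      · push_neg at hcase
        obtain ⟨hne1, hne2, hne3⟩ := hcase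
        have hunotP : u ∉ insert ({n} : Finset ℕ) (L ∪ (range n).powerset) := by
          simp only [mem_insert, mem_union, mem_powerset]
          push_neg
          exact ⟨hne1, hne3, hne2⟩
        set P : Finset (Finset ℕ) := insert ({n} : Finset ℕ) (L ∪ (range n).powerset) with hP
        have hPsub : ∀ v ∈ P, v ⊆ range (n+1) := by
          intro v hv
          simp only [hP, mem_insert, mem_union, mem_powerset] at hv
          rcases hv with rfl | hv | hv
          · intro i hi
            simp only [Finset.mem_singleton] at hi
            simp [mem_range, hi]
          · exact hL v (mem_insert_of_mem hv)
          · exact hv.trans (Finset.range_subset_range.mpr (Nat.le_succ n))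
        have husub : u ⊆ range (n+1) := hL u (mem_insert_self u L)
        have hPne : P.Nonempty := ⟨{n}, mem_insert_self _ _⟩
        set g : X → ℝ := fun p => P.inf' hPne (fun v => ρ (u ∆ v) + dist p (h v)) with hg
        have hcanc2 : ∀ a b c : Finset ℕ, (a ∆ b) ∆ (b ∆ c) = a ∆ c := by
          intro a b c
          rw [symmDiff_assoc, symmDiff_symmDiff_cancel_left]
        have hgval : ∀ w ∈ P, g (h w) = ρ (u ∆ w) := by
          intro w hw
          apply le_antisymm
          · calc g (h w) ≤ ρ (u ∆ w) + dist (h w) (h w) := Finset.inf'_le _ hw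
              _ = ρ (u ∆ w) := by simp
          · apply Finset.le_inf'
            intro v hv
            have h1 : dist (h w) (h v) = ρ (w ∆ v) := hh3 w hw v hv
            have h2 := hT (u ∆ v) (hsd _ _ husub (hPsub v hv)) (v ∆ w)
              (hsd _ _ (hPsub v hv) (hPsub w hw))
            rw [hcanc2] at h2
            rw [h1, symmDiff_comm w v]
            linarith
        have hA2 : ∀ a ∈ P.image h, ∀ b ∈ P.image h,
            |g a - g b| ≤ dist a b ∧ dist a b ≤ g a + g b := by
          intro a ha b hb
          obtain ⟨v, hv, rfl⟩ := Finset.mem_image.mp ha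
          obtain ⟨w, hw, rfl⟩ := Finset.mem_image.mp hb
          rw [hgval v hv, hgval w hw, hh3 v hv w hw]
          have hvw : (u ∆ v) ∆ (u ∆ w) = v ∆ w := by
            rw [symmDiff_comm u v, hcanc2]
          constructor
          · have := habs (u ∆ v) (hsd _ _ husub (hPsub v hv)) (u ∆ w)
              (hsd _ _ husub (hPsub w hw))
            rwa [hvw] at this
          · have := hT (v ∆ u) (hsd _ _ (hPsub v hv) husub) (u ∆ w)
              (hsd _ _ husub (hPsub w hw))
            rw [hcanc2, symmDiff_comm v u] at this
            exact this
        obtain ⟨z, hz⟩ := hext (P.image h) g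
          (fun a _ => Finset.le_inf' _ _ (fun v _ => add_nonneg (hrnn _) dist_nonneg)) hA2
        have hmemP : ∀ y : Finset ℕ,
            y ∈ insert ({n} : Finset ℕ) (insert u L ∪ (range n).powerset) →
            y = u ∨ y ∈ P := by
          intro y hy
          simp only [hP, mem_insert, mem_union, mem_powerset] at hy ⊢
          tauto
        have hyne : ∀ y ∈ P, y ≠ u := fun y hy e => hunotP (e ▸ hy)
        refine ⟨Function.update h u z, ?_, ?_, ?_⟩
        · intro s hs
          rw [Function.update_of_ne
            (hyne s (mem_insert_of_mem (mem_union_right _ (mem_powerset.mpr hs)))), hh1 s hs]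
        · rw [Function.update_of_ne (hyne _ (mem_insert_self _ _)), hh2]
        · intro v hv w hw
          rcases hmemP v hv with rfl | hv' <;> rcases hmemP w hw with rfl | hw'
          · rw [Function.update_self, symmDiff_self]
            simp [dist_self, bot_eq_empty, hr0]
          · rw [Function.update_self, Function.update_of_ne (hyne w hw')]
            exact (hz (h w) (Finset.mem_image_of_mem h hw')).trans (hgval w hw')
          · rw [Function.update_self, Function.update_of_ne (hyne v hv'), dist_comm,
              symmDiff_comm]
            exact (hz (h v) (Finset.mem_image_of_mem h hv')).trans (hgval v hv')
          · rw [Function.update_of_ne (hyne v hv'), Function.update_of_ne (hyne w hw')]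
            exact hh3 v hv' w hw'
  obtain ⟨h, hh1, hh2, hh3⟩ := inner ((range (n+1)).powerset) (fun v hv => mem_powerset.mp hv)
  refine ⟨h, ?_, hh1, hh2⟩
  intro s hs t ht
  have hmem : ∀ y : Finset ℕ, y ⊆ range (n+1) →
      y ∈ insert ({n} : Finset ℕ) ((range (n+1)).powerset ∪ (range n).powerset) :=
    fun y hy => mem_insert_of_mem (mem_union_left _ (mem_powerset.mpr hy))
  rw [hh3 s (hmem s hs) t (hmem t ht), hh3 ∅ (hmem ∅ (Finset.empty_subset _)) (s ∆ t)
    (hmem _ (hsd _ _ hs ht))]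
  congr 1
  rw [← Finset.bot_eq_empty, bot_symmDiff]
open Finset in
open scoped symmDiff in
private lemma urysohn_iota {X : Type*} [MetricSpace X] [Nonempty X]
    [TopologicalSpace.SeparableSpace X]
    (hext : ∀ (A : Finset X) (g : X → ℝ),
      (∀ a ∈ A, 0 ≤ g a) →
      (∀ a ∈ A, ∀ b ∈ A, |g a - g b| ≤ dist a b ∧ dist a b ≤ g a + g b) →
      ∃ z : X, ∀ a ∈ A, dist z a = g a) :
    ∃ ι : Finset ℕ → X, DenseRange ι ∧
      ∀ s t : Finset ℕ, dist (ι s) (ι t) = dist (ι ∅) (ι (s ∆ t)) := by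
  classical
  set x : ℕ → X := TopologicalSpace.denseSeq X with hxdef
  have hx : DenseRange x := TopologicalSpace.denseRange_denseSeq X
  have step := fun (n : ℕ) (f : Finset ℕ → X)
      (hf : ∀ s ⊆ range n, ∀ t ⊆ range n, dist (f s) (f t) = dist (f ∅) (f (s ∆ t))) =>
    urysohn_step hext n (x n) f hf
  choose F hGood hAgree hXn using step
  have base : ∀ s ⊆ range 0, ∀ t ⊆ range 0,
      dist ((fun _ => x 0) s) ((fun _ => x 0) t) =
        dist ((fun _ => x 0) (∅ : Finset ℕ)) ((fun _ => x 0) (s ∆ t)) := by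
    intro s _ t _; rfl
  let SEQ : (n : ℕ) → {f : Finset ℕ → X //
      ∀ s ⊆ range n, ∀ t ⊆ range n, dist (f s) (f t) = dist (f ∅) (f (s ∆ t))} :=
    fun n => Nat.rec ⟨fun _ => x 0, base⟩ (fun m p => ⟨F m p.1 p.2, hGood m p.1 p.2⟩) n
  have hSEQsucc : ∀ n : ℕ, (SEQ (n+1)).1 = F n (SEQ n).1 (SEQ n).2 := fun n => rfl
  have hag : ∀ n, ∀ s ⊆ range n, (SEQ (n+1)).1 s = (SEQ n).1 s := by
    intro n s hs
    rw [hSEQsucc n]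
    exact hAgree n (SEQ n).1 (SEQ n).2 s hs
  -- bound
  set B : Finset ℕ → ℕ := fun s => s.sup (· + 1) with hB
  have hBle : ∀ (s : Finset ℕ) (m : ℕ), s ⊆ range m ↔ B s ≤ m := by
    intro s m
    rw [hB]
    simp only [Finset.sup_le_iff]
    constructor
    · intro h i hi
      have := h hi
      simp only [mem_range] at this
      omega
    · intro h i hi
      have := h i hi
      simp only [mem_range]
      omega
  have pers : ∀ (m : ℕ) (s : Finset ℕ), s ⊆ range m → (SEQ m).1 s = (SEQ (B s)).1 s := by
    intro m
    induction m with
    | zero =>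
      intro s hs
      have : s = ∅ := Finset.subset_empty.mp (by simpa using hs)
      subst this
      have : B (∅ : Finset ℕ) = 0 := by simp [hB]
      rw [this]
    | succ m ih =>
      intro s hs
      by_cases h : s ⊆ range m
      · rw [hag m s h, ih s h]
      · have h1 : B s = m + 1 := by
          have h2 := (hBle s (m+1)).mp hs
          have h3 : ¬ B s ≤ m := fun hc => h ((hBle s m).mpr hc)
          omega
        rw [h1]
  set ι : Finset ℕ → X := fun s => (SEQ (B s)).1 s with hι
  have hval : ∀ (m : ℕ) (s : Finset ℕ), s ⊆ range m → (SEQ m).1 s = ι s := pers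
  refine ⟨ι, ?_, ?_⟩
  · -- density
    have hsingle : ∀ n : ℕ, ι {n} = x n := by
      intro n
      have h1 : ({n} : Finset ℕ) ⊆ range (n+1) := by
        intro i hi
        simp only [Finset.mem_singleton] at hi
        simp [mem_range, hi]
      rw [← hval (n+1) {n} h1, hSEQsucc n]
      exact hXn n (SEQ n).1 (SEQ n).2
    have hsubrange : Set.range x ⊆ Set.range ι := by
      rintro _ ⟨n, rfl⟩
      exact ⟨{n}, hsingle n⟩
    exact hx.mono hsubrange
  · intro s t
    set m : ℕ := max (B s) (B t) with hm
    have hsm : s ⊆ range m := (hBle s m).mpr (le_max_left _ _)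
    have htm : t ⊆ range m := (hBle t m).mpr (le_max_right _ _)
    have hstm : s ∆ t ⊆ range m :=
      (symmDiff_le_sup (a := s) (b := t)).trans (Finset.union_subset hsm htm)
    have h0m : (∅ : Finset ℕ) ⊆ range m := Finset.empty_subset _
    rw [← hval m s hsm, ← hval m t htm, ← hval m ∅ h0m, ← hval m _ hstm]
    exact (SEQ m).2 s hsm t htm
set_option maxHeartbeats 1000000 in
open scoped symmDiff in
theorem stmt_13 (X : Type*) [MetricSpace X] (hX : IsUrysohn X) :
    ∃ G : Subgroup (X ≃ᵢ X),
      (∀ a ∈ G, ∀ b ∈ G, a * b = b * a) ∧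
      (∀ g ∈ G, g * g = 1) ∧
      (∀ x y : X, ∃ g ∈ G, g x = y) := by
  classical
  obtain ⟨hne, hcomp, hsep, hext⟩ := hX
  haveI := hne; haveI := hcomp; haveI := hsep
  obtain ⟨ι, hdense, hinv⟩ := urysohn_iota hext
  have hse : ∀ s : Finset ℕ, s ∆ (∅ : Finset ℕ) = s := fun s => by
    rw [← Finset.bot_eq_empty, symmDiff_bot]
  have hss : ∀ s : Finset ℕ, s ∆ s = (∅ : Finset ℕ) := fun s => by
    rw [symmDiff_self, Finset.bot_eq_empty]
  -- quantitative lemma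
  have dQ : ∀ a b c d : Finset ℕ,
      dist (ι (a ∆ b)) (ι (c ∆ d)) ≤ dist (ι a) (ι c) + dist (ι b) (ι d) := by
    intro a b c d
    have h1 : (a ∆ b) ∆ (c ∆ d) = (a ∆ c) ∆ (b ∆ d) := by
      ext i; simp only [Finset.mem_symmDiff]; tauto
    calc dist (ι (a ∆ b)) (ι (c ∆ d)) = dist (ι ∅) (ι ((a ∆ c) ∆ (b ∆ d))) := by
          rw [hinv, h1]
      _ = dist (ι (a ∆ c)) (ι (b ∆ d)) := (hinv _ _).symm
      _ ≤ dist (ι (a ∆ c)) (ι ∅) + dist (ι ∅) (ι (b ∆ d)) := dist_triangle _ _ _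
      _ = dist (ι a) (ι c) + dist (ι b) (ι d) := by
          rw [dist_comm (ι (a ∆ c)), ← hinv a c, ← hinv b d]
  -- approximating sequences
  have happ : ∀ (x : X) (n : ℕ), ∃ s : Finset ℕ, dist x (ι s) < 1 / (n + 1) := by
    intro x n
    exact Metric.denseRange_iff.mp hdense x _ (by positivity)
  choose u hu using happ
  have hulim : ∀ x : X, Filter.Tendsto (fun n => ι (u x n)) Filter.atTop (nhds x) := by
    intro x
    rw [tendsto_iff_dist_tendsto_zero]
    apply squeeze_zero (fun n => dist_nonneg) (fun n => (dist_comm (ι (u x n)) x ▸ (hu x n).le))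
    exact tendsto_one_div_add_atTop_nhds_zero_nat
  -- define μ
  have hμex : ∀ x y : X, ∃ z : X,
      Filter.Tendsto (fun n => ι (u x n ∆ u y n)) Filter.atTop (nhds z) := by
    intro x y
    apply cauchySeq_tendsto_of_complete
    rw [Metric.cauchySeq_iff]
    intro ε hε
    obtain ⟨N1, hN1⟩ := Metric.cauchySeq_iff.mp (hulim x).cauchySeq (ε/2) (by linarith)
    obtain ⟨N2, hN2⟩ := Metric.cauchySeq_iff.mp (hulim y).cauchySeq (ε/2) (by linarith)
    refine ⟨max N1 N2, fun m hm k hk => ?_⟩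
    calc dist (ι (u x m ∆ u y m)) (ι (u x k ∆ u y k))
        ≤ dist (ι (u x m)) (ι (u x k)) + dist (ι (u y m)) (ι (u y k)) := dQ _ _ _ _
      _ < ε/2 + ε/2 := add_lt_add
          (hN1 m (le_trans (le_max_left _ _) hm) k (le_trans (le_max_left _ _) hk))
          (hN2 m (le_trans (le_max_right _ _) hm) k (le_trans (le_max_right _ _) hk))
      _ = ε := by ring
  choose μ hμ using hμex
  -- values on the dense family
  have M2 : ∀ s t : Finset ℕ, μ (ι s) (ι t) = ι (s ∆ t) := by
    intro s t
    refine tendsto_nhds_unique (hμ (ι s) (ι t)) ?_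
    rw [tendsto_iff_dist_tendsto_zero]
    apply squeeze_zero (fun n => dist_nonneg)
      (g := fun n => dist (ι (u (ι s) n)) (ι s) + dist (ι (u (ι t) n)) (ι t))
      (fun n => dQ _ _ _ _)
    have h1 := tendsto_iff_dist_tendsto_zero.mp (hulim (ι s))
    have h2 := tendsto_iff_dist_tendsto_zero.mp (hulim (ι t))
    simpa using h1.add h2
  have M1 : ∀ x y x' y' : X, dist (μ x y) (μ x' y') ≤ dist x x' + dist y y' := by
    intro x y x' y'
    refine le_of_tendsto_of_tendsto' ((hμ x y).dist (hμ x' y'))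
      (((hulim x).dist (hulim x')).add ((hulim y).dist (hulim y'))) (fun n => dQ _ _ _ _)
  have Minvar : ∀ x y z : X, dist (μ x y) (μ x z) = dist y z := by
    intro x y z
    refine tendsto_nhds_unique ((hμ x y).dist (hμ x z)) ?_
    have hcong : ∀ n, dist (ι (u x n ∆ u y n)) (ι (u x n ∆ u z n))
        = dist (ι (u y n)) (ι (u z n)) := by
      intro n
      have h1 : (u x n ∆ u y n) ∆ (u x n ∆ u z n) = u y n ∆ u z n := by
        ext i; simp only [Finset.mem_symmDiff]; tauto
      rw [hinv, h1, ← hinv]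
    rw [show (fun n => dist (ι (u x n ∆ u y n)) (ι (u x n ∆ u z n)))
        = fun n => dist (ι (u y n)) (ι (u z n)) from funext hcong]
    exact (hulim y).dist (hulim z)
  have Mcont : Continuous (fun p : X × X => μ p.1 p.2) := by
    refine (LipschitzWith.of_dist_le_mul (K := 2) ?_).continuous
    intro p q
    calc dist (μ p.1 p.2) (μ q.1 q.2) ≤ dist p.1 q.1 + dist p.2 q.2 := M1 _ _ _ _
      _ ≤ 2 * dist p q := by
          rw [Prod.dist_eq]
          have := le_max_left (dist p.1 q.1) (dist p.2 q.2)
          have := le_max_right (dist p.1 q.1) (dist p.2 q.2)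
          nlinarith [dist_nonneg (x := p.1) (y := q.1), dist_nonneg (x := p.2) (y := q.2)]
  have hd2 : DenseRange (Prod.map ι ι) := hdense.prodMap hdense
  -- commutativity
  have Mcomm : ∀ x y : X, μ x y = μ y x := by
    have : (fun p : X × X => μ p.1 p.2) = fun p : X × X => μ p.2 p.1 := by
      refine hd2.equalizer Mcont (Mcont.comp continuous_swap) (funext fun p => ?_)
      simp only [Function.comp_apply, Prod.map_fst, Prod.map_snd]
      rw [M2, M2, symmDiff_comm]
    intro x y
    exact congrFun this (x, y)
  have Me : ∀ x : X, μ x (ι ∅) = x := by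
    have : (fun x : X => μ x (ι ∅)) = id := by
      refine hdense.equalizer (Mcont.comp (continuous_id.prodMk continuous_const))
        continuous_id (funext fun s => ?_)
      simp only [Function.comp_apply, id_eq]
      rw [M2, hse]
    intro x; exact congrFun this x
  have Mii : ∀ x : X, μ x x = ι ∅ := by
    have : (fun x : X => μ x x) = fun _ => ι ∅ := by
      refine hdense.equalizer (Mcont.comp (continuous_id.prodMk continuous_id))
        continuous_const (funext fun s => ?_)
      simp only [Function.comp_apply]
      rw [M2, hss]
    intro x; exact congrFun this x
  have Massoc : ∀ x y z : X, μ x (μ y z) = μ (μ x y) z := by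
    have hd3 : DenseRange (Prod.map (Prod.map ι ι) ι) := hd2.prodMap hdense
    have c1 : Continuous (fun q : (X × X) × X => μ q.1.1 (μ q.1.2 q.2)) := by
      exact Mcont.comp ((continuous_fst.comp continuous_fst).prodMk
        (Mcont.comp (((continuous_snd.comp continuous_fst)).prodMk continuous_snd)))
    have c2 : Continuous (fun q : (X × X) × X => μ (μ q.1.1 q.1.2) q.2) := by
      exact Mcont.comp ((Mcont.comp (((continuous_fst.comp continuous_fst)).prodMk
        (continuous_snd.comp continuous_fst))).prodMk continuous_snd)
    have : (fun q : (X × X) × X => μ q.1.1 (μ q.1.2 q.2))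
        = fun q : (X × X) × X => μ (μ q.1.1 q.1.2) q.2 := by
      refine hd3.equalizer c1 c2 (funext fun p => ?_)
      simp only [Function.comp_apply, Prod.map_fst, Prod.map_snd]
      rw [M2, M2, M2, M2, symmDiff_assoc]
    intro x y z
    exact congrFun this ((x, y), z)
  have Me' : ∀ x : X, μ (ι ∅) x = x := fun x => (Mcomm _ _).trans (Me x)
  -- translations
  set T : X → X ≃ᵢ X := fun x =>
    { toEquiv := ⟨fun y => μ x y, fun y => μ x y,
        fun y => by show μ x (μ x y) = y; rw [Massoc, Mii, Me'], fun y => by show μ x (μ x y) = y; rw [Massoc, Mii, Me']⟩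
      isometry_toFun := Isometry.of_dist_eq (fun a b => Minvar x a b) } with hT
  have hTapp : ∀ x y : X, T x y = μ x y := fun x y => rfl
  have hTmul : ∀ x y : X, T x * T y = T (μ x y) := by
    intro x y
    refine IsometryEquiv.ext (fun z => ?_)
    show μ x (μ y z) = μ (μ x y) z
    exact Massoc x y z
  have hTe : T (ι ∅) = 1 := IsometryEquiv.ext (fun z => Me' z)
  refine ⟨{ carrier := Set.range T
            mul_mem' := ?_
            one_mem' := ⟨ι ∅, hTe⟩
            inv_mem' := ?_ }, ?_, ?_, ?_⟩
  · rintro a b ⟨p, rfl⟩ ⟨q, rfl⟩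
    exact ⟨μ p q, (hTmul p q).symm⟩
  · rintro a ⟨p, rfl⟩
    have h1 : T p * T p = 1 := by rw [hTmul, Mii, hTe]
    have h2 : (T p)⁻¹ = T p := inv_eq_of_mul_eq_one_right h1
    exact h2 ▸ ⟨p, rfl⟩
  · rintro a ⟨p, rfl⟩ b ⟨q, rfl⟩
    rw [hTmul, hTmul, Mcomm]
  · rintro g ⟨p, rfl⟩
    rw [hTmul, Mii, hTe]
  · intro x y
    refine ⟨T (μ y x), ⟨μ y x, rfl⟩, ?_⟩
    show μ (μ y x) x = y
    rw [← Massoc, Mii, Me]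
end

section
/- Let X be a Urysohn space, let G be a subgroup of the group of isometric bijections of X, and let x₀ ∈ X be a point whose G-orbit D = {g(x₀) : g ∈ G} is countable and dense in X. Then there exists a relation A on D that is symmetric and irreflexive, is G-invariant (for all g ∈ G and u, v ∈ D, A(g(u), g(v)) holds iff A(u,v) holds), and satisfies the Alice's-restaurant extension property: for all disjoint finite subsets U, V ⊆ D there exists z ∈ D with z ∉ U ∪ V such that A(z,u) holds for all u ∈ U and A(z,v) fails for all v ∈ V. (Thus D carries a G-invariant structure of the countable universal random graph.) -/
theorem stmt_14 (X : Type*) [MetricSpace X] (hX : IsUrysohn X)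
    (G : Subgroup (X ≃ᵢ X)) (x₀ : X) (D : Set X)
    (hD : D = {y : X | ∃ g ∈ G, g x₀ = y})
    (hcount : D.Countable) (hdense : Dense D) :
    ∃ A : X → X → Prop,
      (∀ u ∈ D, ∀ v ∈ D, A u v → A v u) ∧
      (∀ u ∈ D, ¬ A u u) ∧
      (∀ g ∈ G, ∀ u ∈ D, ∀ v ∈ D, (A (g u) (g v) ↔ A u v)) ∧
      (∀ U V : Finset X, ↑U ⊆ D → ↑V ⊆ D → Disjoint U V →
        ∃ z ∈ D, z ∉ U ∧ z ∉ V ∧ (∀ u ∈ U, A z u) ∧ (∀ v ∈ V, ¬ A z v)) := by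
  classical
  obtain ⟨-, -, -, hext⟩ := hX
  refine ⟨fun u v => ∃ n : ℕ, (n : ℝ) < dist u v ∧ dist u v < n + 1/2, ?_, ?_, ?_, ?_⟩
  · rintro u - v - ⟨n, h1, h2⟩
    exact ⟨n, by rwa [dist_comm], by rwa [dist_comm]⟩
  · rintro u - ⟨n, h1, -⟩
    rw [dist_self] at h1
    exact (Nat.cast_nonneg n).not_gt h1
  · intro g _ u _ v _
    simp only [g.dist_eq]
  · intro U V hU hV hUV
    set W : Finset X := U ∪ V with hW
    set P : Finset (X × X) := W ×ˢ W with hP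
    set Dst : Finset ℝ :=
      insert (1/2) ((P.filter fun p => p.1 ≠ p.2).image fun p => dist p.1 p.2) with hDst
    set δ : ℝ := Dst.min' (Finset.insert_nonempty _ _) with hδ
    have hδmem : δ ∈ Dst := Finset.min'_mem _ _
    have hδpos : 0 < δ := by
      rcases Finset.mem_insert.1 hδmem with h | h
      · rw [h]; norm_num
      · obtain ⟨p, hp, hpd⟩ := Finset.mem_image.1 h
        have hne : p.1 ≠ p.2 := (Finset.mem_filter.1 hp).2
        rw [← hpd]
        exact dist_pos.2 hne
    have hδle : δ ≤ 1/2 := Finset.min'_le _ _ (Finset.mem_insert_self _ _)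
    have hδd : ∀ a ∈ W, ∀ b ∈ W, a ≠ b → δ ≤ dist a b := by
      intro a ha b hb hab
      refine Finset.min'_le _ _ (Finset.mem_insert_of_mem (Finset.mem_image.2 ⟨(a, b), ?_, rfl⟩))
      exact Finset.mem_filter.2 ⟨Finset.mem_product.2 ⟨ha, hb⟩, hab⟩
    set S : Finset ℝ := insert (0:ℝ) (P.image fun p => dist p.1 p.2) with hS
    set M : ℝ := S.max' (Finset.insert_nonempty _ _) with hMdef
    have hM : ∀ a ∈ W, ∀ b ∈ W, dist a b ≤ M := by
      intro a ha b hb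
      exact Finset.le_max' S _ (Finset.mem_insert_of_mem
        (Finset.mem_image.2 ⟨(a, b), Finset.mem_product.2 ⟨ha, hb⟩, rfl⟩))
    have hM0 : (0:ℝ) ≤ M := Finset.le_max' S _ (Finset.mem_insert_self _ _)
    obtain ⟨n, hn⟩ := exists_nat_gt M
    set ε : ℝ := δ/4 with hε
    have hεpos : 0 < ε := by positivity
    have hεle : ε ≤ 1/8 := by rw [hε]; linarith
    set gf : X → ℝ := fun a => if a ∈ U then (n : ℝ) + 1/2 - ε else (n : ℝ) + 1/2 + ε with hgf
    have hgf_lb : ∀ a, (n : ℝ) + 1/2 - ε ≤ gf a := by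
      intro a; rw [hgf]; dsimp only; split <;> linarith
    have hgf_ub : ∀ a, gf a ≤ (n : ℝ) + 1/2 + ε := by
      intro a; rw [hgf]; dsimp only; split <;> linarith
    obtain ⟨z₀, hz₀⟩ := hext W gf
      (by
        intro a _
        have := hgf_lb a
        have : (0:ℝ) ≤ (n:ℝ) := Nat.cast_nonneg n
        linarith [hgf_lb a])
      (by
        intro a ha b hb
        constructor
        · rcases eq_or_ne a b with rfl | hab
          · simp [abs_nonneg, dist_self]
          · have h1 := hgf_lb a; have h2 := hgf_ub a
            have h3 := hgf_lb b; have h4 := hgf_ub b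
            have hd := hδd a ha b hb hab
            rw [abs_le]; constructor <;> linarith
        · have := hM a ha b hb
          have h1 := hgf_lb a; have h3 := hgf_lb b
          have hn0 : (0:ℝ) ≤ (n:ℝ) := Nat.cast_nonneg n
          linarith)
    obtain ⟨z, hzD, hzd⟩ := hdense.exists_dist_lt z₀ (show (0:ℝ) < ε/2 by linarith)
    have key : ∀ a ∈ W, gf a - ε/2 < dist z a ∧ dist z a < gf a + ε/2 := by
      intro a ha
      have h1 : dist z a ≤ dist z z₀ + dist z₀ a := dist_triangle z z₀ a
      have h2 : dist z₀ a ≤ dist z₀ z + dist z a := dist_triangle z₀ z a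
      rw [dist_comm z z₀] at h1
      rw [hz₀ a ha] at h1 h2
      constructor <;> linarith
    have hzne : ∀ a ∈ W, z ≠ a := by
      intro a ha heq
      have := (key a ha).1
      have := hgf_lb a
      rw [← heq, dist_self] at *
      have hn0 : (0:ℝ) ≤ (n:ℝ) := Nat.cast_nonneg n
      linarith [(key a ha).1, hgf_lb a]
    refine ⟨z, hzD, fun h => hzne z (Finset.mem_union_left _ h) rfl,
      fun h => hzne z (Finset.mem_union_right _ h) rfl, ?_, ?_⟩
    · intro u hu
      have hw : u ∈ W := Finset.mem_union_left _ hu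
      have hgu : gf u = (n : ℝ) + 1/2 - ε := by rw [hgf]; simp [hu]
      obtain ⟨k1, k2⟩ := key u hw
      rw [hgu] at k1 k2
      exact ⟨n, by linarith, by linarith⟩
    · rintro v hv ⟨m, h1, h2⟩
      have hw : v ∈ W := Finset.mem_union_right _ hv
      have hvU : v ∉ U := fun hvU => (Finset.disjoint_left.1 hUV hvU) hv
      have hgv : gf v = (n : ℝ) + 1/2 + ε := by rw [hgf]; simp [hvU]
      obtain ⟨k1, k2⟩ := key v hw
      rw [hgv] at k1 k2
      -- dist z v ∈ (n + 1/2 + ε/2, n + 1/2 + 3ε/2) ⊆ (n + 1/2, n + 1)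
      have hub : dist z v < (n : ℝ) + 1 := by linarith
      have hlb : (n : ℝ) + 1/2 < dist z v := by linarith
      have hmn : (m : ℝ) < (n : ℝ) + 1 := lt_trans h1 hub
      have : m ≤ n := by exact_mod_cast Nat.lt_succ_iff.1 (by exact_mod_cast hmn)
      have : (m : ℝ) ≤ (n : ℝ) := by exact_mod_cast this
      linarith
end

section
/- Let X be a Urysohn space. Then there is no commutative subgroup G of the group of isometric bijections of X such that g ∘ g ∘ g = identity for every g ∈ G and some G-orbit is dense in X. (In particular, the countable abelian group of exponent 3 cannot act by isometries on the Urysohn space with a dense orbit.) -/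
set_option maxHeartbeats 1000000 in
theorem stmt_15 (X : Type*) [MetricSpace X] (hX : IsUrysohn X) :
    ¬ ∃ G : Subgroup (X ≃ᵢ X),
        (∀ a ∈ G, ∀ b ∈ G, a * b = b * a) ∧
        (∀ g ∈ G, g * g * g = 1) ∧
        (∃ x : X, Dense {y : X | ∃ g ∈ G, g x = y}) := by
  classical
  rintro ⟨G, hcomm, hcube, x, hdense⟩
  obtain ⟨-, -, -, hext⟩ := hX
  -- Step 1: a point z at distance 1 from x
  obtain ⟨z, hz⟩ := hext {x} (fun _ => 1) (fun a _ => by norm_num)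
    (by
      intro a ha b hb
      simp only [Finset.mem_singleton] at ha hb
      subst ha; subst hb
      simp)
  have hzx : dist z x = 1 := hz x (Finset.mem_singleton_self x)
  -- Step 2: approximate z by an orbit point, getting g with r = dist x (g x) > 1/2
  obtain ⟨y, hymem, hy⟩ := hdense.exists_dist_lt z (by norm_num : (0:ℝ) < 1/2)
  obtain ⟨g, hgG, rfl⟩ := hymem
  set r := dist x (g x) with hr
  have hgxr : dist (g x) x = r := by rw [dist_comm]
  have hrpos : 1/2 < r := by
    have h1 := dist_triangle z (g x) x
    rw [hzx, hgxr] at h1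
    linarith
  have hg3 : g * g * g = 1 := hcube g hgG
  -- equilateral triangle facts
  have e1 : dist x ((g*g) x) = r := by
    have h3 : g ((g*g) x) = x := by
      have h4 : (g * (g * g)) x = (1 : X ≃ᵢ X) x := by
        rw [show g * (g * g) = 1 by rw [← hg3]; group]
      exact h4
    calc dist x ((g*g) x) = dist (g x) (g ((g*g) x)) := (g.dist_eq _ _).symm
      _ = dist (g x) x := by rw [h3]
      _ = r := hgxr
  have e2 : dist (g x) ((g*g) x) = r := by
    calc dist (g x) ((g*g) x) = dist (g x) (g (g x)) := rfl
      _ = dist x (g x) := g.dist_eq x (g x)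
  have hgx_ne : g x ≠ x := by
    intro h; rw [hr, h, dist_self] at hrpos; linarith
  have hggx_ne : (g*g) x ≠ x := by
    intro h; rw [h, dist_self] at e1; linarith
  -- Step 3: Urysohn extension for the triangle: point w with distances 3/2 r, 3/5 r, 3/5 r
  set F : X → ℝ := fun y => if y = x then 3/2*r else 3/5*r with hF
  have hFx : F x = 3/2*r := if_pos rfl
  have hFg : F (g x) = 3/5*r := if_neg hgx_ne
  have hFgg : F ((g*g) x) = 3/5*r := if_neg hggx_ne
  have dxy : dist x (g x) = r := hr.symm
  have dzx : dist ((g*g) x) x = r := by rw [dist_comm]; exact e1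
  have dzy : dist ((g*g) x) (g x) = r := by rw [dist_comm]; exact e2
  obtain ⟨w, hw⟩ := hext {x, g x, (g*g) x} F
    (by
      intro a _
      by_cases h : a = x
      · rw [hF]; simp only [if_pos h]; linarith
      · rw [hF]; simp only [if_neg h]; linarith)
    (by
      intro a ha b hb
      simp only [Finset.mem_insert, Finset.mem_singleton] at ha hb
      rcases ha with rfl | rfl | rfl <;> rcases hb with rfl | rfl | rfl <;>
        refine ⟨abs_le.mpr ⟨?_, ?_⟩, ?_⟩ <;>
        simp only [hFx, hFg, hFgg, dist_self, e1, e2, dxy, hgxr, dzx, dzy] <;>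
        linarith)
  have hwx : dist w x = 3/2*r := by rw [← hFx]; exact hw x (by simp)
  have hwg : dist w (g x) = 3/5*r := by rw [← hFg]; exact hw (g x) (by simp)
  have hwgg : dist w ((g*g) x) = 3/5*r := by rw [← hFgg]; exact hw ((g*g) x) (by simp)
  -- Step 4: approximate w by an orbit point h x within r/20
  obtain ⟨y, hymem, hyw⟩ := hdense.exists_dist_lt w (by linarith : (0:ℝ) < r/20)
  obtain ⟨h, hhG, rfl⟩ := hymem
  have hh3 : h * h * h = 1 := hcube h hhG
  have hch : g * h = h * g := hcomm g hgG h hhG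
  -- Key algebraic identity: (g*h) * (g*g*h) = h*h  (commutativity and g³ = 1)
  have key : (g * h) * (g * g * h) = h * h := by
    have h5 : (g * h) * (g * g * h) = (g * g * g) * (h * h) := by
      calc (g * h) * (g * g * h) = g * ((h * g) * g) * h := by group
        _ = g * ((g * h) * g) * h := by rw [← hch]
        _ = (g * g) * (h * g) * h := by group
        _ = (g * g) * (g * h) * h := by rw [← hch]
        _ = (g * g * g) * (h * h) := by group
    rw [h5, hg3, one_mul]
  -- h*h = h⁻¹, so dist x (h x) = dist x ((h*h) x)
  have d0 : dist x (h x) = dist x ((h*h) x) := by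
    have hpt : h ((h*h) x) = x := by
      have h6 : (h * (h * h)) x = (1 : X ≃ᵢ X) x := by
        rw [show h * (h * h) = 1 by rw [← hh3]; group]
      exact h6
    calc dist x (h x) = dist (h x) x := dist_comm _ _
      _ = dist (h x) (h ((h*h) x)) := by rw [hpt]
      _ = dist x ((h*h) x) := h.dist_eq _ _
  -- dist x ((g*h) x) = dist ((g*g) x) (h x)
  have d1 : dist x ((g*h) x) = dist ((g*g) x) (h x) := by
    have hpt : (g*g) ((g*h) x) = h x := by
      have h7 : ((g*g) * (g*h)) x = h x := by
        rw [show (g*g) * (g*h) = (g*g*g) * h by group, hg3, one_mul]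
      exact h7
    rw [← hpt]
    exact ((g*g).dist_eq _ _).symm
  -- dist ((g*h) x) ((h*h) x) = dist x ((g*g*h) x)
  have d2 : dist ((g*h) x) ((h*h) x) = dist x ((g*g*h) x) := by
    have hpt : (g*h) ((g*g*h) x) = (h*h) x := by
      have h8 : ((g*h) * (g*g*h)) x = (h*h) x := by rw [key]
      exact h8
    rw [← hpt]
    exact (g*h).dist_eq _ _
  -- dist x ((g*g*h) x) = dist (g x) (h x)
  have d3 : dist x ((g*g*h) x) = dist (g x) (h x) := by
    have hpt : g ((g*g*h) x) = h x := by
      have h9 : (g * (g*g*h)) x = h x := by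
        rw [show g * (g*g*h) = (g*g*g) * h by group, hg3, one_mul]
      exact h9
    calc dist x ((g*g*h) x) = dist (g x) (g ((g*g*h) x)) := (g.dist_eq _ _).symm
      _ = dist (g x) (h x) := by rw [hpt]
  -- Combine everything
  have main : dist x (h x) ≤ dist ((g*g) x) (h x) + dist (g x) (h x) := by
    calc dist x (h x) = dist x ((h*h) x) := d0
      _ ≤ dist x ((g*h) x) + dist ((g*h) x) ((h*h) x) := dist_triangle _ _ _
      _ = dist ((g*g) x) (h x) + dist (g x) (h x) := by rw [d1, d2, d3]
  have b1 : 3/2*r - r/20 < dist x (h x) := by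
    have t := dist_triangle x (h x) w
    have h2 : dist (h x) w < r/20 := by rw [dist_comm]; exact hyw
    have h3 : dist x w = 3/2*r := by rw [dist_comm]; exact hwx
    linarith
  have b2 : dist ((g*g) x) (h x) < 3/5*r + r/20 := by
    have t := dist_triangle ((g*g) x) w (h x)
    have h3 : dist ((g*g) x) w = 3/5*r := by rw [dist_comm]; exact hwgg
    linarith
  have b3 : dist (g x) (h x) < 3/5*r + r/20 := by
    have t := dist_triangle (g x) w (h x)
    have h3 : dist (g x) w = 3/5*r := by rw [dist_comm]; exact hwg
    linarith
  linarith
end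

section
/- Let X be a rational Urysohn space. Then there exists an isometric bijection g : X → X that is unbounded, i.e. for every real number k there exists x ∈ X with dist(x, g(x)) > k. -/
namespace Stmt16Aux

open scoped Classical

variable {X : Type*} [MetricSpace X]

/-- `s` is the graph of a finite partial isometry. -/
def PIso (s : Finset (X × X)) : Prop :=
  ∀ p ∈ s, ∀ q ∈ s, dist p.1 q.1 = dist p.2 q.2

lemma PIso.swap {s : Finset (X × X)} (hs : PIso s) : PIso (s.image Prod.swap) := by
  intro p hp q hq
  simp only [Finset.mem_image] at hp hq
  obtain ⟨p', hp', rfl⟩ := hp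
  obtain ⟨q', hq', rfl⟩ := hq
  exact (hs p' hp' q' hq').symm

lemma extend_dom (hX : IsRationalUrysohn X) {s : Finset (X × X)} (hs : PIso s) (z : X) :
    ∃ w, PIso (insert (z, w) s) := by
  classical
  obtain ⟨-, -, hrat, hext⟩ := hX
  set A : Finset X := s.image Prod.snd with hA
  have hwit : ∀ b ∈ A, ∃ a, (a, b) ∈ s := by
    intro b hb
    simp only [hA, Finset.mem_image] at hb
    obtain ⟨p, hp, rfl⟩ := hb
    exact ⟨p.1, hp⟩
  set g : X → ℚ := fun b => if h : ∃ a, (a, b) ∈ s then (hrat z h.choose).choose else 0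
    with hg
  have key : ∀ a b, (a, b) ∈ s → (g b : ℝ) = dist z a := by
    intro a b hab
    have h : ∃ a', (a', b) ∈ s := ⟨a, hab⟩
    have heq : h.choose = a := by
      have h0 := hs _ h.choose_spec _ hab
      simp only [dist_self] at h0
      exact dist_eq_zero.mp h0
    simp only [hg, dif_pos h]
    rw [heq]
    exact ((hrat z a).choose_spec).symm
  have hnn : ∀ b ∈ A, 0 ≤ g b := by
    intro b hb
    obtain ⟨a, ha⟩ := hwit b hb
    have h1 : (0 : ℝ) ≤ (g b : ℝ) := by rw [key a b ha]; exact dist_nonneg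
    exact_mod_cast h1
  have hcond : ∀ a ∈ A, ∀ b ∈ A,
      |(g a : ℝ) - (g b : ℝ)| ≤ dist a b ∧ dist a b ≤ (g a : ℝ) + (g b : ℝ) := by
    intro b hb b' hb'
    obtain ⟨a, ha⟩ := hwit b hb
    obtain ⟨a', ha'⟩ := hwit b' hb'
    rw [key a b ha, key a' b' ha']
    have hd : dist b b' = dist a a' := (hs _ ha _ ha').symm
    rw [hd]
    constructor
    · rw [dist_comm z a, dist_comm z a']
      exact abs_dist_sub_le a a' z
    · calc dist a a' ≤ dist a z + dist z a' := dist_triangle a z a'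
        _ = dist z a + dist z a' := by rw [dist_comm a z]
  obtain ⟨w, hw⟩ := hext A g hnn hcond
  refine ⟨w, ?_⟩
  have hwd : ∀ a b, (a, b) ∈ s → dist w b = dist z a := by
    intro a b hab
    have hbA : b ∈ A := Finset.mem_image.2 ⟨(a, b), hab, rfl⟩
    rw [hw b hbA, key a b hab]
  intro p hp q hq
  simp only [Finset.mem_insert] at hp hq
  rcases hp with rfl | hp <;> rcases hq with rfl | hq
  · simp
  · exact (hwd q.1 q.2 (by simpa using hq)).symm
  · rw [dist_comm p.1 z, dist_comm p.2 w]
    exact (hwd p.1 p.2 (by simpa using hp)).symm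
  · exact hs p hp q hq

lemma extend_ran (hX : IsRationalUrysohn X) {s : Finset (X × X)} (hs : PIso s) (z : X) :
    ∃ w, PIso (insert (w, z) s) := by
  obtain ⟨w, hw⟩ := extend_dom hX hs.swap z
  refine ⟨w, ?_⟩
  have h1 : insert (w, z) s = (insert (z, w) (s.image Prod.swap)).image Prod.swap := by
    rw [Finset.image_insert, Finset.image_image]
    simp [Function.comp]
  rw [h1]
  exact hw.swap

lemma extend_far (hX : IsRationalUrysohn X) {s : Finset (X × X)} (hs : PIso s) (k : ℝ) :
    ∃ p : X × X, k < dist p.1 p.2 ∧ PIso (insert p s) := by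
  classical
  obtain ⟨-, -, -, hext⟩ := hX
  set D : Finset X := s.image Prod.fst ∪ s.image Prod.snd with hD
  set M : NNReal := D.sup fun u => D.sup fun v => nndist u v with hM'
  have hM : ∀ u ∈ D, ∀ v ∈ D, dist u v ≤ (M : ℝ) := by
    intro u hu v hv
    have h1 : nndist u v ≤ D.sup (fun v => nndist u v) := Finset.le_sup hv
    have h2 : D.sup (fun v => nndist u v) ≤ M :=
      Finset.le_sup (f := fun u => D.sup fun v => nndist u v) hu
    have := h1.trans h2
    exact_mod_cast this
  obtain ⟨R, hR⟩ := exists_rat_gt (max k (max 1 (M : ℝ)))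
  have hRk : k < (R : ℝ) := lt_of_le_of_lt (le_max_left _ _) hR
  have hR1 : (1 : ℝ) < (R : ℝ) := lt_of_le_of_lt ((le_max_left _ _).trans (le_max_right _ _)) hR
  have hR0 : (0 : ℝ) < (R : ℝ) := by linarith
  have hRM : (M : ℝ) < (R : ℝ) :=
    lt_of_le_of_lt ((le_max_right _ _).trans (le_max_right _ _)) hR
  have hR0' : (0 : ℚ) < R := by exact_mod_cast hR0
  -- Step A : find x at distance R from everything in D
  obtain ⟨x, hx⟩ := hext D (fun _ => R) (fun a _ => hR0'.le) (by
    intro a ha b hb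
    simp only [sub_self, abs_zero]
    exact ⟨dist_nonneg, (hM a ha b hb).trans (by linarith)⟩)
  have hxD : x ∉ D := by
    intro hxd
    have h0 := hx x hxd
    rw [dist_self] at h0
    linarith [h0 ▸ hR0]
  -- Step B : find y at distance R from image snd and 2R from x
  set B : Finset X := insert x (s.image Prod.snd) with hB
  set g' : X → ℚ := fun u => if u = x then 2 * R else R with hg'
  have hsubD : s.image Prod.snd ⊆ D := Finset.subset_union_right
  have hsubD' : s.image Prod.fst ⊆ D := Finset.subset_union_left
  have hnex : ∀ b ∈ s.image Prod.snd, b ≠ x := by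
    intro b hb hbe
    exact hxD (hbe ▸ hsubD hb)
  obtain ⟨y, hy⟩ := hext B g' (by
      intro a _
      simp only [hg']
      split_ifs <;> linarith) (by
    intro a ha b hb
    simp only [hB, Finset.mem_insert] at ha hb
    rcases ha with rfl | ha <;> rcases hb with rfl | hb
    · simp only [hg', if_pos rfl, sub_self, abs_zero, dist_self]
      refine ⟨le_refl 0, ?_⟩
      positivity
    · have hbx := hnex b hb
      have hdab : dist a b = (R : ℝ) := hx b (hsubD hb)
      simp only [hg', if_pos rfl, if_neg hbx]
      push_cast
      rw [hdab]
      constructor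
      · rw [show (2 : ℝ) * R - R = R by ring, abs_of_pos hR0]
      · linarith
    · have hax := hnex a ha
      have hdab : dist a b = (R : ℝ) := by rw [dist_comm]; exact hx a (hsubD ha)
      simp only [hg', if_pos rfl, if_neg hax]
      push_cast
      rw [hdab]
      constructor
      · rw [show (R : ℝ) - 2 * R = -R by ring, abs_neg, abs_of_pos hR0]
      · linarith
    · have hax := hnex a ha
      have hbx := hnex b hb
      simp only [hg', if_neg hax, if_neg hbx, sub_self, abs_zero]
      exact ⟨dist_nonneg, (hM a (hsubD ha) b (hsubD hb)).trans (by linarith)⟩)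
  have hyx : dist y x = 2 * (R : ℝ) := by
    have := hy x (Finset.mem_insert_self _ _)
    simp only [hg', if_pos rfl] at this
    push_cast at this
    exact this
  have hyb : ∀ b ∈ s.image Prod.snd, dist y b = (R : ℝ) := by
    intro b hb
    have := hy b (Finset.mem_insert_of_mem hb)
    simp only [hg', if_neg (hnex b hb)] at this
    exact this
  refine ⟨(x, y), ?_, ?_⟩
  · show k < dist x y
    rw [dist_comm, hyx]
    linarith
  · intro p hp q hq
    simp only [Finset.mem_insert] at hp hq
    have hxy : ∀ c d, (c, d) ∈ s → dist x c = dist y d := by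
      intro c d hcd
      have hc : c ∈ D := hsubD' (Finset.mem_image.2 ⟨(c, d), hcd, rfl⟩)
      have hd : d ∈ s.image Prod.snd := Finset.mem_image.2 ⟨(c, d), hcd, rfl⟩
      rw [hx c hc, hyb d hd]
    rcases hp with rfl | hp <;> rcases hq with rfl | hq
    · simp
    · exact hxy q.1 q.2 (by simpa using hq)
    · rw [dist_comm p.1 x, dist_comm p.2 y]
      exact hxy p.1 p.2 (by simpa using hp)
    · exact hs p hp q hq

lemma master (hX : IsRationalUrysohn X) {s : Finset (X × X)} (hs : PIso s) (z₁ z₂ : X)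
    (k : ℝ) :
    ∃ t : Finset (X × X), PIso t ∧ s ⊆ t ∧ (∃ w, (z₁, w) ∈ t) ∧ (∃ w, (w, z₂) ∈ t) ∧
      ∃ p ∈ t, k < dist p.1 p.2 := by
  obtain ⟨w₁, h1⟩ := extend_dom hX hs z₁
  obtain ⟨w₂, h2⟩ := extend_ran hX h1 z₂
  obtain ⟨p, hpd, h3⟩ := extend_far hX h2 k
  refine ⟨insert p (insert (w₂, z₂) (insert (z₁, w₁) s)), h3, ?_, ⟨w₁, ?_⟩, ⟨w₂, ?_⟩,
    p, Finset.mem_insert_self _ _, hpd⟩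
  · exact (Finset.subset_insert _ _).trans
      ((Finset.subset_insert _ _).trans (Finset.subset_insert _ _))
  · exact Finset.mem_insert_of_mem (Finset.mem_insert_of_mem (Finset.mem_insert_self _ _))
  · exact Finset.mem_insert_of_mem (Finset.mem_insert_self _ _)

noncomputable def stepF (hX : IsRationalUrysohn X) (s : Finset (X × X)) (z₁ z₂ : X)
    (k : ℝ) : Finset (X × X) :=
  if h : PIso s then (master hX h z₁ z₂ k).choose else s

lemma stepF_spec (hX : IsRationalUrysohn X) {s : Finset (X × X)} (hs : PIso s)
    (z₁ z₂ : X) (k : ℝ) :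
    PIso (stepF hX s z₁ z₂ k) ∧ s ⊆ stepF hX s z₁ z₂ k ∧
      (∃ w, (z₁, w) ∈ stepF hX s z₁ z₂ k) ∧ (∃ w, (w, z₂) ∈ stepF hX s z₁ z₂ k) ∧
      ∃ p ∈ stepF hX s z₁ z₂ k, k < dist p.1 p.2 := by
  unfold stepF
  rw [dif_pos hs]
  exact (master hX hs z₁ z₂ k).choose_spec

noncomputable def seqF (hX : IsRationalUrysohn X) (e : ℕ → X) : ℕ → Finset (X × X)
  | 0 => ∅
  | n + 1 => stepF hX (seqF hX e n) (e n) (e n) n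

lemma seqF_piso (hX : IsRationalUrysohn X) (e : ℕ → X) : ∀ n, PIso (seqF hX e n)
  | 0 => by intro p hp; simp [seqF] at hp
  | n + 1 => (stepF_spec hX (seqF_piso hX e n) (e n) (e n) n).1

lemma seqF_mono (hX : IsRationalUrysohn X) (e : ℕ → X) {m n : ℕ} (h : m ≤ n) :
    seqF hX e m ⊆ seqF hX e n := by
  induction n with
  | zero => simp_all
  | succ n ih =>
    rcases Nat.lt_or_ge m (n + 1) with h' | h'
    · exact (ih (Nat.lt_succ_iff.mp h')).trans
        (stepF_spec hX (seqF_piso hX e n) (e n) (e n) n).2.1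
    · have : m = n + 1 := le_antisymm h h'
      subst this
      exact subset_rfl

end Stmt16Aux

open Stmt16Aux in
open scoped Classical in
theorem stmt_16 (X : Type*) [MetricSpace X] (hX : IsRationalUrysohn X) :
    ∃ g : X ≃ᵢ X, ∀ k : ℝ, ∃ x : X, k < dist x (g x) := by
  classical
  haveI := hX.1
  haveI := hX.2.1
  obtain ⟨e, he⟩ := exists_surjective_nat X
  set s := seqF hX e with hsdef
  have hS : ∀ {p q : X × X} {m n : ℕ}, p ∈ s m → q ∈ s n → dist p.1 q.1 = dist p.2 q.2 := by
    intro p q m n hp hq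
    have hp' : p ∈ s (max m n) := seqF_mono hX e (le_max_left _ _) hp
    have hq' : q ∈ s (max m n) := seqF_mono hX e (le_max_right _ _) hq
    exact seqF_piso hX e (max m n) p hp' q hq'
  have htot : ∀ x : X, ∃ y, ∃ n, (x, y) ∈ s n := by
    intro x
    obtain ⟨n, rfl⟩ := he x
    obtain ⟨w, hw⟩ := (stepF_spec hX (seqF_piso hX e n) (e n) (e n) n).2.2.1
    exact ⟨w, n + 1, hw⟩
  have hran : ∀ y : X, ∃ x, ∃ n, (x, y) ∈ s n := by
    intro y
    obtain ⟨n, rfl⟩ := he y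
    obtain ⟨w, hw⟩ := (stepF_spec hX (seqF_piso hX e n) (e n) (e n) n).2.2.2.1
    exact ⟨w, n + 1, hw⟩
  set f : X → X := fun x => (htot x).choose with hf'
  have hf : ∀ x : X, ∃ n, (x, f x) ∈ s n := fun x => (htot x).choose_spec
  have hdist : ∀ x y : X, dist (f x) (f y) = dist x y := by
    intro x y
    obtain ⟨m, hm⟩ := hf x
    obtain ⟨n, hn⟩ := hf y
    exact (hS hm hn).symm
  have hinj : Function.Injective f := by
    intro x y hxy
    have : dist x y = 0 := by rw [← hdist, hxy, dist_self]
    exact dist_eq_zero.mp this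
  have hfix : ∀ {x y : X} {n : ℕ}, (x, y) ∈ s n → f x = y := by
    intro x y n hxy
    obtain ⟨m, hm⟩ := hf x
    have h0 : dist x x = dist (f x) y := hS hm hxy
    rw [dist_self] at h0
    exact dist_eq_zero.mp h0.symm
  have hsur : Function.Surjective f := by
    intro y
    obtain ⟨x, n, hxy⟩ := hran y
    exact ⟨x, hfix hxy⟩
  refine ⟨⟨Equiv.ofBijective f ⟨hinj, hsur⟩, Isometry.of_dist_eq hdist⟩, ?_⟩
  intro k
  obtain ⟨n, hn⟩ := exists_nat_gt k
  obtain ⟨p, hp, hpd⟩ := (stepF_spec hX (seqF_piso hX e n) (e n) (e n) n).2.2.2.2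
  refine ⟨p.1, ?_⟩
  have hp1 : p ∈ s (n + 1) := by rw [hsdef, seqF]; exact hp
  have hfp : f p.1 = p.2 := hfix (by simpa using hp1)
  show k < dist p.1 (f p.1)
  rw [hfp]
  exact hn.trans hpd
end

section
/- Let X be a rational Urysohn space, let A be a nonempty finite subset of X, and let g : A → ℚ satisfy g(a) ≥ 0 for all a ∈ A and |g(a) − g(b)| ≤ dist(a,b) ≤ g(a) + g(b) for all a, b ∈ A. Let S = {z ∈ X : dist(z,a) = g(a) for all a ∈ A} and let m = min_{a ∈ A} g(a). Then dist(z₁, z₂) ≤ 2m for all z₁, z₂ ∈ S, and there exist z₁, z₂ ∈ S with dist(z₁, z₂) = 2m; that is, the diameter of S equals twice the minimum value of g. -/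
theorem stmt_17 (X : Type*) [MetricSpace X] (hX : IsRationalUrysohn X)
    (A : Finset X) (hA : A.Nonempty) (g : X → ℚ)
    (hg0 : ∀ a ∈ A, 0 ≤ g a)
    (hgc : ∀ a ∈ A, ∀ b ∈ A,
      |(g a : ℝ) - (g b : ℝ)| ≤ dist a b ∧ dist a b ≤ (g a : ℝ) + (g b : ℝ)) :
    (∀ z₁ z₂ : X, (∀ a ∈ A, dist z₁ a = (g a : ℝ)) → (∀ a ∈ A, dist z₂ a = (g a : ℝ)) →
        dist z₁ z₂ ≤ 2 * (((A.image g).min' (hA.image g) : ℚ) : ℝ)) ∧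
      (∃ z₁ z₂ : X, (∀ a ∈ A, dist z₁ a = (g a : ℝ)) ∧ (∀ a ∈ A, dist z₂ a = (g a : ℝ)) ∧
        dist z₁ z₂ = 2 * (((A.image g).min' (hA.image g) : ℚ) : ℝ)) := by
  classical
  set m : ℚ := (A.image g).min' (hA.image g) with hm
  obtain ⟨a₀, ha₀A, ha₀⟩ := Finset.mem_image.mp ((A.image g).min'_mem (hA.image g))
  have hmle : ∀ a ∈ A, m ≤ g a := fun a ha =>
    Finset.min'_le _ _ (Finset.mem_image_of_mem g ha)
  have hm0 : 0 ≤ m := by rw [hm, ← ha₀]; exact hg0 a₀ ha₀A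
  constructor
  · intro z₁ z₂ h1 h2
    calc dist z₁ z₂ ≤ dist z₁ a₀ + dist a₀ z₂ := dist_triangle _ _ _
      _ = (g a₀ : ℝ) + (g a₀ : ℝ) := by rw [h1 a₀ ha₀A, dist_comm, h2 a₀ ha₀A]
      _ = 2 * (m : ℝ) := by rw [ha₀]; ring
  · obtain ⟨z₁, hz₁⟩ := hX.2.2.2 A g hg0 hgc
    set g' : X → ℚ := Function.update g z₁ (2 * m) with hg'
    have hg'z : g' z₁ = 2 * m := Function.update_self _ _ _
    have hg'A : ∀ a ∈ A, g' a = g a := by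
      intro a ha
      by_cases h : a = z₁
      · subst h
        have h0 : (g a : ℝ) = 0 := by rw [← hz₁ a ha, dist_self]
        have h0' : g a = 0 := by exact_mod_cast h0
        have hm0' : m = 0 := le_antisymm (h0' ▸ hmle a ha) hm0
        rw [hg'z, hm0', h0']; ring
      · exact Function.update_of_ne h _ _
    have hdz : ∀ a ∈ A, dist z₁ a = (g' a : ℝ) := fun a ha => by
      rw [hg'A a ha]; exact hz₁ a ha
    have key : ∃ z : X, ∀ a ∈ insert z₁ A, dist z a = ((g' a : ℝ)) := by
      apply hX.2.2.2 (insert z₁ A) g'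
      · intro a ha
        rcases Finset.mem_insert.mp ha with h | h
        · subst h; rw [hg'z]; positivity
        · rw [hg'A a h]; exact hg0 a h
      · intro a ha b hb
        have pair : ∀ c ∈ A, |(g' z₁ : ℝ) - (g' c : ℝ)| ≤ dist z₁ c ∧
            dist z₁ c ≤ (g' z₁ : ℝ) + (g' c : ℝ) := by
          intro c hc
          rw [hdz c hc, hg'z, hg'A c hc]
          have h1 : (m : ℝ) ≤ (g c : ℝ) := by exact_mod_cast hmle c hc
          have h2 : (0 : ℝ) ≤ (m : ℝ) := by exact_mod_cast hm0
          have h3 : (0 : ℝ) ≤ (g c : ℝ) := by exact_mod_cast hg0 c hc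
          push_cast
          constructor
          · rw [abs_sub_le_iff]; constructor <;> linarith
          · linarith
        rcases Finset.mem_insert.mp ha with ha' | ha' <;>
          rcases Finset.mem_insert.mp hb with hb' | hb'
        · subst ha'; subst hb'; rw [hg'z]; push_cast [dist_self]
          have h2 : (0 : ℝ) ≤ (m : ℝ) := by exact_mod_cast hm0
          constructor <;> simp <;> linarith
        · subst ha'; exact pair b hb'
        · subst hb'
          obtain ⟨p1, p2⟩ := pair a ha'
          rw [dist_comm] at p1 p2
          exact ⟨by rw [abs_sub_comm]; exact p1, by linarith⟩
        · rw [hg'A a ha', hg'A b hb']; exact hgc a ha' b hb'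
    obtain ⟨z₂, hz₂⟩ := key
    refine ⟨z₁, z₂, hz₁, fun a ha => by
      rw [hz₂ a (Finset.mem_insert_of_mem ha), hg'A a ha], ?_⟩
    have := hz₂ z₁ (Finset.mem_insert_self _ _)
    rw [dist_comm, this, hg'z]
    push_cast; ring
end

section
/- Let X be a rational Urysohn space. Then there exists a group homomorphism φ from the free group on two generators into the group of isometric bijections of X such that for every w ≠ 1 in the free group, the isometry φ(w) is unbounded: for every real number k there exists x ∈ X with dist(x, φ(w)(x)) > k. (In particular φ is injective, so two isometries of X generate a free group all of whose non-identity elements are unbounded isometries.) -/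
namespace Stmt18

attribute [local instance] Classical.decEq Classical.propDecidable

noncomputable section

variable {X : Type*} [MetricSpace X]

/-- A finite set of pairs which is a partial isometry (this also encodes
functionality and injectivity). -/
def isomSet (P : Finset (X × X)) : Prop :=
  ∀ p ∈ P, ∀ q ∈ P, dist p.1 q.1 = dist p.2 q.2

lemma isomSet_empty : isomSet (∅ : Finset (X × X)) := by simp [isomSet]

lemma isomSet_fn {P : Finset (X × X)} (hP : isomSet P) {a b c : X}
    (h1 : (a, b) ∈ P) (h2 : (a, c) ∈ P) : b = c := by
  have h := hP _ h1 _ h2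
  simp only at h
  rw [dist_self] at h
  exact (dist_eq_zero.mp h.symm)

lemma isomSet_inj {P : Finset (X × X)} (hP : isomSet P) {a b c : X}
    (h1 : (a, c) ∈ P) (h2 : (b, c) ∈ P) : a = b := by
  have h := hP _ h1 _ h2
  simp only at h
  rw [dist_self] at h
  exact dist_eq_zero.mp h

lemma isomSet_swap {P : Finset (X × X)} (hP : isomSet P) :
    isomSet (P.image Prod.swap) := by
  intro p hp q hq
  obtain ⟨p', hp', rfl⟩ := Finset.mem_image.mp hp
  obtain ⟨q', hq', rfl⟩ := Finset.mem_image.mp hq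
  simpa [Prod.swap] using (hP _ hp' _ hq').symm

lemma extend_dom (hX : IsRationalUrysohn X) {P : Finset (X × X)} (hP : isomSet P) (a : X) :
    ∃ b, isomSet (insert (a, b) P) := by
  obtain ⟨-, -, hrat, hext⟩ := hX
  by_cases hmem : ∃ b, (a, b) ∈ P
  · obtain ⟨b, hb⟩ := hmem
    exact ⟨b, by rwa [Finset.insert_eq_self.2 hb]⟩
  · choose rd hrd using hrat
    set g : X → ℚ := fun y => if h : ∃ p, p ∈ P ∧ p.2 = y then rd a h.choose.1 else 0 with hg
    have gval : ∀ p ∈ P, (g p.2 : ℝ) = dist a p.1 := by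
      intro p hp
      have h : ∃ q, q ∈ P ∧ q.2 = p.2 := ⟨p, hp, rfl⟩
      have hspec := h.choose_spec
      have h1 : h.choose.1 = p.1 := by
        have h2 := hP _ hspec.1 _ hp
        rw [hspec.2, dist_self] at h2
        exact dist_eq_zero.mp h2
      simp only [hg, dif_pos h]
      rw [h1, ← hrd]
    have key : ∃ z : X, ∀ y ∈ P.image Prod.snd, dist z y = (g y : ℝ) := by
      apply hext
      · intro y hy
        obtain ⟨p, hp, rfl⟩ := Finset.mem_image.mp hy
        have := gval p hp
        have h0 : (0:ℝ) ≤ (g p.2 : ℝ) := this ▸ dist_nonneg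
        exact_mod_cast h0
      · intro y hy y' hy'
        obtain ⟨p, hp, rfl⟩ := Finset.mem_image.mp hy
        obtain ⟨q, hq, rfl⟩ := Finset.mem_image.mp hy'
        rw [gval p hp, gval q hq, ← hP _ hp _ hq]
        constructor
        · rw [dist_comm a p.1, dist_comm a q.1]
          exact abs_dist_sub_le p.1 q.1 a
        · exact dist_triangle_left p.1 q.1 a
    obtain ⟨z, hz⟩ := key
    have hz' : ∀ p ∈ P, dist z p.2 = dist a p.1 := by
      intro p hp
      rw [hz p.2 (Finset.mem_image_of_mem _ hp), gval p hp]
    refine ⟨z, ?_⟩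
    intro p hp q hq
    rcases Finset.mem_insert.mp hp with rfl | hp <;>
      rcases Finset.mem_insert.mp hq with rfl | hq
    · simp
    · simpa using (hz' q hq).symm
    · simp only
      rw [dist_comm p.1 a, dist_comm p.2 z]
      exact (hz' p hp).symm
    · exact hP _ hp _ hq

lemma extend_ran (hX : IsRationalUrysohn X) {P : Finset (X × X)} (hP : isomSet P) (a : X) :
    ∃ b, isomSet (insert (b, a) P) := by
  obtain ⟨b, hb⟩ := extend_dom hX (isomSet_swap hP) a
  refine ⟨b, ?_⟩
  have h1 : insert (a, b) (P.image Prod.swap) = (insert (b, a) P).image Prod.swap := by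
    rw [Finset.image_insert]; rfl
  rw [h1] at hb
  have h2 := isomSet_swap hb
  rwa [Finset.image_image, show (Prod.swap ∘ Prod.swap : X × X → X × X) = id from
    funext fun p => Prod.swap_swap p, Finset.image_id] at h2

lemma fresh_chain (hX : IsRationalUrysohn X) (T : Finset X) (c N : ℚ)
    (hc : 0 < c) (hcN : c ≤ 2 * N)
    (hT : ∀ t ∈ T, ∀ t' ∈ T, dist t t' ≤ 2 * (N : ℝ)) (n : ℕ) :
    ∃ y : ℕ → X, (∀ i ≤ n, ∀ j ≤ n, i ≠ j → dist (y i) (y j) = (c : ℝ)) ∧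
      (∀ i ≤ n, ∀ t ∈ T, dist (y i) t = (N : ℝ)) := by
  have hN0 : 0 < N := by linarith
  have hcR : (0:ℝ) < (c:ℚ) := by exact_mod_cast hc
  have hcNR : ((c:ℚ):ℝ) ≤ 2 * ((N:ℚ):ℝ) := by exact_mod_cast hcN
  have hNR : (0:ℝ) < ((N:ℚ):ℝ) := by exact_mod_cast hN0
  obtain ⟨-, -, -, hext⟩ := hX
  induction n with
  | zero =>
    obtain ⟨z, hz⟩ := hext T (fun _ => N) (fun a _ => hN0.le)
      (by
        intro a ha b hb
        refine ⟨by simpa using dist_nonneg, ?_⟩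
        calc dist a b ≤ 2 * (N:ℝ) := hT a ha b hb
        _ = (N:ℝ) + N := by ring)
    refine ⟨fun _ => z, fun i hi j hj hij => absurd (by omega : i = j) hij, ?_⟩
    intro i _ t ht
    exact hz t ht
  | succ n ih =>
    obtain ⟨y, hy1, hy2⟩ := ih
    set I : Finset X := (Finset.range (n + 1)).image y with hI
    have hdisj : ∀ t ∈ T, t ∉ I := by
      intro t ht hmem
      obtain ⟨i, hi, rfl⟩ := Finset.mem_image.mp hmem
      have := hy2 i (by simpa using Nat.lt_succ_iff.mp (Finset.mem_range.mp hi)) _ ht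
      rw [dist_self] at this
      exact absurd this.symm (by exact_mod_cast hN0.ne')
    set g : X → ℚ := fun t => if t ∈ I then c else N with hg
    obtain ⟨z, hz⟩ := hext (T ∪ I) g
      (by
        intro a _
        simp only [hg]
        split <;> [exact hc.le; exact hN0.le])
      (by
        intro a ha b hb
        have key : ∀ u, u ∈ T ∪ I → (u ∈ I ∧ g u = c ∧ ∃ i ≤ n, u = y i) ∨ (u ∈ T ∧ g u = N) := by
          intro u hu
          by_cases h : u ∈ I
          · obtain ⟨i, hi, rfl⟩ := Finset.mem_image.mp h
            exact Or.inl ⟨h, by simp [hg, h], i, Nat.lt_succ_iff.mp (Finset.mem_range.mp hi), rfl⟩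
          · rcases Finset.mem_union.mp hu with h' | h'
            · exact Or.inr ⟨h', by simp [hg, h]⟩
            · exact absurd h' h
        have hdyi : ∀ i ≤ n, ∀ t ∈ T, dist (y i) t = (N:ℝ) := hy2
        rcases key a ha with ⟨-, hga, i, hi, rfl⟩ | ⟨haT, hga⟩ <;>
          rcases key b hb with ⟨-, hgb, j, hj, rfl⟩ | ⟨hbT, hgb⟩ <;>
          rw [hga, hgb]
        · by_cases hij : i = j
          · subst hij
            simp only [sub_self, abs_zero, dist_self]
            constructor
            · positivity
            · push_cast; linarith
          · rw [hy1 i hi j hj hij]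
            simp only [sub_self, abs_zero]
            constructor
            · positivity
            · push_cast; linarith
        · rw [hy2 i hi b hbT]
          constructor
          · rw [abs_le]; push_cast; constructor <;> linarith
          · push_cast; linarith
        · rw [dist_comm, hy2 j hj a haT]
          constructor
          · rw [abs_le]; push_cast; constructor <;> linarith
          · push_cast; linarith
        · simp only [sub_self, abs_zero]
          refine ⟨dist_nonneg, ?_⟩
          calc dist a b ≤ 2 * (N:ℝ) := hT a haT b hbT
          _ = (N:ℝ) + N := by ring)
    have hzy : ∀ i ≤ n, dist z (y i) = (c : ℝ) := by
      intro i hi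
      have hm : y i ∈ T ∪ I :=
        Finset.mem_union_right _ (Finset.mem_image_of_mem y (Finset.mem_range.mpr (by omega)))
      have := hz _ hm
      rwa [show g (y i) = c from by
        simp only [hg]; exact if_pos (Finset.mem_image_of_mem y (Finset.mem_range.mpr (by omega : i < n + 1)) : y i ∈ I)] at this
    have hzT : ∀ t ∈ T, dist z t = (N : ℝ) := by
      intro t ht
      have := hz t (Finset.mem_union_left _ ht)
      rwa [show g t = N from by simp [hg, hdisj t ht]] at this
    refine ⟨fun i => if i ≤ n then y i else z, ?_, ?_⟩
    · intro i hi j hj hij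
      by_cases h1 : i ≤ n <;> by_cases h2 : j ≤ n <;> simp only [h1, h2, if_true, if_false]
      · exact hy1 i h1 j h2 hij
      · rw [dist_comm]; exact hzy i h1
      · exact hzy j h2
      · omega
    · intro i hi t ht
      by_cases h1 : i ≤ n <;> simp only [h1, if_true, if_false]
      · exact hy2 i h1 t ht
      · exact hzT t ht


/-- The `i`-th letter of a word. -/
def letter (L : List (Fin 2 × Bool)) (i : ℕ) : Fin 2 × Bool := L.getD i (0, true)

def aidx (L : List (Fin 2 × Bool)) (i : ℕ) : ℕ :=
  if (letter L i).2 then L.length - 1 - i else L.length - i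

def bidx (L : List (Fin 2 × Bool)) (i : ℕ) : ℕ :=
  if (letter L i).2 then L.length - i else L.length - 1 - i

def pairAt (L : List (Fin 2 × Bool)) (y : ℕ → X) (i : ℕ) : X × X :=
  (y (aidx L i), y (bidx L i))

def newPairs (L : List (Fin 2 × Bool)) (y : ℕ → X) (v : Fin 2) : Finset (X × X) :=
  ((Finset.range L.length).filter fun i => (letter L i).1 = v).image (pairAt L y)

/-- Reduced words have no adjacent cancelling pair. -/
lemma no_cancel (w : FreeGroup (Fin 2)) {i : ℕ} (hi : i + 1 < w.toWord.length)
    (h1 : (letter w.toWord i).1 = (letter w.toWord (i + 1)).1)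
    (h2 : (letter w.toWord i).2 = !(letter w.toWord (i + 1)).2) : False := by
  set L := w.toWord with hLdef
  have hred : FreeGroup.reduce L = L := w.reduce_toWord
  have hi' : i < L.length := by omega
  have e1 : letter L i = L[i] := List.getD_eq_getElem L _ hi'
  have e2 : letter L (i + 1) = L[i + 1] := List.getD_eq_getElem L _ hi
  rw [e1, e2] at h1 h2
  have h3 : L[i + 1] = (L[i].1, !L[i].2) :=
    Prod.ext h1.symm (by show L[i+1].2 = !L[i].2; rw [h2, Bool.not_not])
  have hdec : L = L.take i ++ (L[i].1, L[i].2) :: (L[i].1, !L[i].2) :: L.drop (i + 2) := by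
    conv_lhs => rw [← List.take_append_drop i L]
    congr 1
    rw [List.drop_eq_getElem_cons hi']
    congr 1
    rw [List.drop_eq_getElem_cons hi, h3]
  exact FreeGroup.reduce.not (hred.trans hdec)

lemma idx_ne (L : List (Fin 2 × Bool)) (w : FreeGroup (Fin 2)) (hL : L = w.toWord)
    {i j : ℕ} (hi : i < L.length) (hj : j < L.length) (hij : i ≠ j)
    (hv : (letter L i).1 = (letter L j).1) :
    aidx L i ≠ aidx L j ∧ bidx L i ≠ bidx L j := by
  subst hL
  unfold aidx bidx
  cases hbi : (letter w.toWord i).2 <;> cases hbj : (letter w.toWord j).2 <;>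
    simp only [if_true, if_false, Bool.false_eq_true, ite_true, ite_false]
  · constructor <;> (intro heq; omega)
  · constructor
    · intro heq
      have hji : i = j + 1 := by omega
      subst hji
      exact no_cancel w hi hv.symm (by simp [hbi, hbj])
    · intro heq
      have hji : j = i + 1 := by omega
      subst hji
      exact no_cancel w hj hv (by simp [hbi, hbj])
  · constructor
    · intro heq
      have hji : j = i + 1 := by omega
      subst hji
      exact no_cancel w hj hv (by simp [hbi, hbj])
    · intro heq
      have hji : i = j + 1 := by omega
      subst hji
      exact no_cancel w hi hv.symm (by simp [hbi, hbj])
  · constructor <;> (intro heq; omega)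


lemma isomSet_union (L : List (Fin 2 × Bool)) (w : FreeGroup (Fin 2)) (hL : L = w.toWord)
    (y : ℕ → X) (c N : ℝ) (hc : 0 < c)
    (T : Finset X) (P : Finset (X × X)) (hP : isomSet P)
    (hPT : ∀ p ∈ P, p.1 ∈ T ∧ p.2 ∈ T)
    (hy1 : ∀ i ≤ L.length, ∀ j ≤ L.length, i ≠ j → dist (y i) (y j) = c)
    (hy2 : ∀ i ≤ L.length, ∀ t ∈ T, dist (y i) t = N)
    (v : Fin 2) : isomSet (P ∪ newPairs L y v) := by
  have ha_le : ∀ i, aidx L i ≤ L.length := by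
    intro i; unfold aidx; split <;> omega
  have hb_le : ∀ i, bidx L i ≤ L.length := by
    intro i; unfold bidx; split <;> omega
  have hnew : ∀ p ∈ newPairs L y v, ∃ i < L.length,
      (letter L i).1 = v ∧ p = (y (aidx L i), y (bidx L i)) := by
    intro p hp
    obtain ⟨i, hi, rfl⟩ := Finset.mem_image.mp hp
    obtain ⟨hir, hiv⟩ := Finset.mem_filter.mp hi
    exact ⟨i, Finset.mem_range.mp hir, hiv, rfl⟩
  have mixed : ∀ p ∈ P, ∀ q ∈ newPairs L y v, dist p.1 q.1 = dist p.2 q.2 := by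
    intro p hp q hq
    obtain ⟨i, hi, -, rfl⟩ := hnew q hq
    obtain ⟨h1, h2⟩ := hPT p hp
    rw [dist_comm p.1, dist_comm p.2, hy2 _ (ha_le i) _ h1, hy2 _ (hb_le i) _ h2]
  intro p hp q hq
  rcases Finset.mem_union.mp hp with hp' | hp' <;> rcases Finset.mem_union.mp hq with hq' | hq'
  · exact hP _ hp' _ hq'
  · exact mixed _ hp' _ hq'
  · rw [dist_comm p.1, dist_comm p.2]
    exact mixed _ hq' _ hp'
  · obtain ⟨i, hi, hiv, rfl⟩ := hnew p hp'
    obtain ⟨j, hj, hjv, rfl⟩ := hnew q hq'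
    by_cases hij : i = j
    · subst hij; simp
    · obtain ⟨hane, hbne⟩ := idx_ne L w hL hi hj hij (hiv.trans hjv.symm)
      simp only
      rw [hy1 _ (ha_le i) _ (ha_le j) hane, hy1 _ (hb_le i) _ (hb_le j) hbne]


lemma step_word (hX : IsRationalUrysohn X) (P Q : Finset (X × X))
    (hP : isomSet P) (hQ : isomSet Q) (w : FreeGroup (Fin 2)) (hw : w ≠ 1) (K : ℕ) :
    ∃ P' Q', P ⊆ P' ∧ Q ⊆ Q' ∧ isomSet P' ∧ isomSet Q' ∧
      ∃ y : ℕ → X,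
        (∀ i < w.toWord.length,
          pairAt w.toWord y i ∈ (if (letter w.toWord i).1 = 0 then P' else Q')) ∧
        ((K : ℝ) < dist (y 0) (y w.toWord.length)) := by
  set L := w.toWord with hLdef
  have hm : L.length ≠ 0 := by
    intro h
    exact hw (FreeGroup.toWord_eq_nil_iff.mp (List.length_eq_zero_iff.mp h))
  set T : Finset X := (P ∪ Q).image Prod.fst ∪ (P ∪ Q).image Prod.snd with hT
  have hPT : ∀ p ∈ P, p.1 ∈ T ∧ p.2 ∈ T := by
    intro p hp
    constructor
    · exact Finset.mem_union_left _ (Finset.mem_image_of_mem _ (Finset.mem_union_left _ hp))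
    · exact Finset.mem_union_right _ (Finset.mem_image_of_mem _ (Finset.mem_union_left _ hp))
  have hQT : ∀ p ∈ Q, p.1 ∈ T ∧ p.2 ∈ T := by
    intro p hp
    constructor
    · exact Finset.mem_union_left _ (Finset.mem_image_of_mem _ (Finset.mem_union_right _ hp))
    · exact Finset.mem_union_right _ (Finset.mem_image_of_mem _ (Finset.mem_union_right _ hp))
  obtain ⟨D, hD⟩ := Metric.isBounded_iff.mp T.finite_toSet.isBounded
  set c : ℚ := K + 1 with hc'
  have hc : 0 < c := by positivity
  obtain ⟨N, hND⟩ := exists_rat_gt (max D c)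
  have hNc : (c : ℝ) < N := lt_of_le_of_lt (le_max_right D c) hND
  have hNcQ : c < N := by exact_mod_cast hNc
  have hN0 : 0 < N := hc.trans hNcQ
  have hc2N : c ≤ 2 * N := by linarith
  have hT2N : ∀ t ∈ T, ∀ t' ∈ T, dist t t' ≤ 2 * (N : ℝ) := by
    intro t ht t' ht'
    have h1 : dist t t' ≤ D := hD ht ht'
    have h2 : D < (N : ℝ) := lt_of_le_of_lt (le_max_left D c) hND
    have h3 : (0:ℝ) < N := by exact_mod_cast hN0
    linarith
  obtain ⟨y, hy1, hy2⟩ := fresh_chain hX T c N hc hc2N hT2N L.length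
  refine ⟨P ∪ newPairs L y 0, Q ∪ newPairs L y 1, Finset.subset_union_left,
    Finset.subset_union_left,
    isomSet_union L w hLdef y c N (by exact_mod_cast hc) T P hP hPT hy1 hy2 0,
    isomSet_union L w hLdef y c N (by exact_mod_cast hc) T Q hQ hQT hy1 hy2 1,
    y, ?_, ?_⟩
  · intro i hi
    by_cases h0 : (letter L i).1 = 0
    · rw [if_pos h0]
      refine Finset.mem_union_right _ (Finset.mem_image_of_mem _ ?_)
      exact Finset.mem_filter.mpr ⟨Finset.mem_range.mpr hi, h0⟩
    · rw [if_neg h0]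
      refine Finset.mem_union_right _ (Finset.mem_image_of_mem _ ?_)
      exact Finset.mem_filter.mpr ⟨Finset.mem_range.mpr hi,
        Fin.eq_one_of_ne_zero _ h0⟩
  · rw [hy1 0 (Nat.zero_le _) L.length le_rfl (by omega)]
    have : ((K : ℚ) : ℝ) < (c : ℝ) := by exact_mod_cast (by linarith : (K:ℚ) < c)
    exact_mod_cast this


/-- Tasks: bookkeeping tasks (which map, dom or ran, index of point) and word tasks. -/
abbrev Task : Type _ := (Bool × Bool × ℕ) ⊕ (FreeGroup (Fin 2) × ℕ)

def TaskDone (e : ℕ → X) : Task → Finset (X × X) → Finset (X × X) → Prop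
  | Sum.inl (b1, b2, n) => fun P Q =>
      if b2 then (∃ y, (y, e n) ∈ (if b1 then Q else P))
      else (∃ y, (e n, y) ∈ (if b1 then Q else P))
  | Sum.inr (w, K) => fun P Q => w = 1 ∨ ∃ y : ℕ → X,
      (∀ i < w.toWord.length,
        pairAt w.toWord y i ∈ (if (letter w.toWord i).1 = 0 then P else Q)) ∧
      ((K : ℝ) < dist (y 0) (y w.toWord.length))

lemma main_step (hX : IsRationalUrysohn X) (e : ℕ → X) (P Q : Finset (X × X)) (t : Task) :
    ∃ P' Q', P ⊆ P' ∧ Q ⊆ Q' ∧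
      (isomSet P → isomSet Q → (isomSet P' ∧ isomSet Q' ∧ TaskDone e t P' Q')) := by
  by_cases hPQ : isomSet P ∧ isomSet Q
  swap
  · exact ⟨P, Q, subset_rfl, subset_rfl, fun h1 h2 => absurd ⟨h1, h2⟩ hPQ⟩
  obtain ⟨hP, hQ⟩ := hPQ
  obtain (⟨b1, b2, n⟩ | ⟨w, K⟩) := t
  · cases b1 <;> cases b2
    · obtain ⟨b, hb⟩ := extend_dom hX hP (e n)
      exact ⟨insert (e n, b) P, Q, Finset.subset_insert _ _, subset_rfl,
        fun _ _ => ⟨hb, hQ, by simp [TaskDone]⟩⟩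
    · obtain ⟨b, hb⟩ := extend_ran hX hP (e n)
      exact ⟨insert (b, e n) P, Q, Finset.subset_insert _ _, subset_rfl,
        fun _ _ => ⟨hb, hQ, by simp [TaskDone]⟩⟩
    · obtain ⟨b, hb⟩ := extend_dom hX hQ (e n)
      exact ⟨P, insert (e n, b) Q, subset_rfl, Finset.subset_insert _ _,
        fun _ _ => ⟨hP, hb, by simp [TaskDone]⟩⟩
    · obtain ⟨b, hb⟩ := extend_ran hX hQ (e n)
      exact ⟨P, insert (b, e n) Q, subset_rfl, Finset.subset_insert _ _,
        fun _ _ => ⟨hP, hb, by simp [TaskDone]⟩⟩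
  · by_cases hw : w = 1
    · exact ⟨P, Q, subset_rfl, subset_rfl, fun _ _ => ⟨hP, hQ, Or.inl hw⟩⟩
    · obtain ⟨P', Q', h1, h2, h3, h4, h5⟩ := step_word hX P Q hP hQ w hw K
      exact ⟨P', Q', h1, h2, fun _ _ => ⟨h3, h4, Or.inr h5⟩⟩

lemma build_iso (G : ℕ → Finset (X × X)) (hmono : ∀ m n, m ≤ n → G m ⊆ G n)
    (hisom : ∀ n, isomSet (G n))
    (htot : ∀ x : X, ∃ b n, (x, b) ∈ G n) (hsur : ∀ x : X, ∃ a n, (a, x) ∈ G n) :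
    ∃ f : X ≃ᵢ X, ∀ a b : X, ∀ n, (a, b) ∈ G n → f a = b := by
  set mem : X × X → Prop := fun p => ∃ n, p ∈ G n with hmem
  have isall : ∀ a b a' b' : X, mem (a, b) → mem (a', b') → dist a a' = dist b b' := by
    rintro a b a' b' ⟨n, hn⟩ ⟨n', hn'⟩
    exact hisom (max n n') _ (hmono n _ (le_max_left n n') hn) _
      (hmono n' _ (le_max_right n n') hn')
  have hfn : ∀ a b c : X, mem (a, b) → mem (a, c) → b = c := by
    intro a b c h1 h2
    have := isall a b a c h1 h2
    rw [dist_self] at this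
    exact (dist_eq_zero.mp this.symm)
  have hinj : ∀ a b c : X, mem (a, c) → mem (b, c) → a = b := by
    intro a b c h1 h2
    have := isall a c b c h1 h2
    rw [dist_self] at this
    exact dist_eq_zero.mp this
  have htot' : ∀ x : X, ∃ b, mem (x, b) := by
    intro x; obtain ⟨b, n, h⟩ := htot x; exact ⟨b, n, h⟩
  have hsur' : ∀ x : X, ∃ a, mem (a, x) := by
    intro x; obtain ⟨a, n, h⟩ := hsur x; exact ⟨a, n, h⟩
  set f : X → X := fun x => (htot' x).choose with hf
  have hfspec : ∀ x, mem (x, f x) := fun x => (htot' x).choose_spec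
  set f' : X → X := fun x => (hsur' x).choose with hf'
  have hf'spec : ∀ x, mem (f' x, x) := fun x => (hsur' x).choose_spec
  have hleft : ∀ x, f' (f x) = x := fun x => hinj _ _ _ (hf'spec (f x)) (hfspec x)
  have hright : ∀ x, f (f' x) = x := fun x => hfn _ _ _ (hfspec (f' x)) (hf'spec x)
  refine ⟨⟨⟨f, f', hleft, hright⟩, Isometry.of_dist_eq fun x y =>
    (isall x (f x) y (f y) (hfspec x) (hfspec y)).symm⟩, ?_⟩
  intro a b n h
  exact hfn a (f a) b (hfspec a) ⟨n, h⟩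

lemma word_eval (F G : X ≃ᵢ X) (L : List (Fin 2 × Bool)) (y : ℕ → X)
    (h : ∀ i < L.length,
      (cond (letter L i).2 (if (letter L i).1 = 0 then F else G)
        (if (letter L i).1 = 0 then F else G)⁻¹) (y (L.length - 1 - i)) = y (L.length - i)) :
    (L.map fun x => cond x.2 (if x.1 = 0 then F else G) (if x.1 = 0 then F else G)⁻¹).prod (y 0)
      = y L.length := by
  induction L with
  | nil => simp
  | cons l L ih =>
    rw [List.map_cons, List.prod_cons, IsometryEquiv.mul_apply]
    rw [ih ?_]
    · have h0 := h 0 (by simp)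
      have e1 : letter (l :: L) 0 = l := rfl
      have e2 : (l :: L).length - 1 - 0 = L.length := by simp
      have e3 : (l :: L).length - 0 = L.length + 1 := by simp
      rw [e1, e2, e3] at h0
      exact h0
    · intro i hi
      have h1 := h (i + 1) (by simpa using Nat.succ_lt_succ hi)
      have e1 : letter (l :: L) (i + 1) = letter L i := rfl
      have e2 : (l :: L).length - 1 - (i + 1) = L.length - 1 - i := by
        simp only [List.length_cons]; omega
      have e3 : (l :: L).length - (i + 1) = L.length - i := by
        simp only [List.length_cons]; omega
      rw [e1, e2, e3] at h1
      exact h1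


end
end Stmt18

theorem stmt_18 (X : Type*) [MetricSpace X] (hX : IsRationalUrysohn X) :
    ∃ φ : FreeGroup (Fin 2) →* (X ≃ᵢ X),
      ∀ w : FreeGroup (Fin 2), w ≠ 1 → ∀ k : ℝ, ∃ x : X, k < dist x (φ w x) := by
  classical
  obtain ⟨hne, hcnt, -, -⟩ := id hX
  haveI : Countable (FreeGroup (Fin 2)) := FreeGroup.toWord_injective.countable
  obtain ⟨e, he⟩ := exists_surjective_nat X
  obtain ⟨τ, hτ⟩ := exists_surjective_nat Stmt18.Task
  choose P' Q' hsub1 hsub2 hstep using Stmt18.main_step hX e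
  obtain ⟨F, hF0, hFs⟩ : ∃ F : ℕ → Finset (X × X) × Finset (X × X),
      F 0 = (∅, ∅) ∧ ∀ n, F (n + 1) = (P' (F n).1 (F n).2 (τ n), Q' (F n).1 (F n).2 (τ n)) :=
    ⟨fun n => Nat.rec (∅, ∅) (fun n s => (P' s.1 s.2 (τ n), Q' s.1 s.2 (τ n))) n,
      rfl, fun _ => rfl⟩
  have hInv : ∀ n, Stmt18.isomSet (F n).1 ∧ Stmt18.isomSet (F n).2 := by
    intro n
    induction n with
    | zero => rw [hF0]; exact ⟨Stmt18.isomSet_empty, Stmt18.isomSet_empty⟩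
    | succ n ih =>
      rw [hFs n]
      have h := hstep (F n).1 (F n).2 (τ n) ih.1 ih.2
      exact ⟨h.1, h.2.1⟩
  have hDone : ∀ n, Stmt18.TaskDone e (τ n) (F (n + 1)).1 (F (n + 1)).2 := by
    intro n
    rw [hFs n]
    exact (hstep (F n).1 (F n).2 (τ n) (hInv n).1 (hInv n).2).2.2
  have hmono1 : ∀ m n, m ≤ n → (F m).1 ⊆ (F n).1 := by
    intro m n h
    induction n, h using Nat.le_induction with
    | base => exact subset_rfl
    | succ n _ ih => rw [hFs n]; exact ih.trans (hsub1 _ _ _)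
  have hmono2 : ∀ m n, m ≤ n → (F m).2 ⊆ (F n).2 := by
    intro m n h
    induction n, h using Nat.le_induction with
    | base => exact subset_rfl
    | succ n _ ih => rw [hFs n]; exact ih.trans (hsub2 _ _ _)
  have htotP : ∀ x : X, ∃ b n, (x, b) ∈ (F n).1 := by
    intro x
    obtain ⟨j, rfl⟩ := he x
    obtain ⟨n, hn⟩ := hτ (Sum.inl (false, false, j))
    have hd := hDone n
    rw [hn] at hd
    simp only [Stmt18.TaskDone, Bool.false_eq_true, if_false] at hd
    obtain ⟨y, hy⟩ := hd
    exact ⟨y, n + 1, hy⟩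
  have hsurP : ∀ x : X, ∃ a n, (a, x) ∈ (F n).1 := by
    intro x
    obtain ⟨j, rfl⟩ := he x
    obtain ⟨n, hn⟩ := hτ (Sum.inl (false, true, j))
    have hd := hDone n
    rw [hn] at hd
    simp only [Stmt18.TaskDone, Bool.false_eq_true, if_false, if_true] at hd
    obtain ⟨y, hy⟩ := hd
    exact ⟨y, n + 1, hy⟩
  have htotQ : ∀ x : X, ∃ b n, (x, b) ∈ (F n).2 := by
    intro x
    obtain ⟨j, rfl⟩ := he x
    obtain ⟨n, hn⟩ := hτ (Sum.inl (true, false, j))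
    have hd := hDone n
    rw [hn] at hd
    simp only [Stmt18.TaskDone, Bool.false_eq_true, if_false, if_true] at hd
    obtain ⟨y, hy⟩ := hd
    exact ⟨y, n + 1, hy⟩
  have hsurQ : ∀ x : X, ∃ a n, (a, x) ∈ (F n).2 := by
    intro x
    obtain ⟨j, rfl⟩ := he x
    obtain ⟨n, hn⟩ := hτ (Sum.inl (true, true, j))
    have hd := hDone n
    rw [hn] at hd
    simp only [Stmt18.TaskDone, if_true] at hd
    obtain ⟨y, hy⟩ := hd
    exact ⟨y, n + 1, hy⟩
  obtain ⟨fI, hfI⟩ := Stmt18.build_iso (fun n => (F n).1) hmono1 (fun n => (hInv n).1)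
    htotP hsurP
  obtain ⟨gI, hgI⟩ := Stmt18.build_iso (fun n => (F n).2) hmono2 (fun n => (hInv n).2)
    htotQ hsurQ
  refine ⟨FreeGroup.lift (fun i : Fin 2 => if i = 0 then fI else gI), ?_⟩
  intro w hw k
  obtain ⟨K, hK⟩ := exists_nat_ge k
  obtain ⟨n, hn⟩ := hτ (Sum.inr (w, K))
  have hd := hDone n
  rw [hn] at hd
  simp only [Stmt18.TaskDone] at hd
  rcases hd with h1 | ⟨y, hy, hdist⟩
  · exact absurd h1 hw
  refine ⟨y 0, ?_⟩
  have heval : (FreeGroup.lift (fun i : Fin 2 => if i = 0 then fI else gI)) w (y 0)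
      = y w.toWord.length := by
    have hmk : (FreeGroup.lift (fun i : Fin 2 => if i = 0 then fI else gI)) w
        = (w.toWord.map fun x =>
            cond x.2 (if x.1 = 0 then fI else gI) (if x.1 = 0 then fI else gI)⁻¹).prod := by
      conv_lhs => rw [← FreeGroup.mk_toWord (x := w)]
      exact FreeGroup.lift_mk
    rw [hmk]
    apply Stmt18.word_eval fI gI w.toWord y
    intro i hi
    have hp := hy i hi
    by_cases h0 : (Stmt18.letter w.toWord i).1 = 0 <;>
      cases hb : (Stmt18.letter w.toWord i).2
    · rw [if_pos h0] at hp
      simp only [Stmt18.pairAt, Stmt18.aidx, Stmt18.bidx, hb, Bool.false_eq_true,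
        if_false] at hp
      have happ := hfI _ _ _ hp
      simp only [h0, hb, if_pos, cond_false]
      rw [← happ, IsometryEquiv.inv_apply_self]
    · rw [if_pos h0] at hp
      simp only [Stmt18.pairAt, Stmt18.aidx, Stmt18.bidx, hb, if_true] at hp
      have happ := hfI _ _ _ hp
      simp only [h0, hb, if_pos, cond_true]
      exact happ
    · rw [if_neg h0] at hp
      simp only [Stmt18.pairAt, Stmt18.aidx, Stmt18.bidx, hb, Bool.false_eq_true,
        if_false] at hp
      have happ := hgI _ _ _ hp
      simp only [h0, hb, if_neg, cond_false, if_false]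
      rw [← happ, IsometryEquiv.inv_apply_self]
    · rw [if_neg h0] at hp
      simp only [Stmt18.pairAt, Stmt18.aidx, Stmt18.bidx, hb, if_true] at hp
      have happ := hgI _ _ _ hp
      simp only [h0, hb, if_neg, cond_true, if_false]
      exact happ
  rw [heval]
  exact lt_of_le_of_lt hK hdist
end
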